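/- arXiv:1403.7939 — 6 statements merged into one kernel-verified Lean document; each statement's English description precedes it below -/
import Mathlib

section
/- Let L be a finite set of lines in the real projective plane with |L| ≥ 3 such that the lines of L do not all pass through one common point, and let P be a finite set of points of the real projective plane each of which is incident to at least 2 lines of L. Then Σ_{p∈P} d(p)·(d(p)+1) ≤ |L|·(|L|−1) + 6·(|P|−1), where d(p) denotes the degree of p with respect to L. -/
/- Model of the real projective plane: a point is a 1-dimensional linear subspace
of ℝ³ and a line is a 2-dimensional linear subspace of ℝ³; a point p is incident
to a line ℓ when p ≤ ℓ. -/

open scoped Classical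

/-- The degree of a point `p` with respect to a finite set `L` of lines:
the number of lines of `L` incident to `p`. -/
noncomputable def pointDeg (L : Finset (Submodule ℝ (Fin 3 → ℝ)))
    (p : Submodule ℝ (Fin 3 → ℝ)) : ℕ :=
  (L.filter fun l => p ≤ l).card

/-- The degree of a line `l` with respect to a finite set `P` of points:
the number of points of `P` incident to `l`. -/
noncomputable def lineDeg (P : Finset (Submodule ℝ (Fin 3 → ℝ)))
    (l : Submodule ℝ (Fin 3 → ℝ)) : ℕ :=
  (P.filter fun p => p ≤ l).card

/-- The number of incidences of `(P, L)`: the number of pairs `(p, ℓ) ∈ P × L`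
with `p` incident to `ℓ`. -/
noncomputable def incCount (P L : Finset (Submodule ℝ (Fin 3 → ℝ))) : ℕ :=
  ((P ×ˢ L).filter fun pl => pl.1 ≤ pl.2).card

/-- A point of the real projective plane: a 1-dimensional linear subspace of ℝ³. -/
def IsProjPoint (p : Submodule ℝ (Fin 3 → ℝ)) : Prop := Module.finrank ℝ p = 1

/-- A line of the real projective plane: a 2-dimensional linear subspace of ℝ³. -/
def IsProjLine (l : Submodule ℝ (Fin 3 → ℝ)) : Prop := Module.finrank ℝ l = 2

/-! Every point of `P` lies on two lines of `L`, so `P` is contained in the set `V` of vertices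
of the arrangement. Counting ordered pairs of distinct lines by their intersection point gives
`∑_{v ∈ V} d(v) (d(v) - 1) = |L| (|L| - 1)`, and Melchior's inequality `∑_{v ∈ V} d(v) ≤ 3|V| - 3`
then bounds `∑_{v ∈ V} d(v) (d(v) + 1)` by `|L| (|L| - 1) + 6 (|V| - 1)`. Each vertex outside `P`
has degree at least `2`, so dropping it lowers the sum by at least `6`.

Melchior's inequality is proved by a sweep. In generic affine coordinates the lines are graphs of
affine functions with distinct slopes, and recording their vertical order before and after each
vertex gives a wiring diagram: the vertex `v` moves a contiguous block of `d(v)` wires, every two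
wires are moved together exactly once, and the final order is the reverse of the initial one. A
vertex has `d(v) - 1` gaps inside its block. Following such a gap to the next vertex touching it,
continuing past the end through the reversed order, one reaches a vertex bordering that gap from
outside, since the two wires at the gap cannot meet again; this assignment is injective. Every
vertex borders at most two gaps from outside, and at least three vertices touch the top or the
bottom wire, so `∑_{v ∈ V} (d(v) - 1) ≤ 2|V| - 3`. -/

open Finset

/-- `n` wires rearranged by `V` moves: `pos s i ∈ [1, n]` is the position of wire `i` after move `s`
(stage `0` is the initial order), and move `r` (`1 ≤ r ≤ V`) permutes the wires `block r`, which
occupy the positions `lo r, …, hi r`, leaving the other wires in place. -/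
structure WiringDiagram (ι : Type*) [Fintype ι] where
  n : ℕ
  V : ℕ
  pos : ℕ → ι → ℕ
  block : ℕ → Finset ι
  lo : ℕ → ℕ
  hi : ℕ → ℕ
  three_le_n : 3 ≤ n
  two_le_V : 2 ≤ V
  card_eq : Fintype.card ι = n
  pos_injective : ∀ s ≤ V, Function.Injective (pos s)
  pos_bounds : ∀ s ≤ V, ∀ i, 1 ≤ pos s i ∧ pos s i ≤ n
  mem_block_iff : ∀ r, 1 ≤ r → r ≤ V → ∀ i,
    i ∈ block r ↔ lo r ≤ pos (r - 1) i ∧ pos (r - 1) i ≤ hi r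
  pos_of_notMem_block : ∀ r, 1 ≤ r → r ≤ V → ∀ i, i ∉ block r → pos r i = pos (r - 1) i
  block_bounds : ∀ r, 1 ≤ r → r ≤ V → 1 ≤ lo r ∧ lo r < hi r ∧ hi r ≤ n
  pos_last_add_pos_zero : ∀ i, pos V i + pos 0 i = n + 1
  existsUnique_block : ∀ i j, i ≠ j → ∃! r, (1 ≤ r ∧ r ≤ V) ∧ i ∈ block r ∧ j ∈ block r

namespace WiringDiagram

variable {ι : Type*} [Fintype ι] (D : WiringDiagram ι)

lemma exists_pos_eq {s q : ℕ} (hs : s ≤ D.V) (hq : 1 ≤ q ∧ q ≤ D.n) : ∃ i, D.pos s i = q := by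
  have himage : univ.image (D.pos s) = Icc 1 D.n := by
    refine eq_of_subset_of_card_le (fun x hx => ?_) ?_
    · obtain ⟨i, -, rfl⟩ := mem_image.1 hx
      exact mem_Icc.2 (D.pos_bounds s hs i)
    · rw [card_image_of_injective _ (D.pos_injective s hs), card_univ, D.card_eq, Nat.card_Icc]
      omega
  have : q ∈ univ.image (D.pos s) := himage ▸ mem_Icc.2 hq
  simpa using this

lemma card_block {r : ℕ} (h₁ : 1 ≤ r) (h₂ : r ≤ D.V) : #(D.block r) = D.hi r + 1 - D.lo r := by
  have himage : (D.block r).image (D.pos (r - 1)) = Icc (D.lo r) (D.hi r) := by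
    ext q
    simp only [mem_image, mem_Icc]
    constructor
    · rintro ⟨i, hi, rfl⟩
      exact (D.mem_block_iff r h₁ h₂ i).1 hi
    · intro hq
      have := D.block_bounds r h₁ h₂
      obtain ⟨i, rfl⟩ := D.exists_pos_eq (s := r - 1) (q := q) (by omega) (by omega)
      exact ⟨i, (D.mem_block_iff r h₁ h₂ i).2 hq, rfl⟩
  rw [← Nat.card_Icc, ← himage, card_image_of_injective _ (D.pos_injective _ (by omega))]

lemma eq_of_mem_block {i j : ι} (hij : i ≠ j) {r r' : ℕ} (hr : 1 ≤ r ∧ r ≤ D.V)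
    (hr' : 1 ≤ r' ∧ r' ≤ D.V) (hi : i ∈ D.block r) (hj : j ∈ D.block r)
    (hi' : i ∈ D.block r') (hj' : j ∈ D.block r') : r = r' :=
  (D.existsUnique_block i j hij).unique ⟨hr, hi, hj⟩ ⟨hr', hi', hj'⟩

lemma exists_notMem_block {r : ℕ} (hr : 1 ≤ r ∧ r ≤ D.V) : ∃ w, w ∉ D.block r := by
  obtain ⟨u, hu, hur⟩ : ∃ u, (1 ≤ u ∧ u ≤ D.V) ∧ u ≠ r := by
    rcases eq_or_ne r 1 with rfl | h
    · exact ⟨2, ⟨by omega, D.two_le_V⟩, by omega⟩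
    · exact ⟨1, ⟨le_rfl, by omega⟩, Ne.symm h⟩
  have : 1 < #(D.block u) := by
    rw [D.card_block hu.1 hu.2]
    have := D.block_bounds u hu.1 hu.2
    omega
  obtain ⟨i, hi, j, hj, hij⟩ := one_lt_card.1 this
  by_contra! hall
  exact hur (D.eq_of_mem_block hij hu hr hi hj (hall i) (hall j))

lemma mem_block_iff_pos {r : ℕ} (h₁ : 1 ≤ r) (h₂ : r ≤ D.V) (i : ι) :
    i ∈ D.block r ↔ D.lo r ≤ D.pos r i ∧ D.pos r i ≤ D.hi r := by
  constructor
  · intro hi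
    by_contra hout
    obtain ⟨j, hj⟩ := D.exists_pos_eq (s := r - 1) (q := D.pos r i) (by omega) (D.pos_bounds r h₂ i)
    have hjb : j ∉ D.block r := by
      rw [D.mem_block_iff r h₁ h₂, hj]
      exact hout
    have : j = i := D.pos_injective r h₂ (by rw [D.pos_of_notMem_block r h₁ h₂ j hjb, hj])
    exact hjb (this ▸ hi)
  · intro hpos
    by_contra hi
    rw [D.pos_of_notMem_block r h₁ h₂ i hi] at hpos
    exact hi ((D.mem_block_iff r h₁ h₂ i).2 hpos)

lemma pos_eq_iff_of_not_covers {q r₁ r₂ : ℕ} (h₁₂ : r₁ ≤ r₂) (h₂ : r₂ ≤ D.V)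
    (hq : ∀ u, r₁ < u → u ≤ r₂ → ¬ (D.lo u ≤ q ∧ q ≤ D.hi u)) (i : ι) :
    D.pos r₁ i = q ↔ D.pos r₂ i = q := by
  induction r₂, h₁₂ using Nat.le_induction with
  | base => rfl
  | succ m hm ih =>
    rw [ih (by omega) fun u h h' => hq u h (by omega)]
    have hcov := hq (m + 1) (by omega) le_rfl
    by_cases hi : i ∈ D.block (m + 1)
    · have hbefore := (D.mem_block_iff (m + 1) (by omega) h₂ i).1 hi
      have hafter := (D.mem_block_iff_pos (by omega) h₂ i).1 hi
      rw [Nat.add_sub_cancel] at hbefore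
      omega
    · rw [D.pos_of_notMem_block (m + 1) (by omega) h₂ i hi, Nat.add_sub_cancel]

lemma notMem_block_of_not_covers {q r u : ℕ} (hru : r < u) (hu : u ≤ D.V)
    (hq : ∀ u', r < u' → u' ≤ u → ¬ (D.lo u' ≤ q ∧ q ≤ D.hi u')) {i : ι} (hi : D.pos r i = q) :
    i ∉ D.block u := by
  have hpos := (D.pos_eq_iff_of_not_covers (r₂ := u - 1) (by omega) (by omega)
    (fun u' h h' => hq u' h (by omega)) i).1 hi
  rw [D.mem_block_iff u (by omega) hu, hpos]
  exact hq u hru le_rfl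

lemma pos_eq_one_iff {r₁ r₂ : ℕ} (h₁₂ : r₁ ≤ r₂) (h₂ : r₂ ≤ D.V)
    (htop : ∀ u, r₁ < u → u ≤ r₂ → D.lo u ≠ 1) (i : ι) : D.pos r₁ i = 1 ↔ D.pos r₂ i = 1 :=
  D.pos_eq_iff_of_not_covers h₁₂ h₂ (fun u h h' hc => htop u h h' <| by
    have := D.block_bounds u (by omega) (by omega); omega) i

lemma pos_eq_n_iff {r₁ r₂ : ℕ} (h₁₂ : r₁ ≤ r₂) (h₂ : r₂ ≤ D.V)
    (hbot : ∀ u, r₁ < u → u ≤ r₂ → D.hi u ≠ D.n) (i : ι) : D.pos r₁ i = D.n ↔ D.pos r₂ i = D.n :=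
  D.pos_eq_iff_of_not_covers h₁₂ h₂ (fun u h h' hc => hbot u h h' <| by
    have := D.block_bounds u (by omega) (by omega); omega) i

/-- The wires starting at the top and at the bottom must each leave their boundary position, and a
single move touching both boundaries would move every wire at once. -/
lemma three_le_card_top_add_card_bottom :
    3 ≤ #{u ∈ Icc 1 D.V | D.lo u = 1} + #{u ∈ Icc 1 D.V | D.hi u = D.n} := by
  set A := {u ∈ Icc 1 D.V | D.lo u = 1}
  set B := {u ∈ Icc 1 D.V | D.hi u = D.n}
  have hn := D.three_le_n
  have hA : ∀ {u}, 1 ≤ u → u ≤ D.V → D.lo u = 1 → u ∈ A := fun h₁ h₂ h => by simp [A, *]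
  have hB : ∀ {u}, 1 ≤ u → u ≤ D.V → D.hi u = D.n → u ∈ B := fun h₁ h₂ h => by simp [B, *]
  obtain ⟨x, hx⟩ := D.exists_pos_eq (s := 0) (q := 1) (Nat.zero_le _) (by omega)
  obtain ⟨y, hy⟩ := D.exists_pos_eq (s := 0) (q := D.n) (Nat.zero_le _) (by omega)
  have hxV : D.pos D.V x = D.n := by have := D.pos_last_add_pos_zero x; omega
  have hyV : D.pos D.V y = 1 := by have := D.pos_last_add_pos_zero y; omega
  obtain ⟨r₁, hr₁⟩ : A.Nonempty := by
    by_contra! h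
    have := (D.pos_eq_one_iff (Nat.zero_le _) le_rfl (fun u h₁ h₂ hu => by
      simpa [h] using hA (by omega) h₂ hu) x).1 hx
    omega
  obtain ⟨r₂, hr₂⟩ : B.Nonempty := by
    by_contra! h
    have := (D.pos_eq_n_iff (Nat.zero_le _) le_rfl (fun u h₁ h₂ hu => by
      simpa [h] using hB (by omega) h₂ hu) y).1 hy
    omega
  by_contra! hlt
  have hA₁ : ∀ u, 1 ≤ u → u ≤ D.V → D.lo u = 1 → u = r₁ := fun u h₁ h₂ hu =>
    card_le_one.1 (by have := card_pos.2 ⟨r₂, hr₂⟩; omega) u (hA h₁ h₂ hu) r₁ hr₁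
  have hB₂ : ∀ u, 1 ≤ u → u ≤ D.V → D.hi u = D.n → u = r₂ := fun u h₁ h₂ hu =>
    card_le_one.1 (by have := card_pos.2 ⟨r₁, hr₁⟩; omega) u (hB h₁ h₂ hu) r₂ hr₂
  simp only [A, B, mem_filter, mem_Icc] at hr₁ hr₂
  rcases lt_trichotomy r₁ r₂ with h | rfl | h
  · have := (D.pos_eq_n_iff (Nat.zero_le r₁) hr₁.1.2
      (fun u h₁ h₂ hu => by have := hB₂ u h₁ (by omega) hu; omega) y).1 hy
    have := (D.pos_eq_one_iff hr₁.1.2 le_rfl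
      (fun u h₁ h₂ hu => by have := hA₁ u (by omega) h₂ hu; omega) y).2 hyV
    omega
  · obtain ⟨w, hw⟩ := D.exists_notMem_block hr₁.1
    apply hw
    rw [D.mem_block_iff r₁ hr₁.1.1 hr₁.1.2, hr₁.2, hr₂.2]
    exact D.pos_bounds _ (by omega) w
  · have := (D.pos_eq_one_iff (Nat.zero_le r₂) hr₂.1.2
      (fun u h₁ h₂ hu => by have := hA₁ u h₁ (by omega) hu; omega) x).1 hx
    have := (D.pos_eq_n_iff hr₂.1.2 le_rfl
      (fun u h₁ h₂ hu => by have := hB₂ u (by omega) h₂ hu; omega) x).2 hxV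
    omega

lemma exists_wires_of_cut {r g : ℕ} (hr : 1 ≤ r ∧ r ≤ D.V) (hcut : D.lo r ≤ g ∧ g < D.hi r) :
    ∃ i j, i ≠ j ∧ D.pos r i = g ∧ D.pos r j = g + 1 ∧ i ∈ D.block r ∧ j ∈ D.block r := by
  have := D.block_bounds r hr.1 hr.2
  obtain ⟨i, hi⟩ := D.exists_pos_eq (s := r) (q := g) hr.2 (by omega)
  obtain ⟨j, hj⟩ := D.exists_pos_eq (s := r) (q := g + 1) hr.2 (by omega)
  refine ⟨i, j, fun h => by rw [h, hj] at hi; omega, hi, hj, ?_, ?_⟩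
  · rw [D.mem_block_iff_pos hr.1 hr.2, hi]; omega
  · rw [D.mem_block_iff_pos hr.1 hr.2, hj]; omega

/-- Gap `g` lies between positions `g` and `g + 1`. -/
def laterTouches (r g : ℕ) : Finset ℕ := {u ∈ Ioc r D.V | D.lo u ≤ g + 1 ∧ g ≤ D.hi u}

/-- Gap `n - g` is gap `g` seen in the reversed order. -/
def earlierTouches (r g : ℕ) : Finset ℕ :=
  {u ∈ Ico 1 r | D.lo u ≤ D.n - g + 1 ∧ D.n - g ≤ D.hi u}

lemma mem_laterTouches {r g u : ℕ} :
    u ∈ D.laterTouches r g ↔ (r < u ∧ u ≤ D.V) ∧ D.lo u ≤ g + 1 ∧ g ≤ D.hi u := by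
  simp [laterTouches]

lemma mem_earlierTouches {r g u : ℕ} :
    u ∈ D.earlierTouches r g ↔ (1 ≤ u ∧ u < r) ∧ D.lo u ≤ D.n - g + 1 ∧ D.n - g ≤ D.hi u := by
  simp [earlierTouches]

lemma pos_eq_iff_of_not_touches {g r₁ r₂ : ℕ} (h₁₂ : r₁ ≤ r₂) (h₂ : r₂ ≤ D.V)
    (hg : ∀ u, r₁ < u → u ≤ r₂ → ¬ (D.lo u ≤ g + 1 ∧ g ≤ D.hi u)) (i : ι) :
    (D.pos r₁ i = g ↔ D.pos r₂ i = g) ∧ (D.pos r₁ i = g + 1 ↔ D.pos r₂ i = g + 1) :=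
  ⟨D.pos_eq_iff_of_not_covers h₁₂ h₂ (fun u h h' hc => hg u h h' (by omega)) i,
    D.pos_eq_iff_of_not_covers h₁₂ h₂ (fun u h h' hc => hg u h h' (by omega)) i⟩

lemma mem_block_of_cut {u g : ℕ} (hu : 1 ≤ u ∧ u ≤ D.V) (hcut : D.lo u ≤ g ∧ g < D.hi u) {i : ι}
    (hi : D.pos (u - 1) i = g ∨ D.pos (u - 1) i = g + 1) : i ∈ D.block u := by
  rw [D.mem_block_iff u hu.1 hu.2]
  omega

/-- The two wires meeting at the cut `(r, g)` would have to cross again at the next move. -/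
lemma not_cut_of_le_laterTouches {r g u : ℕ} (hr : 1 ≤ r ∧ r ≤ D.V)
    (hcut : D.lo r ≤ g ∧ g < D.hi r) (hu : u ∈ D.laterTouches r g)
    (hmin : ∀ u' ∈ D.laterTouches r g, u ≤ u') : ¬ (D.lo u ≤ g ∧ g < D.hi u) := by
  intro hcut'
  obtain ⟨i, j, hij, hi, hj, hir, hjr⟩ := D.exists_wires_of_cut hr hcut
  obtain ⟨hru, -⟩ := D.mem_laterTouches.1 hu
  have hstay := D.pos_eq_iff_of_not_touches (g := g) (r₁ := r) (r₂ := u - 1) (by omega) (by omega)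
    fun u' h h' htouch => by have := hmin u' (D.mem_laterTouches.2 ⟨⟨h, by omega⟩, htouch⟩); omega
  have := D.eq_of_mem_block hij hr ⟨by omega, hru.2⟩ hir hjr
    (D.mem_block_of_cut ⟨by omega, hru.2⟩ hcut' (Or.inl ((hstay i).1.1 hi)))
    (D.mem_block_of_cut ⟨by omega, hru.2⟩ hcut' (Or.inr ((hstay j).2.1 hj)))
  omega

lemma not_cut_of_le_earlierTouches {r g u : ℕ} (hr : 1 ≤ r ∧ r ≤ D.V)
    (hcut : D.lo r ≤ g ∧ g < D.hi r) (hlater : D.laterTouches r g = ∅)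
    (hu : u ∈ D.earlierTouches r g) (hmin : ∀ u' ∈ D.earlierTouches r g, u ≤ u') :
    ¬ (D.lo u ≤ D.n - g ∧ D.n - g < D.hi u) := by
  intro hcut'
  have := D.block_bounds r hr.1 hr.2
  obtain ⟨i, j, hij, hi, hj, hir, hjr⟩ := D.exists_wires_of_cut hr hcut
  obtain ⟨hur, -⟩ := D.mem_earlierTouches.1 hu
  have hlast := D.pos_eq_iff_of_not_touches (g := g) hr.2 le_rfl fun u' h h' htouch => by
    simpa [hlater] using D.mem_laterTouches.2 ⟨⟨h, h'⟩, htouch⟩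
  have hi0 : D.pos 0 i = D.n - g + 1 := by
    have := (hlast i).1.1 hi; have := D.pos_last_add_pos_zero i; omega
  have hj0 : D.pos 0 j = D.n - g := by
    have := (hlast j).2.1 hj; have := D.pos_last_add_pos_zero j; omega
  have hfirst := D.pos_eq_iff_of_not_touches (g := D.n - g) (r₂ := u - 1) (Nat.zero_le _)
    (by omega) fun u' h h' htouch => by
      have := hmin u' (D.mem_earlierTouches.2 ⟨⟨h, by omega⟩, htouch⟩); omega
  have := D.eq_of_mem_block hij hr ⟨hur.1, by omega⟩ hir hjr
    (D.mem_block_of_cut ⟨hur.1, by omega⟩ hcut' (Or.inr ((hfirst i).2.1 hi0)))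
    (D.mem_block_of_cut ⟨hur.1, by omega⟩ hcut' (Or.inl ((hfirst j).1.1 hj0)))
  omega

/-- Otherwise the lower wire of the cut would meet every other wire in the move `r`. -/
lemma laterTouches_nonempty_or {r g : ℕ} (hr : 1 ≤ r ∧ r ≤ D.V)
    (hcut : D.lo r ≤ g ∧ g < D.hi r) :
    (D.laterTouches r g).Nonempty ∨ (D.earlierTouches r g).Nonempty := by
  by_contra! h
  have := D.block_bounds r hr.1 hr.2
  obtain ⟨i, -, -, hi, -, hir, -⟩ := D.exists_wires_of_cut hr hcut
  have hlater : ∀ u', r < u' → u' ≤ D.V → ¬ (D.lo u' ≤ g ∧ g ≤ D.hi u') :=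
    fun u' h₁ h₂ hc => by simpa [h.1] using D.mem_laterTouches (g := g) |>.2 ⟨⟨h₁, h₂⟩, by omega⟩
  have hearlier : ∀ u', 0 < u' → u' < r → ¬ (D.lo u' ≤ D.n + 1 - g ∧ D.n + 1 - g ≤ D.hi u') :=
    fun u' h₁ h₂ hc => by simpa [h.2] using D.mem_earlierTouches (g := g) |>.2 ⟨⟨h₁, h₂⟩, by omega⟩
  have hiV := (D.pos_eq_iff_of_not_covers hr.2 le_rfl hlater i).1 hi
  have hi0 : D.pos 0 i = D.n + 1 - g := by have := D.pos_last_add_pos_zero i; omega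
  obtain ⟨w, hw⟩ := D.exists_notMem_block hr
  have hwi : w ≠ i := fun h => hw (h ▸ hir)
  obtain ⟨u, ⟨hu, hwu, hiu⟩, -⟩ := D.existsUnique_block w i hwi
  rcases lt_trichotomy u r with hur | rfl | hru
  · exact D.notMem_block_of_not_covers (r := 0) (by omega) hu.2
      (fun u' h₁ h₂ => hearlier u' h₁ (by omega)) hi0 hiu
  · exact hw hwu
  · exact D.notMem_block_of_not_covers hru hu.2 (fun u' h₁ h₂ => hlater u' h₁ (by omega)) hi hiu

def cuts : Finset (Σ _ : ℕ, ℕ) := (Icc 1 D.V).sigma fun r => Ico (D.lo r) (D.hi r)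

def tokens : Finset (ℕ × ℕ) :=
  {u ∈ Icc 1 D.V | D.lo u ≠ 1}.image (fun u => (u, D.lo u - 1)) ∪
    {u ∈ Icc 1 D.V | D.hi u ≠ D.n}.image (fun u => (u, D.hi u))

/-- The first move touching the gap of the cut `(r, g)` after `r`, continuing cyclically through
the reversed diagram. -/
def tokenOf (r g : ℕ) : ℕ × ℕ :=
  if h : (D.laterTouches r g).Nonempty then ((D.laterTouches r g).min' h, g)
  else if h' : (D.earlierTouches r g).Nonempty then ((D.earlierTouches r g).min' h', D.n - g)
  else (0, 0)

lemma mem_cuts {r g : ℕ} :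
    ⟨r, g⟩ ∈ D.cuts ↔ (1 ≤ r ∧ r ≤ D.V) ∧ D.lo r ≤ g ∧ g < D.hi r := by
  simp [cuts]

lemma mem_tokens_of {u g : ℕ} (hu : 1 ≤ u ∧ u ≤ D.V)
    (h : (1 ≤ g ∧ D.lo u = g + 1) ∨ (g < D.n ∧ D.hi u = g)) : (u, g) ∈ D.tokens := by
  rcases h with h | h
  · exact mem_union_left _ (mem_image.2 ⟨u, mem_filter.2 ⟨mem_Icc.2 hu, by omega⟩, by simp [h]⟩)
  · exact mem_union_right _ (mem_image.2 ⟨u, mem_filter.2 ⟨mem_Icc.2 hu, by omega⟩, by simp [h]⟩)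

lemma card_cuts : #D.cuts = ∑ r ∈ Icc 1 D.V, (D.hi r - D.lo r) := by
  simp [cuts]

lemma card_tokens_le : #D.tokens ≤ 2 * D.V - 3 := by
  have hlo := card_filter_add_card_filter_not (s := Icc 1 D.V) (fun u => D.lo u = 1)
  have hhi := card_filter_add_card_filter_not (s := Icc 1 D.V) (fun u => D.hi u = D.n)
  have := D.three_le_card_top_add_card_bottom
  have : #D.tokens ≤ #{u ∈ Icc 1 D.V | ¬ D.lo u = 1} + #{u ∈ Icc 1 D.V | ¬ D.hi u = D.n} :=
    (card_union_le _ _).trans (add_le_add card_image_le card_image_le)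
  simp only [Nat.card_Icc] at hlo hhi
  omega

lemma tokenOf_spec {r g : ℕ} (hr : 1 ≤ r ∧ r ≤ D.V) (hcut : D.lo r ≤ g ∧ g < D.hi r) :
    (∃ u ∈ D.laterTouches r g, (∀ u' ∈ D.laterTouches r g, u ≤ u') ∧
      D.tokenOf r g = (u, g)) ∨
    (D.laterTouches r g = ∅ ∧ ∃ u ∈ D.earlierTouches r g, (∀ u' ∈ D.earlierTouches r g, u ≤ u') ∧
      D.tokenOf r g = (u, D.n - g)) := by
  unfold tokenOf
  by_cases h : (D.laterTouches r g).Nonempty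
  · exact Or.inl ⟨_, min'_mem _ h, fun u' hu' => min'_le _ _ hu', by rw [dif_pos h]⟩
  · have h' := (D.laterTouches_nonempty_or hr hcut).resolve_left h
    refine Or.inr ⟨not_nonempty_iff_eq_empty.1 h, _, min'_mem _ h',
      fun u' hu' => min'_le _ _ hu', by rw [dif_neg h, dif_pos h']⟩

lemma tokenOf_mem_tokens {r g : ℕ} (hc : ⟨r, g⟩ ∈ D.cuts) : D.tokenOf r g ∈ D.tokens := by
  obtain ⟨hr, hcut⟩ := D.mem_cuts.1 hc
  have := D.block_bounds r hr.1 hr.2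
  rcases D.tokenOf_spec hr hcut with ⟨u, hu, hmin, htok⟩ | ⟨hlater, u, hu, hmin, htok⟩
  · have := D.not_cut_of_le_laterTouches hr hcut hu hmin
    obtain ⟨hru, htouch⟩ := D.mem_laterTouches.1 hu
    exact htok ▸ D.mem_tokens_of ⟨by omega, hru.2⟩ (by omega)
  · have := D.not_cut_of_le_earlierTouches hr hcut hlater hu hmin
    obtain ⟨hur, htouch⟩ := D.mem_earlierTouches.1 hu
    exact htok ▸ D.mem_tokens_of ⟨hur.1, by omega⟩ (by omega)

lemma mem_laterTouches_of_cut {r r' g : ℕ} (hr : 1 ≤ r ∧ r ≤ D.V)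
    (hcut : D.lo r ≤ g ∧ g < D.hi r) (h : r' < r) : r ∈ D.laterTouches r' g :=
  D.mem_laterTouches.2 ⟨⟨h, hr.2⟩, by omega⟩

lemma mem_earlierTouches_of_cut {r r' g g' : ℕ} (hr : 1 ≤ r ∧ r ≤ D.V)
    (hcut : D.lo r ≤ g ∧ g < D.hi r) (hg : g = D.n - g') (h : r < r') :
    r ∈ D.earlierTouches r' g' :=
  D.mem_earlierTouches.2 ⟨⟨hr.1, h⟩, by omega⟩

lemma injOn_tokenOf : Set.InjOn (fun c : Σ _ : ℕ, ℕ => D.tokenOf c.1 c.2) D.cuts := by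
  rintro ⟨r₁, g₁⟩ hc₁ ⟨r₂, g₂⟩ hc₂ (heq : D.tokenOf r₁ g₁ = D.tokenOf r₂ g₂)
  obtain ⟨hr₁, hcut₁⟩ := D.mem_cuts.1 hc₁
  obtain ⟨hr₂, hcut₂⟩ := D.mem_cuts.1 hc₂
  have := D.block_bounds r₁ hr₁.1 hr₁.2
  have := D.block_bounds r₂ hr₂.1 hr₂.2
  rcases D.tokenOf_spec hr₁ hcut₁ with
    ⟨u₁, hu₁, hmin₁, htok₁⟩ | ⟨hlater₁, u₁, hu₁, hmin₁, htok₁⟩ <;>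
  rcases D.tokenOf_spec hr₂ hcut₂ with
    ⟨u₂, hu₂, hmin₂, htok₂⟩ | ⟨hlater₂, u₂, hu₂, hmin₂, htok₂⟩ <;>
  rw [htok₁, htok₂, Prod.mk.injEq] at heq <;> obtain ⟨rfl, hg⟩ := heq
  · obtain rfl : g₁ = g₂ := hg
    have h₁ := (D.mem_laterTouches.1 hu₁).1
    have h₂ := (D.mem_laterTouches.1 hu₂).1
    rcases lt_trichotomy r₁ r₂ with h | rfl | h
    · have := hmin₁ r₂ (D.mem_laterTouches_of_cut hr₂ hcut₂ h); omega
    · rfl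
    · have := hmin₂ r₁ (D.mem_laterTouches_of_cut hr₁ hcut₁ h); omega
  · have h₁ := (D.mem_laterTouches.1 hu₁).1
    have h₂ := (D.mem_earlierTouches.1 hu₂).1
    have := hmin₂ r₁ (D.mem_earlierTouches_of_cut hr₁ hcut₁ hg (by omega)); omega
  · have h₁ := (D.mem_earlierTouches.1 hu₁).1
    have h₂ := (D.mem_laterTouches.1 hu₂).1
    have := hmin₁ r₂ (D.mem_earlierTouches_of_cut hr₂ hcut₂ hg.symm (by omega)); omega
  · obtain rfl : g₁ = g₂ := by omega
    rcases lt_trichotomy r₁ r₂ with h | rfl | h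
    · simpa [hlater₁] using D.mem_laterTouches_of_cut hr₂ hcut₂ h
    · rfl
    · simpa [hlater₂] using D.mem_laterTouches_of_cut hr₁ hcut₁ h

theorem sum_card_block_le : ∑ r ∈ Icc 1 D.V, #(D.block r) ≤ 3 * D.V - 3 := by
  have hcard : ∑ r ∈ Icc 1 D.V, #(D.block r) = #D.cuts + D.V := calc
    _ = ∑ r ∈ Icc 1 D.V, ((D.hi r - D.lo r) + 1) := sum_congr rfl fun r hr => by
      rw [mem_Icc] at hr
      have := D.block_bounds r hr.1 hr.2
      rw [D.card_block hr.1 hr.2]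
      omega
    _ = #D.cuts + D.V := by simp [sum_add_distrib, D.card_cuts]
  have := card_le_card_of_injOn _ (fun c hc => D.tokenOf_mem_tokens hc) D.injOn_tokenOf
  have := D.card_tokens_le
  have := D.two_le_V
  omega

end WiringDiagram
section Rank

variable {ι : Type*} [Fintype ι]

noncomputable def rank (f : ι → ℝ) (i : ι) : ℕ := #{j | f j < f i}

lemma rank_lt_rank_iff {f : ι → ℝ} {i j : ι} : rank f i < rank f j ↔ f i < f j := by
  constructor
  · intro h
    by_contra! hji
    exact (card_le_card fun k hk => by
      simp only [mem_filter, mem_univ, true_and] at hk ⊢; linarith).not_gt h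
  · intro h
    refine card_lt_card ⟨fun k hk => by
      simp only [mem_filter, mem_univ, true_and] at hk ⊢; linarith, fun hsub => ?_⟩
    have := hsub (mem_filter.2 ⟨mem_univ i, h⟩)
    exact (mem_filter.1 this).2.false

lemma rank_injective {f : ι → ℝ} (hf : Function.Injective f) : Function.Injective (rank f) := by
  intro i j h
  by_contra hij
  rcases (hf.ne hij).lt_or_gt with hlt | hlt
  · exact (rank_lt_rank_iff.2 hlt).ne h
  · exact (rank_lt_rank_iff.2 hlt).ne' h

lemma rank_lt_card (f : ι → ℝ) (i : ι) : rank f i < Fintype.card ι :=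
  card_lt_card ⟨subset_univ _, fun h => by simpa using h (mem_univ i)⟩

lemma rank_add_rank_of_reverse {f g : ι → ℝ} (hf : Function.Injective f) {i : ι}
    (hfg : ∀ j ≠ i, g j < g i ↔ f i < f j) : rank g i + rank f i + 1 = Fintype.card ι := by
  have hsub : ({j | f j < f i} : Finset ι) ⊆ univ.erase i := fun j hj =>
    mem_erase.2 ⟨fun h => (mem_filter.1 (h ▸ hj)).2.false, mem_univ j⟩
  have heq : ({j | g j < g i} : Finset ι) = univ.erase i \ ({j | f j < f i} : Finset ι) := by
    ext j
    rcases eq_or_ne j i with rfl | hj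
    · simp
    · simp only [mem_filter, mem_univ, true_and, mem_sdiff, mem_erase, ne_eq, hj,
        not_false_eq_true, hfg j hj]
      exact ⟨fun h => not_lt.2 h.le, fun h => (not_lt.1 h).lt_of_ne (hf.ne hj.symm)⟩
  have := card_le_card hsub
  rw [card_erase_of_mem (mem_univ i), card_univ] at this
  rw [rank, rank, heq, card_sdiff_of_subset hsub, card_erase_of_mem (mem_univ i), card_univ]
  have := Fintype.card_pos_iff.2 ⟨i⟩
  omega

end Rank

/-- Sample times `s 0 < t 1 < s 1 < ⋯ < t m < s m` separating the `m` elements `t 1, …, t m`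
of `T`. -/
structure Interlacing (T : Finset ℝ) where
  t : ℕ → ℝ
  s : ℕ → ℝ
  t_mem : ∀ r, 1 ≤ r → r ≤ #T → t r ∈ T
  exists_t_eq : ∀ x ∈ T, ∃ r, (1 ≤ r ∧ r ≤ #T) ∧ t r = x
  s_lt_t : ∀ r, 1 ≤ r → r ≤ #T → s (r - 1) < t r
  t_lt_s : ∀ r, 1 ≤ r → r ≤ #T → t r < s r

namespace Interlacing

variable {T : Finset ℝ} (I : Interlacing T)

lemma s_le_s {r r' : ℕ} (h : r ≤ r') (h' : r' ≤ #T) : I.s r ≤ I.s r' := by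
  induction r', h using Nat.le_induction with
  | base => rfl
  | succ m hm ih =>
    have h₁ := I.s_lt_t (m + 1) (by omega) h'
    have h₂ := I.t_lt_s (m + 1) (by omega) h'
    rw [Nat.add_sub_cancel] at h₁
    linarith [ih (by omega)]

lemma eq_t_of_mem_Ioo {x : ℝ} (hx : x ∈ T) {r : ℕ} (hr : 1 ≤ r ∧ r ≤ #T)
    (h₁ : I.s (r - 1) < x) (h₂ : x < I.s r) : x = I.t r := by
  obtain ⟨r', hr', rfl⟩ := I.exists_t_eq x hx
  rcases lt_trichotomy r' r with h | rfl | h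
  · linarith [I.t_lt_s r' hr'.1 hr'.2, I.s_le_s (show r' ≤ r - 1 by omega) (by omega)]
  · rfl
  · linarith [I.s_lt_t r' hr'.1 hr'.2, I.s_le_s (show r ≤ r' - 1 by omega) (by omega)]

lemma ne_s {x : ℝ} (hx : x ∈ T) {r : ℕ} (hr : r ≤ #T) : x ≠ I.s r := by
  obtain ⟨r', hr', rfl⟩ := I.exists_t_eq x hx
  rcases le_or_gt r' r with h | h
  · exact (lt_of_lt_of_le (I.t_lt_s r' hr'.1 hr'.2) (I.s_le_s h hr)).ne
  · exact (lt_of_le_of_lt (I.s_le_s (show r ≤ r' - 1 by omega) (by omega))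
      (I.s_lt_t r' hr'.1 hr'.2)).ne'

lemma mem_Ioo {x : ℝ} (hx : x ∈ T) : x ∈ Set.Ioo (I.s 0) (I.s #T) := by
  obtain ⟨r, hr, rfl⟩ := I.exists_t_eq x hx
  exact ⟨(I.s_le_s (Nat.zero_le (r - 1)) (by omega)).trans_lt (I.s_lt_t r hr.1 hr.2),
    (I.t_lt_s r hr.1 hr.2).trans_le (I.s_le_s hr.2 le_rfl)⟩

lemma t_lt_t {r r' : ℕ} (hr : 1 ≤ r) (h : r < r') (hr' : r' ≤ #T) : I.t r < I.t r' :=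
  ((I.t_lt_s r hr (by omega)).trans_le (I.s_le_s (show r ≤ r' - 1 by omega) (by omega))).trans
    (I.s_lt_t r' (by omega) hr')

lemma t_injOn : Set.InjOn I.t (Icc 1 #T) := by
  intro r hr r' hr' h
  rw [coe_Icc, Set.mem_Icc] at hr hr'
  rcases lt_trichotomy r r' with hlt | rfl | hlt
  · exact absurd h (I.t_lt_t hr.1 hlt hr'.2).ne
  · rfl
  · exact absurd h (I.t_lt_t hr'.1 hlt hr.2).ne'

lemma image_t : (Icc 1 #T).image I.t = T := by
  ext x
  simp only [mem_image, mem_Icc]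
  exact ⟨fun ⟨r, hr, hx⟩ => hx ▸ I.t_mem r hr.1 hr.2, I.exists_t_eq x⟩

end Interlacing

lemma Interlacing.nonempty (T : Finset ℝ) : Nonempty (Interlacing T) := by
  set e := T.orderEmbOfFin rfl
  let t : ℕ → ℝ := fun r => if h : r - 1 < #T then e ⟨r - 1, h⟩ else 0
  have ht : ∀ r, 1 ≤ r → r < #T → t r < t (r + 1) := fun r h₁ h₂ => by
    simp only [t, dif_pos (show r - 1 < #T by omega), dif_pos (show r + 1 - 1 < #T by omega)]
    exact e.strictMono (Fin.mk_lt_mk.2 (by omega))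
  let s : ℕ → ℝ := fun r => if r = 0 then t 1 - 1 else if r < #T then (t r + t (r + 1)) / 2
    else t #T + 1
  refine ⟨⟨t, s, fun r h₁ h₂ => ?_, fun x hx => ?_, fun r h₁ h₂ => ?_, fun r h₁ h₂ => ?_⟩⟩
  · simp only [t, dif_pos (show r - 1 < #T by omega)]
    exact T.orderEmbOfFin_mem rfl _
  · obtain ⟨⟨k, hk⟩, rfl⟩ : x ∈ Set.range e := by rw [T.range_orderEmbOfFin rfl]; exact hx
    exact ⟨k + 1, ⟨by omega, hk⟩, by simp [t, hk]⟩
  · rcases eq_or_ne r 1 with rfl | hr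
    · simp [s]
    · have := ht (r - 1) (by omega) (by omega)
      simp only [s, if_neg (show r - 1 ≠ 0 by omega), if_pos (show r - 1 < #T by omega),
        Nat.sub_add_cancel h₁] at this ⊢
      linarith
  · rcases lt_or_eq_of_le h₂ with hr | rfl
    · have := ht r h₁ hr
      simp only [s, if_neg (show r ≠ 0 by omega), if_pos hr]
      linarith
    · simp [s, show #T ≠ 0 by omega]

section Sweep

variable {ι : Type*} (α β : ι → ℝ)

/-- The time at which the graphs of `t ↦ α i * t + β i` and `t ↦ α j * t + β j` cross (junk `0`
when `α i = α j`). -/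
noncomputable def crossTime (i j : ι) : ℝ := (β j - β i) / (α i - α j)

noncomputable def crossTimes [Fintype ι] : Finset ℝ :=
  univ.offDiag.image fun p => crossTime α β p.1 p.2

noncomputable def crossing [Fintype ι] (t : ℝ) : Finset ι := {i | ∃ j ≠ i, crossTime α β i j = t}

variable {α β}

lemma crossTime_comm (i j : ι) : crossTime α β i j = crossTime α β j i := by
  rw [crossTime, crossTime, ← neg_sub, ← neg_sub (α j), neg_div_neg_eq]

lemma crossTime_mem_crossTimes [Fintype ι] {i j : ι} (h : i ≠ j) :
    crossTime α β i j ∈ crossTimes α β :=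
  mem_image.2 ⟨(i, j), by simpa using h, rfl⟩

lemma mem_crossing [Fintype ι] {i j : ι} (h : i ≠ j) :
    i ∈ crossing α β (crossTime α β i j) := by
  simpa [crossing] using ⟨j, Ne.symm h, rfl⟩

lemma sub_eq_mul_sub_crossTime {i j : ι} (h : α i ≠ α j) (t : ℝ) :
    (α i * t + β i) - (α j * t + β j) = (α i - α j) * (t - crossTime α β i j) := by
  rw [crossTime, mul_sub, mul_div_cancel₀ _ (sub_ne_zero.2 h)]
  ring

lemma eq_iff_eq_crossTime {i j : ι} (h : α i ≠ α j) {t : ℝ} :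
    α i * t + β i = α j * t + β j ↔ t = crossTime α β i j := by
  rw [← sub_eq_zero, sub_eq_mul_sub_crossTime h, mul_eq_zero, sub_eq_zero, sub_eq_zero]
  simp [h]

/-- Distinct crossing points occur at distinct times. -/
def CrossingTimesSeparated [Fintype ι] (α β : ι → ℝ) : Prop :=
  ∀ t, ∀ i ∈ crossing α β t, ∀ j ∈ crossing α β t, i ≠ j → crossTime α β i j = t

lemma lt_iff_lt_of_crossTime_notMem {i j : ι} (h : α i ≠ α j) {s s' : ℝ} (hss' : s ≤ s')
    (hτ : crossTime α β i j ∉ Set.Icc s s') :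
    α i * s + β i < α j * s + β j ↔ α i * s' + β i < α j * s' + β j := by
  have hprod : 0 < (s - crossTime α β i j) * (s' - crossTime α β i j) := by
    rw [Set.mem_Icc, not_and_or, not_le, not_le] at hτ
    rcases hτ with hτ | hτ <;> nlinarith
  have key := sub_eq_mul_sub_crossTime (β := β) h s
  have key' := sub_eq_mul_sub_crossTime (β := β) h s'
  have hsq : 0 < (α i - α j) ^ 2 := by positivity [sub_ne_zero.2 h]
  constructor <;> intro hlt <;> nlinarith [mul_pos hsq hprod]

lemma lt_iff_lt_of_crossTime_mem {i j : ι} (h : α i ≠ α j) {s s' : ℝ}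
    (hτ : crossTime α β i j ∈ Set.Ioo s s') :
    α i * s + β i < α j * s + β j ↔ α j * s' + β j < α i * s' + β i := by
  have hprod : (s - crossTime α β i j) * (s' - crossTime α β i j) < 0 :=
    mul_neg_of_neg_of_pos (by linarith [hτ.1]) (by linarith [hτ.2])
  have key := sub_eq_mul_sub_crossTime (β := β) h s
  have key' := sub_eq_mul_sub_crossTime (β := β) h s'
  have hsq : 0 < (α i - α j) ^ 2 := by positivity [sub_ne_zero.2 h]
  constructor <;> intro hlt <;> nlinarith [mul_neg_of_pos_of_neg hsq hprod]

end Sweep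

section SweepDiagram

variable {ι : Type*} [Fintype ι] {α β : ι → ℝ} (I : Interlacing (crossTimes α β))

lemma injective_of_crossTimes (hα : Function.Injective α) {x : ℝ}
    (hx : x ∉ crossTimes α β) : Function.Injective fun i => α i * x + β i := by
  intro i j h
  by_contra hij
  exact hx ((eq_iff_eq_crossTime (hα.ne hij)).1 h ▸ crossTime_mem_crossTimes hij)

lemma crossTime_notMem_Icc {i j : ι} (hij : i ≠ j) {r : ℕ} (hr : 1 ≤ r ∧ r ≤ #(crossTimes α β))
    (hi : i ∉ crossing α β (I.t r)) : crossTime α β i j ∉ Set.Icc (I.s (r - 1)) (I.s r) := by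
  intro hmem
  have hτ := crossTime_mem_crossTimes (α := α) (β := β) hij
  have := I.eq_t_of_mem_Ioo hτ hr
    (lt_of_le_of_ne hmem.1 (I.ne_s hτ (by omega)).symm) (lt_of_le_of_ne hmem.2 (I.ne_s hτ hr.2))
  exact hi (this ▸ mem_crossing hij)

lemma exists_pair_mem_crossing {r : ℕ} (hr : 1 ≤ r ∧ r ≤ #(crossTimes α β)) :
    ∃ i j, i ≠ j ∧ i ∈ crossing α β (I.t r) ∧ j ∈ crossing α β (I.t r) := by
  obtain ⟨⟨i, j⟩, hij, hτ⟩ := mem_image.1 (I.t_mem r hr.1 hr.2)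
  have hij : i ≠ j := (mem_offDiag.1 hij).2.2
  refine ⟨i, j, hij, hτ ▸ mem_crossing hij, ?_⟩
  rw [← hτ, crossTime_comm]
  exact mem_crossing hij.symm

lemma mem_crossing_of_between (hsep : CrossingTimesSeparated α β) (hα : Function.Injective α)
    {r : ℕ} (hr : 1 ≤ r ∧ r ≤ #(crossTimes α β)) {i i₀ j₀ : ι} (hi₀ : i₀ ∈ crossing α β (I.t r))
    (hj₀ : j₀ ∈ crossing α β (I.t r))
    (h₁ : α i₀ * I.s (r - 1) + β i₀ < α i * I.s (r - 1) + β i)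
    (h₂ : α i * I.s (r - 1) + β i < α j₀ * I.s (r - 1) + β j₀) : i ∈ crossing α β (I.t r) := by
  by_contra hi
  have hii₀ : i ≠ i₀ := by rintro rfl; exact hi hi₀
  have hij₀ : i ≠ j₀ := by rintro rfl; exact hi hj₀
  have hi₀j₀ : i₀ ≠ j₀ := by rintro rfl; linarith
  have hwin : Set.Icc (I.s (r - 1)) (I.t r) ⊆ Set.Icc (I.s (r - 1)) (I.s r) :=
    Set.Icc_subset_Icc_right (I.t_lt_s r hr.1 hr.2).le
  have hlow := (lt_iff_lt_of_crossTime_notMem (hα.ne hii₀.symm) (I.s_lt_t r hr.1 hr.2).le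
    fun h => crossTime_notMem_Icc I hii₀ hr hi (crossTime_comm i₀ i ▸ hwin h)).1 h₁
  have hhigh := (lt_iff_lt_of_crossTime_notMem (hα.ne hij₀) (I.s_lt_t r hr.1 hr.2).le
    fun h => crossTime_notMem_Icc I hij₀ hr hi (hwin h)).1 h₂
  have hmeet := (eq_iff_eq_crossTime (hα.ne hi₀j₀)).2 (hsep _ i₀ hi₀ j₀ hj₀ hi₀j₀).symm
  linarith

noncomputable def sweepPos (r : ℕ) (i : ι) : ℕ := rank (fun j => α j * I.s r + β j) i + 1

noncomputable def sweepLo (r : ℕ) : ℕ :=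
  if h : (crossing α β (I.t r)).Nonempty then (crossing α β (I.t r)).inf' h (sweepPos I (r - 1))
  else 0

noncomputable def sweepHi (r : ℕ) : ℕ := (crossing α β (I.t r)).sup (sweepPos I (r - 1))

lemma sweepPos_injective (hα : Function.Injective α) {r : ℕ} (hr : r ≤ #(crossTimes α β)) :
    Function.Injective (sweepPos I r) := fun _ _ h =>
  rank_injective (injective_of_crossTimes hα fun hx => I.ne_s hx hr rfl) (Nat.add_right_cancel h)

lemma sweepPos_le (r : ℕ) (i : ι) : sweepPos I r i ≤ Fintype.card ι :=
  rank_lt_card _ i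

lemma mem_crossing_iff_sweepPos (hsep : CrossingTimesSeparated α β)
    (hα : Function.Injective α) {r : ℕ} (hr : 1 ≤ r ∧ r ≤ #(crossTimes α β)) (i : ι) :
    i ∈ crossing α β (I.t r) ↔
      sweepLo I r ≤ sweepPos I (r - 1) i ∧ sweepPos I (r - 1) i ≤ sweepHi I r := by
  obtain ⟨k, -, -, hk, -⟩ := exists_pair_mem_crossing I hr
  have hne : (crossing α β (I.t r)).Nonempty := ⟨k, hk⟩
  rw [sweepLo, dif_pos hne]
  refine ⟨fun hi => ⟨inf'_le _ hi, le_sup (f := sweepPos I (r - 1)) hi⟩, fun ⟨hlo, hhi⟩ => ?_⟩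
  obtain ⟨i₀, hi₀, hlo₀⟩ := exists_mem_eq_inf' hne (sweepPos I (r - 1))
  obtain ⟨j₀, hj₀, hhi₀⟩ := exists_mem_eq_sup _ hne (sweepPos I (r - 1))
  rw [hlo₀] at hlo
  rw [sweepHi, hhi₀] at hhi
  have hinj := sweepPos_injective I hα (r := r - 1) (by omega)
  rcases hlo.lt_or_eq with hlo | hlo
  · rcases hhi.lt_or_eq with hhi | hhi
    · exact mem_crossing_of_between I hsep hα hr hi₀ hj₀
        (rank_lt_rank_iff.1 (Nat.lt_of_add_lt_add_right hlo))
        (rank_lt_rank_iff.1 (Nat.lt_of_add_lt_add_right hhi))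
    · exact hinj hhi ▸ hj₀
  · exact hinj hlo ▸ hi₀

lemma sweepPos_of_notMem (hα : Function.Injective α) {r : ℕ}
    (hr : 1 ≤ r ∧ r ≤ #(crossTimes α β)) {i : ι} (hi : i ∉ crossing α β (I.t r)) :
    sweepPos I r i = sweepPos I (r - 1) i := by
  unfold sweepPos rank
  congr 2
  ext j
  rcases eq_or_ne j i with rfl | hji
  · simp
  · simp only [mem_filter, mem_univ, true_and]
    refine (lt_iff_lt_of_crossTime_notMem (hα.ne hji) (I.s_le_s (Nat.sub_le r 1) hr.2) ?_).symm
    rw [crossTime_comm]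
    exact crossTime_notMem_Icc I hji.symm hr hi

lemma sweepLo_sweepHi_bounds (hα : Function.Injective α) {r : ℕ}
    (hr : 1 ≤ r ∧ r ≤ #(crossTimes α β)) :
    1 ≤ sweepLo I r ∧ sweepLo I r < sweepHi I r ∧ sweepHi I r ≤ Fintype.card ι := by
  obtain ⟨i, j, hij, hi, hj⟩ := exists_pair_mem_crossing I hr
  have hne : (crossing α β (I.t r)).Nonempty := ⟨i, hi⟩
  have hpos := (sweepPos_injective I hα (r := r - 1) (by omega)).ne hij
  obtain ⟨i₀, -, hlo₀⟩ := exists_mem_eq_inf' hne (sweepPos I (r - 1))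
  obtain ⟨j₀, -, hhi₀⟩ := exists_mem_eq_sup _ hne (sweepPos I (r - 1))
  have := inf'_le (sweepPos I (r - 1)) hi
  have := inf'_le (sweepPos I (r - 1)) hj
  have := le_sup (f := sweepPos I (r - 1)) hi
  have := le_sup (f := sweepPos I (r - 1)) hj
  have := sweepPos_le I (r - 1) j₀
  have : 1 ≤ sweepPos I (r - 1) i₀ := Nat.le_add_left 1 _
  rw [sweepLo, dif_pos hne, sweepHi]
  omega

lemma sweepPos_last_add_sweepPos_zero (hα : Function.Injective α) (i : ι) :
    sweepPos I #(crossTimes α β) i + sweepPos I 0 i = Fintype.card ι + 1 := by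
  have := rank_add_rank_of_reverse (injective_of_crossTimes hα fun hx => I.ne_s hx
    (Nat.zero_le _) rfl) (i := i) (g := fun j => α j * I.s #(crossTimes α β) + β j)
    fun j hji => (lt_iff_lt_of_crossTime_mem (hα.ne hji.symm)
      (I.mem_Ioo (crossTime_mem_crossTimes hji.symm))).symm
  simp only [sweepPos]
  omega

lemma existsUnique_crossing (hsep : CrossingTimesSeparated α β) {i j : ι} (hij : i ≠ j) :
    ∃! r, (1 ≤ r ∧ r ≤ #(crossTimes α β)) ∧
      i ∈ crossing α β (I.t r) ∧ j ∈ crossing α β (I.t r) := by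
  obtain ⟨r, hr, ht⟩ := I.exists_t_eq _ (crossTime_mem_crossTimes hij)
  refine ⟨r, ⟨hr, ht ▸ mem_crossing hij, ht ▸ crossTime_comm j i ▸ mem_crossing hij.symm⟩, ?_⟩
  rintro r' ⟨hr', hi, hj⟩
  exact I.t_injOn (by simpa using hr') (by simpa using hr)
    ((hsep _ i hi j hj hij).symm.trans ht.symm)

noncomputable def sweepDiagram (hα : Function.Injective α) (hsep : CrossingTimesSeparated α β)
    (hn : 3 ≤ Fintype.card ι) (hV : 2 ≤ #(crossTimes α β)) : WiringDiagram ι where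
  n := Fintype.card ι
  V := #(crossTimes α β)
  pos := sweepPos I
  block r := crossing α β (I.t r)
  lo := sweepLo I
  hi := sweepHi I
  three_le_n := hn
  two_le_V := hV
  card_eq := rfl
  pos_injective _ hs := sweepPos_injective I hα hs
  pos_bounds _ _ i := ⟨Nat.le_add_left 1 _, sweepPos_le I _ i⟩
  mem_block_iff _ h₁ h₂ := mem_crossing_iff_sweepPos I hsep hα ⟨h₁, h₂⟩
  pos_of_notMem_block _ h₁ h₂ _ := sweepPos_of_notMem I hα ⟨h₁, h₂⟩
  block_bounds _ h₁ h₂ := sweepLo_sweepHi_bounds I hα ⟨h₁, h₂⟩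
  pos_last_add_pos_zero := sweepPos_last_add_sweepPos_zero I hα
  existsUnique_block _ _ := existsUnique_crossing I hsep

end SweepDiagram

theorem sum_card_crossing_le {ι : Type*} [Fintype ι] {α β : ι → ℝ} (hα : Function.Injective α)
    (hsep : CrossingTimesSeparated α β) (hn : 3 ≤ Fintype.card ι) (hV : 2 ≤ #(crossTimes α β)) :
    ∑ x ∈ crossTimes α β, #(crossing α β x) ≤ 3 * #(crossTimes α β) - 3 := by
  obtain ⟨I⟩ := Interlacing.nonempty (crossTimes α β)
  calc ∑ x ∈ crossTimes α β, #(crossing α β x)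
      = ∑ r ∈ Icc 1 #(crossTimes α β), #(crossing α β (I.t r)) := by
        conv_lhs => rw [← I.image_t]
        exact sum_image I.t_injOn
    _ ≤ _ := (sweepDiagram I hα hsep hn hV).sum_card_block_le

section Geometry

open Module

lemma exists_forall_notMem_of_finrank_lt {K E : Type*} [Field K] [Infinite K] [AddCommGroup E]
    [Module K E] [FiniteDimensional K E] (S : Finset (Submodule K E))
    (hS : ∀ W ∈ S, finrank K W < finrank K E) : ∃ x, ∀ W ∈ S, x ∉ W := by
  obtain ⟨x, hx⟩ := Submodule.exists_forall_notMem_of_forall_ne_top (fun W : S => W.1)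
    fun W h => (hS W.1 W.2).ne (by rw [h, finrank_top])
  exact ⟨x, fun W hW => hx ⟨W, hW⟩⟩

lemma IsProjPoint.eq_of_le {p q : Submodule ℝ (Fin 3 → ℝ)} (hp : IsProjPoint p)
    (hq : IsProjPoint q) (h : p ≤ q) : p = q :=
  Submodule.eq_of_le_of_finrank_eq h (hp.trans hq.symm)

lemma IsProjPoint.eq_of_mem {p q : Submodule ℝ (Fin 3 → ℝ)} (hp : IsProjPoint p)
    (hq : IsProjPoint q) {m : Fin 3 → ℝ} (hm : m ≠ 0) (hmp : m ∈ p) (hmq : m ∈ q) : p = q := by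
  have hm1 : IsProjPoint (ℝ ∙ m) := finrank_span_singleton hm
  exact ((hm1.eq_of_le hp ((Submodule.span_singleton_le_iff_mem _ _).2 hmp)).symm.trans
    (hm1.eq_of_le hq ((Submodule.span_singleton_le_iff_mem _ _).2 hmq)))

lemma IsProjLine.isProjPoint_inf {l₁ l₂ : Submodule ℝ (Fin 3 → ℝ)} (h₁ : IsProjLine l₁)
    (h₂ : IsProjLine l₂) (hne : l₁ ≠ l₂) : IsProjPoint (l₁ ⊓ l₂) := by
  have hlt : l₁ < l₁ ⊔ l₂ := lt_of_le_of_ne le_sup_left fun h =>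
    hne (Submodule.eq_of_le_of_finrank_eq (h ▸ le_sup_right) (h₂.trans h₁.symm)).symm
  have := Submodule.finrank_lt_finrank_of_lt hlt
  have := (l₁ ⊔ l₂).finrank_le.trans_eq (finrank_fin_fun ℝ)
  have := Submodule.finrank_sup_add_finrank_inf_eq l₁ l₂
  unfold IsProjLine at h₁ h₂
  unfold IsProjPoint
  omega

noncomputable def vertices (L : Finset (Submodule ℝ (Fin 3 → ℝ))) :
    Finset (Submodule ℝ (Fin 3 → ℝ)) :=
  L.offDiag.image fun q => q.1 ⊓ q.2

lemma inf_mem_vertices {L : Finset (Submodule ℝ (Fin 3 → ℝ))} {l₁ l₂ : Submodule ℝ (Fin 3 → ℝ)}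
    (h₁ : l₁ ∈ L) (h₂ : l₂ ∈ L) (hne : l₁ ≠ l₂) : l₁ ⊓ l₂ ∈ vertices L :=
  mem_image.2 ⟨(l₁, l₂), mem_offDiag.2 ⟨h₁, h₂, hne⟩, rfl⟩

lemma isProjPoint_of_mem_vertices {L : Finset (Submodule ℝ (Fin 3 → ℝ))}
    (hL : ∀ l ∈ L, IsProjLine l) {v : Submodule ℝ (Fin 3 → ℝ)} (hv : v ∈ vertices L) :
    IsProjPoint v := by
  obtain ⟨⟨l₁, l₂⟩, h, rfl⟩ := mem_image.1 hv
  obtain ⟨h₁, h₂, hne⟩ := mem_offDiag.1 h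
  exact (hL l₁ h₁).isProjPoint_inf (hL l₂ h₂) hne

/-- Coordinates `x = b.repr m` in which no vertex of `L` lies on the line `x 0 = 0`, distinct
vertices have distinct slopes `x 1 / x 0`, and the point `b 2` lies on no line of `L`. -/
structure IsGenericBasis (L : Finset (Submodule ℝ (Fin 3 → ℝ)))
    (b : Basis (Fin 3) ℝ (Fin 3 → ℝ)) : Prop where
  notMem_line : ∀ l ∈ L, b 2 ∉ l
  eq_zero_of_mem_vertex : ∀ v ∈ vertices L, ∀ m ∈ v, b.repr m 0 = 0 → m = 0
  eq_of_repr_eq : ∀ v ∈ vertices L, ∀ w ∈ vertices L, ∀ m ∈ v, ∀ m' ∈ w,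
    b.repr m 0 = 1 → b.repr m' 0 = 1 → b.repr m 1 = b.repr m' 1 → v = w

lemma finrank_sup_le_two {v w : Submodule ℝ (Fin 3 → ℝ)} (hv : finrank ℝ v ≤ 1)
    (hw : finrank ℝ w ≤ 1) : finrank ℝ (v ⊔ w : Submodule ℝ (Fin 3 → ℝ)) ≤ 2 :=
  (Submodule.finrank_add_le_finrank_add_finrank v w).trans (by omega)

lemma Module.Basis.eq_repr_smul_add {b : Basis (Fin 3) ℝ (Fin 3 → ℝ)} (m : Fin 3 → ℝ) :
    m = b.repr m 0 • b 0 + b.repr m 1 • b 1 + b.repr m 2 • b 2 := by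
  conv_lhs => rw [← b.sum_repr m]
  exact Fin.sum_univ_three _

lemma Module.Basis.eq_zero_of_repr_eq_zero {b : Basis (Fin 3) ℝ (Fin 3 → ℝ)}
    {v : Submodule ℝ (Fin 3 → ℝ)} (h₂ : b 2 ∉ v) (h₁ : b 1 ∉ (ℝ ∙ b 2) ⊔ v) {m : Fin 3 → ℝ}
    (hm : m ∈ v) (h0 : b.repr m 0 = 0) : m = 0 := by
  by_contra hm0
  have hdec := b.eq_repr_smul_add m
  set c₁ := b.repr m 1
  set c₂ := b.repr m 2
  rw [h0, zero_smul, zero_add] at hdec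
  by_cases hc₁ : c₁ = 0
  · rw [hc₁, zero_smul, zero_add] at hdec
    have hc₂ : c₂ ≠ 0 := fun h => hm0 (by rw [hdec, h, zero_smul])
    refine h₂ ?_
    rw [show b 2 = c₂⁻¹ • m by rw [hdec, smul_smul, inv_mul_cancel₀ hc₂, one_smul]]
    exact Submodule.smul_mem _ _ hm
  · refine h₁ ?_
    rw [show b 1 = c₁⁻¹ • (m - c₂ • b 2) by
      rw [hdec, add_sub_cancel_right, smul_smul, inv_mul_cancel₀ hc₁, one_smul]]
    exact Submodule.smul_mem _ _ (Submodule.sub_mem _ (Submodule.mem_sup_right hm)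
      (Submodule.mem_sup_left (Submodule.smul_mem _ _ (Submodule.mem_span_singleton_self _))))

lemma Module.Basis.eq_of_repr_eq {b : Basis (Fin 3) ℝ (Fin 3 → ℝ)} {v w : Submodule ℝ (Fin 3 → ℝ)}
    (hv : IsProjPoint v) (hw : IsProjPoint w) (h₂ : b 2 ∉ v ⊔ w) {m m' : Fin 3 → ℝ} (hm : m ∈ v)
    (hm' : m' ∈ w) (h0 : b.repr m 0 = 1) (h0' : b.repr m' 0 = 1)
    (h1 : b.repr m 1 = b.repr m' 1) : v = w := by
  have hdiff : m - m' = (b.repr m 2 - b.repr m' 2) • b 2 := by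
    have e := b.eq_repr_smul_add m
    have e' := b.eq_repr_smul_add m'
    rw [h0, h1] at e
    rw [h0'] at e'
    linear_combination (norm := module) e - e'
  by_cases hc : b.repr m 2 - b.repr m' 2 = 0
  · rw [hc, zero_smul, sub_eq_zero] at hdiff
    exact hv.eq_of_mem hw (fun h => by simp [h] at h0) hm (hdiff ▸ hm')
  · refine absurd ?_ h₂
    rw [show b 2 = (b.repr m 2 - b.repr m' 2)⁻¹ • (m - m') by
      rw [hdiff, smul_smul, inv_mul_cancel₀ hc, one_smul]]
    exact Submodule.smul_mem _ _
      (Submodule.sub_mem _ (Submodule.mem_sup_left hm) (Submodule.mem_sup_right hm'))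

/-- Take `b 2` off the lines of `L` and the joins of its vertices, then `b 1` off the joins of
`b 2` with the vertices, then `b 0` off the span of `b 1` and `b 2`. -/
lemma exists_isGenericBasis {L : Finset (Submodule ℝ (Fin 3 → ℝ))}
    (hL : ∀ l ∈ L, IsProjLine l) : ∃ b, IsGenericBasis L b := by
  have hV : ∀ {v}, v ∈ vertices L → IsProjPoint v := isProjPoint_of_mem_vertices hL
  have hlt : ∀ {W : Submodule ℝ (Fin 3 → ℝ)}, finrank ℝ W ≤ 2 →
      finrank ℝ W < finrank ℝ (Fin 3 → ℝ) := fun h => by rw [finrank_fin_fun]; omega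
  have hspan (x : Fin 3 → ℝ) : finrank ℝ (ℝ ∙ x) ≤ 1 :=
    (finrank_span_le_card ({x} : Set (Fin 3 → ℝ))).trans (by simp)
  obtain ⟨o, ho⟩ := exists_forall_notMem_of_finrank_lt
    (insert ⊥ (L ∪ (vertices L ×ˢ vertices L).image fun p => p.1 ⊔ p.2)) fun W hW => by
      simp only [mem_insert, mem_union, mem_image, mem_product] at hW
      rcases hW with rfl | hW | ⟨⟨v, w⟩, ⟨hv, hw⟩, rfl⟩
      · exact hlt (by simp)
      · exact hlt (hL W hW).le
      · exact hlt (finrank_sup_le_two (hV hv).le (hV hw).le)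
  obtain ⟨q, hq⟩ := exists_forall_notMem_of_finrank_lt
    (insert (ℝ ∙ o) ((vertices L).image fun v => (ℝ ∙ o) ⊔ v)) fun W hW => by
      simp only [mem_insert, mem_image] at hW
      rcases hW with rfl | ⟨v, hv, rfl⟩
      · exact hlt ((hspan o).trans (by omega))
      · exact hlt (finrank_sup_le_two (hspan o) (hV hv).le)
  obtain ⟨p, hp⟩ := exists_forall_notMem_of_finrank_lt {(ℝ ∙ q) ⊔ (ℝ ∙ o)} fun W hW => by
    rw [mem_singleton.1 hW]
    exact hlt (finrank_sup_le_two (hspan q) (hspan o))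
  have hoV : ∀ v ∈ vertices L, ∀ w ∈ vertices L, o ∉ v ⊔ w := fun v hv w hw =>
    ho _ (mem_insert_of_mem (mem_union_right _
      (mem_image.2 ⟨(v, w), mem_product.2 ⟨hv, hw⟩, rfl⟩)))
  have hli : LinearIndependent ℝ ![p, q, o] := by
    rw [show ![p, q, o] = Fin.cons p ![q, o] from rfl, linearIndependent_finCons,
      linearIndependent_fin2]
    refine ⟨⟨fun h => ho ⊥ (mem_insert_self _ _) (by simpa using h), fun a h => ?_⟩, ?_⟩
    · refine hq _ (mem_insert_self _ _) ?_
      rw [← (by simpa using h : a • o = q)]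
      exact Submodule.smul_mem _ a (Submodule.mem_span_singleton_self o)
    · simpa [Matrix.range_cons, Submodule.span_insert, sup_comm] using hp _ (mem_singleton_self _)
  set b := basisOfLinearIndependentOfCardEqFinrank hli (by simp)
  have hb : ⇑b = ![p, q, o] := coe_basisOfLinearIndependentOfCardEqFinrank _ _
  refine ⟨b, ⟨fun l hl => by simpa [hb] using ho l (by simp [hl]), fun v hv m hm h0 =>
    b.eq_zero_of_repr_eq_zero ?_ ?_ hm h0, fun v hv w hw m hm m' hm' h0 h0' h1 =>
    b.eq_of_repr_eq (hV hv) (hV hw) (by simpa [hb] using hoV v hv w hw) hm hm' h0 h0' h1⟩⟩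
  · simpa [hb] using hoV v hv v hv
  · simpa [hb] using hq _ (mem_insert_of_mem (mem_image_of_mem _ hv))

lemma exists_graph {b : Basis (Fin 3) ℝ (Fin 3 → ℝ)} {l : Submodule ℝ (Fin 3 → ℝ)}
    (hl : IsProjLine l) (hb : b 2 ∉ l) :
    ∃ a c : ℝ, ∀ m, b.repr m 0 = 1 → (m ∈ l ↔ b.repr m 2 = a * b.repr m 1 + c) := by
  obtain ⟨φ, hφ, hmap⟩ := Submodule.exists_dual_map_eq_bot_of_notMem hb inferInstance
  have hker : LinearMap.ker φ = l := by
    have hle : l ≤ LinearMap.ker φ := fun x hx => by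
      simpa [hmap] using Submodule.mem_map_of_mem (f := φ) hx
    refine (Submodule.eq_of_le_of_finrank_le hle ?_).symm
    have := Submodule.finrank_lt fun h : LinearMap.ker φ = ⊤ =>
      hφ (LinearMap.mem_ker.1 (h ▸ Submodule.mem_top))
    rw [finrank_fin_fun] at this
    rw [show finrank ℝ l = 2 from hl]
    omega
  refine ⟨-φ (b 1) / φ (b 2), -φ (b 0) / φ (b 2), fun m hm => ?_⟩
  have hφm := congrArg φ (b.eq_repr_smul_add m)
  simp only [map_add, map_smul, smul_eq_mul] at hφm
  rw [← hker, LinearMap.mem_ker, hφm, hm]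
  field_simp
  constructor <;> intro h <;> linarith

lemma two_le_card_vertices {L : Finset (Submodule ℝ (Fin 3 → ℝ))} (hL : ∀ l ∈ L, IsProjLine l)
    (hcard : 2 ≤ #L) (hnc : ¬ ∃ q, IsProjPoint q ∧ ∀ l ∈ L, q ≤ l) : 2 ≤ #(vertices L) := by
  by_contra! h
  have hother : ∀ l ∈ L, ∃ l' ∈ L, l ≠ l' := fun l hl => by
    obtain ⟨l', hl', hne⟩ := exists_mem_ne (show 1 < #L by omega) l
    exact ⟨l', hl', hne.symm⟩
  obtain ⟨l₁, hl₁⟩ := card_pos.1 (show 0 < #L by omega)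
  obtain ⟨l₂, hl₂, hne⟩ := hother l₁ hl₁
  refine hnc ⟨l₁ ⊓ l₂, (hL l₁ hl₁).isProjPoint_inf (hL l₂ hl₂) hne, fun l hl => ?_⟩
  obtain ⟨l', hl', hne'⟩ := hother l hl
  rw [card_le_one.1 (by omega) _ (inf_mem_vertices hl₁ hl₂ hne) _ (inf_mem_vertices hl hl' hne')]
  exact inf_le_left

namespace IsGenericBasis

variable {L : Finset (Submodule ℝ (Fin 3 → ℝ))} {b : Basis (Fin 3) ℝ (Fin 3 → ℝ)}
  (hb : IsGenericBasis L b) (hL : ∀ l ∈ L, IsProjLine l)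

include hb hL in
lemma exists_mem_repr_eq_one {v : Submodule ℝ (Fin 3 → ℝ)} (hv : v ∈ vertices L) :
    ∃ m ∈ v, b.repr m 0 = 1 := by
  have hne : v ≠ ⊥ := fun h => by
    have h1 := isProjPoint_of_mem_vertices hL hv
    rw [h, IsProjPoint, finrank_bot] at h1
    exact zero_ne_one h1
  obtain ⟨u, hu, hu0⟩ := Submodule.exists_mem_ne_zero_of_ne_bot hne
  have h0 : b.repr u 0 ≠ 0 := fun h => hu0 (hb.eq_zero_of_mem_vertex v hv u hu h)
  exact ⟨(b.repr u 0)⁻¹ • u, Submodule.smul_mem _ _ hu, by simp [h0]⟩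

variable {α β : L → ℝ}
  (hgraph : ∀ (i : L) m, b.repr m 0 = 1 → (m ∈ (i : Submodule ℝ (Fin 3 → ℝ)) ↔
    b.repr m 2 = α i * b.repr m 1 + β i))

include hb hL hgraph in
/-- Distinct lines of `L` meet at a vertex, which is not at infinity, so they are not
parallel. -/
lemma injective_slope : Function.Injective α := by
  intro i j h
  by_contra hij
  have hv := inf_mem_vertices i.2 j.2 (Subtype.coe_ne_coe.2 hij)
  obtain ⟨m, hm, h0⟩ := hb.exists_mem_repr_eq_one hL hv
  have hi := (hgraph i m h0).1 (Submodule.mem_inf.1 hm).1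
  have hj := (hgraph j m h0).1 (Submodule.mem_inf.1 hm).2
  set m' := m + b 1 + α i • b 2
  have hc : b.repr m' 0 = 1 ∧ b.repr m' 1 = b.repr m 1 + 1 ∧ b.repr m' 2 = b.repr m 2 + α i := by
    simp [m', h0]
  have hm' : m' ∈ (i : Submodule ℝ (Fin 3 → ℝ)) ⊓ j := by
    refine Submodule.mem_inf.2 ⟨(hgraph i m' hc.1).2 ?_, (hgraph j m' hc.1).2 ?_⟩ <;>
      rw [hc.2.1, hc.2.2] <;> linarith
  have := hb.eq_zero_of_mem_vertex _ hv (m' - m) (Submodule.sub_mem _ hm' hm) (by simp [m', h0])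
  simpa [m'] using congrArg (fun x => b.repr x 1) this

include hb hL hgraph in
lemma crossTime_eq_repr {i j : L} (hij : i ≠ j) {m : Fin 3 → ℝ}
    (hm : m ∈ (i : Submodule ℝ (Fin 3 → ℝ)) ⊓ j) (h0 : b.repr m 0 = 1) :
    crossTime α β i j = b.repr m 1 :=
  ((eq_iff_eq_crossTime ((hb.injective_slope hL hgraph).ne hij)).1 <|
    ((hgraph i m h0).1 (Submodule.mem_inf.1 hm).1).symm.trans
      ((hgraph j m h0).1 (Submodule.mem_inf.1 hm).2)).symm

include hb hL hgraph in
lemma mem_crossing_iff {v : Submodule ℝ (Fin 3 → ℝ)} (hv : v ∈ vertices L) {m : Fin 3 → ℝ}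
    (hm : m ∈ v) (h0 : b.repr m 0 = 1) (i : L) :
    i ∈ crossing α β (b.repr m 1) ↔ v ≤ i := by
  simp only [crossing, mem_filter, mem_univ, true_and]
  constructor
  · rintro ⟨j, hji, hτ⟩
    have hv' := inf_mem_vertices i.2 j.2 (Subtype.coe_ne_coe.2 hji.symm)
    obtain ⟨m', hm', h0'⟩ := hb.exists_mem_repr_eq_one hL hv'
    rw [hb.crossTime_eq_repr hL hgraph hji.symm hm' h0'] at hτ
    rw [← hb.eq_of_repr_eq _ hv' v hv m' hm' m hm h0' h0 hτ]
    exact inf_le_left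
  · intro hvi
    obtain ⟨⟨l₁, l₂⟩, hl, rfl⟩ := mem_image.1 hv
    obtain ⟨hl₁, hl₂, hne⟩ := mem_offDiag.1 hl
    obtain ⟨k, hk, hki, hvk⟩ : ∃ k ∈ L, k ≠ i ∧ l₁ ⊓ l₂ ≤ k := by
      by_cases h : l₁ = i
      · exact ⟨l₂, hl₂, fun h' => hne (h.trans h'.symm), inf_le_right⟩
      · exact ⟨l₁, hl₁, h, inf_le_left⟩
    have hik : (i : Submodule ℝ (Fin 3 → ℝ)) ≠ k := Ne.symm hki
    have heq := (isProjPoint_of_mem_vertices hL hv).eq_of_le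
      ((hL i i.2).isProjPoint_inf (hL k hk) hik) (le_inf hvi hvk)
    refine ⟨⟨k, hk⟩, fun h => hki (congrArg Subtype.val h), ?_⟩
    exact hb.crossTime_eq_repr hL hgraph (fun h => hik (congrArg Subtype.val h)) (heq ▸ hm) h0

include hb hL hgraph in
lemma crossingTimesSeparated : CrossingTimesSeparated α β := by
  intro t i hi j hj hij
  obtain ⟨k, hki, rfl⟩ : ∃ k, k ≠ i ∧ crossTime α β i k = t := by simpa [crossing] using hi
  have hv := inf_mem_vertices i.2 k.2 (Subtype.coe_ne_coe.2 hki.symm)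
  obtain ⟨m, hm, h0⟩ := hb.exists_mem_repr_eq_one hL hv
  rw [hb.crossTime_eq_repr hL hgraph hki.symm hm h0] at hj ⊢
  have heq := (isProjPoint_of_mem_vertices hL hv).eq_of_le
    ((hL i i.2).isProjPoint_inf (hL j j.2) (Subtype.coe_ne_coe.2 hij))
    (le_inf inf_le_left ((hb.mem_crossing_iff hL hgraph hv hm h0 j).1 hj))
  exact hb.crossTime_eq_repr hL hgraph hij (heq ▸ hm) h0

include hb hL hgraph in
/-- The crossing times are the `x 1`-coordinates of the vertices in the chart `x 0 = 1`. -/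
lemma exists_injOn_image_eq_crossTimes : ∃ τ : Submodule ℝ (Fin 3 → ℝ) → ℝ,
    Set.InjOn τ (vertices L) ∧ (vertices L).image τ = crossTimes α β ∧
      ∀ v ∈ vertices L, #(crossing α β (τ v)) = pointDeg L v := by
  choose! pt hpt h0 using fun v (hv : v ∈ vertices L) => hb.exists_mem_repr_eq_one hL hv
  refine ⟨fun v => b.repr (pt v) 1, fun v hv w hw h =>
    hb.eq_of_repr_eq v hv w hw _ (hpt v hv) _ (hpt w hw) (h0 v hv) (h0 w hw) h, ?_, fun v hv => ?_⟩
  · ext x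
    simp only [mem_image, crossTimes, mem_offDiag, mem_univ, true_and]
    constructor
    · rintro ⟨v, hv, rfl⟩
      obtain ⟨⟨l₁, l₂⟩, hl, rfl⟩ := mem_image.1 hv
      obtain ⟨hl₁, hl₂, hne⟩ := mem_offDiag.1 hl
      have hij : (⟨l₁, hl₁⟩ : L) ≠ ⟨l₂, hl₂⟩ := fun h => hne (congrArg Subtype.val h)
      exact ⟨(⟨l₁, hl₁⟩, ⟨l₂, hl₂⟩), hij, hb.crossTime_eq_repr hL hgraph hij (hpt _ hv) (h0 _ hv)⟩
    · rintro ⟨⟨i, j⟩, hij, rfl⟩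
      have hv := inf_mem_vertices i.2 j.2 (Subtype.coe_ne_coe.2 hij)
      exact ⟨_, hv, (hb.crossTime_eq_repr hL hgraph hij (hpt _ hv) (h0 _ hv)).symm⟩
  · have hmem := hb.mem_crossing_iff hL hgraph hv (hpt v hv) (h0 v hv)
    refine card_nbij (fun i => i.1) (fun i hi => mem_filter.2 ⟨i.2, (hmem i).1 hi⟩)
      (fun i _ j _ h => Subtype.ext h) fun l hl => ?_
    obtain ⟨hl, hvl⟩ := mem_filter.1 hl
    exact ⟨⟨l, hl⟩, (hmem ⟨l, hl⟩).2 hvl, rfl⟩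

end IsGenericBasis

/-- Melchior's inequality. -/
theorem sum_pointDeg_vertices_le {L : Finset (Submodule ℝ (Fin 3 → ℝ))}
    (hL : ∀ l ∈ L, IsProjLine l) (hcard : 3 ≤ #L)
    (hnc : ¬ ∃ q, IsProjPoint q ∧ ∀ l ∈ L, q ≤ l) :
    ∑ v ∈ vertices L, pointDeg L v ≤ 3 * #(vertices L) - 3 := by
  obtain ⟨b, hb⟩ := exists_isGenericBasis hL
  choose α β hgraph using fun i : L => exists_graph (hL i i.2) (hb.notMem_line i i.2)
  obtain ⟨τ, hτ, himage, hdeg⟩ := hb.exists_injOn_image_eq_crossTimes hL hgraph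
  have hV := two_le_card_vertices hL (by omega) hnc
  have := sum_card_crossing_le (hb.injective_slope hL hgraph) (hb.crossingTimesSeparated hL hgraph)
    (by simpa using hcard) (by rwa [← himage, card_image_of_injOn hτ])
  rwa [← himage, sum_image hτ, card_image_of_injOn hτ, sum_congr rfl hdeg] at this

end Geometry

section Counting

variable {L : Finset (Submodule ℝ (Fin 3 → ℝ))}

lemma two_le_pointDeg {v : Submodule ℝ (Fin 3 → ℝ)} (hv : v ∈ vertices L) : 2 ≤ pointDeg L v := by
  obtain ⟨⟨l₁, l₂⟩, hl, rfl⟩ := mem_image.1 hv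
  obtain ⟨hl₁, hl₂, hne⟩ := mem_offDiag.1 hl
  exact one_lt_card.2 ⟨l₁, mem_filter.2 ⟨hl₁, inf_le_left⟩, l₂, mem_filter.2 ⟨hl₂, inf_le_right⟩,
    hne⟩

lemma subset_vertices {P : Finset (Submodule ℝ (Fin 3 → ℝ))} (hP : ∀ p ∈ P, IsProjPoint p)
    (hL : ∀ l ∈ L, IsProjLine l) (hdeg : ∀ p ∈ P, 2 ≤ pointDeg L p) : P ⊆ vertices L := by
  intro p hp
  obtain ⟨l₁, hl₁, l₂, hl₂, hne⟩ := one_lt_card.1 (hdeg p hp)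
  rw [mem_filter] at hl₁ hl₂
  rw [(hP p hp).eq_of_le ((hL _ hl₁.1).isProjPoint_inf (hL _ hl₂.1) hne) (le_inf hl₁.2 hl₂.2)]
  exact inf_mem_vertices hl₁.1 hl₂.1 hne

lemma sum_pointDeg_mul_pred (hL : ∀ l ∈ L, IsProjLine l) :
    ∑ v ∈ vertices L, pointDeg L v * (pointDeg L v - 1) = #L * (#L - 1) := by
  have hfiber : ∀ v ∈ vertices L,
      #{q ∈ L.offDiag | q.1 ⊓ q.2 = v} = pointDeg L v * (pointDeg L v - 1) := fun v hv => by
    have : ({q ∈ L.offDiag | q.1 ⊓ q.2 = v} : Finset _) = {l ∈ L | v ≤ l}.offDiag := by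
      ext ⟨l₁, l₂⟩
      simp only [mem_filter, mem_offDiag]
      constructor
      · rintro ⟨⟨hl₁, hl₂, hne⟩, rfl⟩
        exact ⟨⟨hl₁, inf_le_left⟩, ⟨hl₂, inf_le_right⟩, hne⟩
      · rintro ⟨⟨hl₁, hv₁⟩, ⟨hl₂, hv₂⟩, hne⟩
        exact ⟨⟨hl₁, hl₂, hne⟩, ((isProjPoint_of_mem_vertices hL hv).eq_of_le
          ((hL _ hl₁).isProjPoint_inf (hL _ hl₂) hne) (le_inf hv₁ hv₂)).symm⟩
    rw [this, offDiag_card, Nat.mul_sub_one, pointDeg]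
  rw [← sum_congr rfl hfiber, ← card_eq_sum_card_fiberwise fun q hq =>
    inf_mem_vertices (mem_offDiag.1 hq).1 (mem_offDiag.1 hq).2.1 (mem_offDiag.1 hq).2.2,
    offDiag_card, Nat.mul_sub_one]

lemma sum_pointDeg_mul_succ_le (hL : ∀ l ∈ L, IsProjLine l) (hcard : 3 ≤ #L)
    (hnc : ¬ ∃ q, IsProjPoint q ∧ ∀ l ∈ L, q ≤ l) :
    ∑ v ∈ vertices L, (pointDeg L v : ℤ) * (pointDeg L v + 1) ≤
      #L * ((#L : ℤ) - 1) + 6 * (#(vertices L) - 1) := by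
  have hcast : ∀ k : ℕ, ((k * (k - 1) : ℕ) : ℤ) = k * ((k : ℤ) - 1) := by
    rintro (_ | k) <;> simp
  have hpairs := congrArg (Nat.cast : ℕ → ℤ) (sum_pointDeg_mul_pred hL)
  push_cast [Nat.cast_sum, hcast] at hpairs
  have hmel := sum_pointDeg_vertices_le hL hcard hnc
  have hV := two_le_card_vertices hL (by omega) hnc
  zify [show 3 ≤ 3 * #(vertices L) by omega] at hmel
  have hexpand : ∑ v ∈ vertices L, (pointDeg L v : ℤ) * (pointDeg L v + 1) =
      ∑ v ∈ vertices L, (pointDeg L v : ℤ) * (pointDeg L v - 1) +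
        2 * ∑ v ∈ vertices L, (pointDeg L v : ℤ) := by
    rw [mul_sum, ← sum_add_distrib]
    exact sum_congr rfl fun _ _ => by ring
  linarith

end Counting

theorem stmt0 (P L : Finset (Submodule ℝ (Fin 3 → ℝ)))
    (hP : ∀ p ∈ P, IsProjPoint p) (hL : ∀ l ∈ L, IsProjLine l)
    (hcard : 3 ≤ L.card)
    (hnotconcurrent : ¬ ∃ q : Submodule ℝ (Fin 3 → ℝ), IsProjPoint q ∧ ∀ l ∈ L, q ≤ l)
    (hdeg : ∀ p ∈ P, 2 ≤ pointDeg L p) :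
    ∑ p ∈ P, (pointDeg L p : ℤ) * ((pointDeg L p : ℤ) + 1)
      ≤ (L.card : ℤ) * ((L.card : ℤ) - 1) + 6 * ((P.card : ℤ) - 1) := by
  have hPV := subset_vertices hP hL hdeg
  have hout : ∑ v ∈ vertices L \ P, (6 : ℤ) ≤
      ∑ v ∈ vertices L \ P, (pointDeg L v : ℤ) * ((pointDeg L v : ℤ) + 1) :=
    sum_le_sum fun v hv => by
      have : (2 : ℤ) ≤ pointDeg L v := by exact_mod_cast two_le_pointDeg (mem_sdiff.1 hv).1
      nlinarith
  rw [sum_const, card_sdiff_of_subset hPV, nsmul_eq_mul,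
    Nat.cast_sub (card_le_card hPV)] at hout
  have hsplit := sum_sdiff hPV (f := fun v => (pointDeg L v : ℤ) * ((pointDeg L v : ℤ) + 1))
  linarith [sum_pointDeg_mul_succ_le hL hcard hnotconcurrent]
end

section
/- For every n with 1 ≤ n ≤ 8, there is no geometric (n_{3|4}) configuration. -/
/- Model of the real projective plane: a point is a 1-dimensional linear subspace
of ℝ³ and a line is a 2-dimensional linear subspace of ℝ³; a point p is incident
to a line ℓ when p ≤ ℓ. -/

open scoped Classical

/-!
Counting the points joined to a point `p` gives `2 · deg p ≤ n - 1`, so for `n ≤ 8` every point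
and, dually, every line has degree 3, and `n ≥ 7`. Two points lie on at most one line, so the lines
form a partial Steiner triple system, and a short case analysis around a point `p` identifies the
configuration: for `n = 7` it is the Fano plane, for `n = 8` the Möbius–Kantor configuration.
Choosing vectors with `p = [u]` and points `[v], [u + v]` and `[w], [u + w]` on two lines through
`p`, the Fano plane forces `2 = 0`, and the Möbius–Kantor configuration forces
`α² + αβ + β² = 0` for one of its points `[α v + β w] ≠ 0`, which is impossible over `ℝ`.
-/

open Finset Submodule Module

section ProjectiveGeometry

variable {K V : Type*} [Field K] [AddCommGroup V] [Module K V]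

theorem exists_eq_span_singleton_of_finrank_eq_one {p : Submodule K V} (hp : finrank K p = 1) :
    ∃ u, u ≠ 0 ∧ p = K ∙ u := by
  obtain ⟨u, hu, hu0⟩ := p.ne_bot_iff.mp fun h => by subst h; simp at hp
  exact ⟨u, hu0, eq_span_singleton_of_mem_of_finrank_eq_one hp hu hu0⟩

theorem exists_smul_add_smul_of_span_le {a b x : V} (h : K ∙ x ≤ K ∙ a ⊔ K ∙ b) :
    ∃ s t : K, s • a + t • b = x := by
  rwa [span_singleton_le_iff_mem, ← span_insert, mem_span_pair] at h

theorem exists_span_singleton_add {u : V} {a b : Submodule K V} (ha : finrank K a = 1)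
    (hb : finrank K b = 1) (hua : K ∙ u ≠ a) (hub : K ∙ u ≠ b) (hab : a ≠ b)
    (hle : b ≤ K ∙ u ⊔ a) : ∃ v, a = K ∙ v ∧ b = K ∙ (u + v) := by
  obtain ⟨v, -, rfl⟩ := exists_eq_span_singleton_of_finrank_eq_one ha
  obtain ⟨c, hc, rfl⟩ := exists_eq_span_singleton_of_finrank_eq_one hb
  obtain ⟨s, t, rfl⟩ := exists_smul_add_smul_of_span_le hle
  have ht : t ≠ 0 := by
    rintro rfl
    rw [zero_smul, add_zero] at hc hub
    exact hub (span_singleton_smul_eq (left_ne_zero_of_smul hc).isUnit u).symm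
  have hs : s ≠ 0 := by
    rintro rfl
    rw [zero_smul, zero_add] at hab
    exact hab (span_singleton_smul_eq ht.isUnit v).symm
  refine ⟨(t / s) • v, (span_singleton_smul_eq (div_ne_zero ht hs).isUnit v).symm, ?_⟩
  rw [← span_singleton_smul_eq hs.isUnit (u + (t / s) • v), smul_add, smul_smul,
    mul_div_cancel₀ t hs]

theorem linearIndependent_three {u v w : V} (hu : u ≠ 0) (hv : v ∉ K ∙ u)
    (hw : w ∉ K ∙ u ⊔ K ∙ v) : LinearIndependent K ![u, v, w] := by
  rw [Fintype.linearIndependent_iff]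
  intro g hg
  simp only [Fin.sum_univ_three, Matrix.cons_val_zero, Matrix.cons_val_one,
    Matrix.cons_val_two, Matrix.tail_cons, Matrix.head_cons] at hg
  have h₂ : g 2 = 0 := by
    by_contra h
    refine hw ((smul_mem_iff _ h).mp ?_)
    rw [← span_insert, mem_span_pair]
    exact ⟨-g 0, -g 1, by linear_combination (norm := module) -hg⟩
  have h₁ : g 1 = 0 := by
    by_contra h
    rw [h₂, zero_smul, add_zero] at hg
    refine hv ((smul_mem_iff _ h).mp (mem_span_singleton.mpr ⟨-g 0, ?_⟩))
    linear_combination (norm := module) -hg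
  have h₀ : g 0 = 0 := by simpa [h₁, h₂, hu] using hg
  intro i
  fin_cases i <;> assumption

theorem LinearIndependent.eq_of_triple {u v w : V} (h : LinearIndependent K ![u, v, w])
    {a b c a' b' c' : K} (e : a • u + b • v + c • w = a' • u + b' • v + c' • w) :
    a = a' ∧ b = b' ∧ c = c' := by
  have := Fintype.linearIndependent_iff.mp h ![a - a', b - b', c - c'] (by
    simp only [Fin.sum_univ_three, Matrix.cons_val_zero, Matrix.cons_val_one,
      Matrix.cons_val_two, Matrix.tail_cons, Matrix.head_cons]
    linear_combination (norm := module) e)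
  exact ⟨sub_eq_zero.mp (this 0), sub_eq_zero.mp (this 1), sub_eq_zero.mp (this 2)⟩

theorem LinearIndependent.not_fano (h2 : (2 : K) ≠ 0) {u v w x y : V}
    (h : LinearIndependent K ![u, v, w]) (hy : y ≠ 0)
    (hx₁ : K ∙ x ≤ K ∙ v ⊔ K ∙ w) (hx₂ : K ∙ x ≤ K ∙ (u + v) ⊔ K ∙ (u + w))
    (hy₁ : K ∙ y ≤ K ∙ v ⊔ K ∙ (u + w)) (hy₂ : K ∙ y ≤ K ∙ (u + v) ⊔ K ∙ w)
    (hy₃ : K ∙ y ≤ K ∙ u ⊔ K ∙ x) : False := by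
  obtain ⟨α, β, rfl⟩ := exists_smul_add_smul_of_span_le hx₁
  obtain ⟨γ, δ, hx⟩ := exists_smul_add_smul_of_span_le hx₂
  obtain ⟨α', β', rfl⟩ := exists_smul_add_smul_of_span_le hy₁
  obtain ⟨γ', δ', hy'⟩ := exists_smul_add_smul_of_span_le hy₂
  obtain ⟨l, m, hy''⟩ := exists_smul_add_smul_of_span_le hy₃
  -- `x` is a multiple of `v - w` and `y` one of `u + v + w`, so `y ∈ K ∙ u ⊔ K ∙ x`
  -- forces `2 • y = 0`
  obtain ⟨x₁, x₂, x₃⟩ := h.eq_of_triple (a := γ + δ) (b := γ) (c := δ) (a' := 0) (b' := α)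
    (c' := β) (by linear_combination (norm := module) hx)
  obtain ⟨y₁, y₂, -⟩ := h.eq_of_triple (a := γ') (b := γ') (c := δ') (a' := β') (b' := α')
    (c' := β') (by linear_combination (norm := module) hy')
  obtain ⟨-, z₂, z₃⟩ := h.eq_of_triple (a := l) (b := m * α) (c := m * β) (a' := β') (b' := α')
    (c' := β') (by linear_combination (norm := module) hy'')
  have hα' : α' = 0 := by
    refine (mul_eq_zero.mp (?_ : 2 * α' = 0)).resolve_left h2
    linear_combination y₁ - y₂ - z₂ - z₃ + m * x₁ - m * x₂ - m * x₃
  have hβ' : β' = 0 := by linear_combination y₂ - y₁ + hα'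
  exact hy (by rw [hα', hβ', zero_smul, zero_smul, add_zero])

theorem LinearIndependent.not_moebiusKantor [LinearOrder K] [IsStrictOrderedRing K]
    {u v w c x y : V} (h : LinearIndependent K ![u, v, w]) (hc : c ≠ 0) (hy : y ≠ 0)
    (hc₁ : K ∙ c ≤ K ∙ v ⊔ K ∙ w) (hx₁ : K ∙ x ≤ K ∙ c ⊔ K ∙ (u + v))
    (hx₂ : K ∙ x ≤ K ∙ v ⊔ K ∙ (u + w)) (hy₁ : K ∙ y ≤ K ∙ c ⊔ K ∙ (u + w))
    (hy₂ : K ∙ y ≤ K ∙ (u + v) ⊔ K ∙ w) (hy₃ : K ∙ y ≤ K ∙ u ⊔ K ∙ x) : False := by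
  obtain ⟨α, β, rfl⟩ := exists_smul_add_smul_of_span_le hc₁
  obtain ⟨s₁, s₂, rfl⟩ := exists_smul_add_smul_of_span_le hx₁
  obtain ⟨s₃, s₄, hx⟩ := exists_smul_add_smul_of_span_le hx₂
  obtain ⟨r₁, r₂, rfl⟩ := exists_smul_add_smul_of_span_le hy₁
  obtain ⟨r₃, r₄, hy'⟩ := exists_smul_add_smul_of_span_le hy₂
  obtain ⟨l, m, hy''⟩ := exists_smul_add_smul_of_span_le hy₃
  obtain ⟨x₁, -, x₃⟩ := h.eq_of_triple (a := s₂) (b := s₁ * α + s₂) (c := s₁ * β) (a' := s₄)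
    (b' := s₃) (c' := s₄) (by linear_combination (norm := module) -hx)
  obtain ⟨y₁, y₂, -⟩ := h.eq_of_triple (a := r₂) (b := r₁ * α) (c := r₁ * β + r₂) (a' := r₃)
    (b' := r₃) (c' := r₄) (by linear_combination (norm := module) -hy')
  obtain ⟨-, z₂, z₃⟩ := h.eq_of_triple (a := l + m * s₂) (b := m * (s₁ * α + s₂))
    (c := m * (s₁ * β)) (a' := r₂) (b' := r₁ * α) (c' := r₁ * β + r₂)
    (by linear_combination (norm := module) hy'')
  -- `α / β` would have to be a primitive cube root of unity
  have key : r₁ * (α ^ 2 + α * β + β ^ 2) = 0 := by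
    linear_combination -(α + β) * z₃ - (α + β) * (y₁ - y₂) + β * z₂ - β * m * (x₁ - x₃)
  rcases mul_eq_zero.mp key with hr₁ | hαβ
  · have hr₂ : r₂ = 0 := by linear_combination y₁ - y₂ + α * hr₁
    exact hy (by rw [hr₁, hr₂, zero_smul, zero_smul, add_zero])
  · have hα : α = 0 := by nlinarith [sq_nonneg (α + β), sq_nonneg α, sq_nonneg β]
    have hβ : β = 0 := by nlinarith [sq_nonneg (α + β), sq_nonneg α, sq_nonneg β]
    exact hc (by rw [hα, hβ, zero_smul, zero_smul, add_zero])

variable [FiniteDimensional K V]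

theorem sup_eq_of_finrank_eq {p q l : Submodule K V} (hp : finrank K p = 1)
    (hq : finrank K q = 1) (hpq : p ≠ q) (hl : finrank K l = 2) (hpl : p ≤ l) (hql : q ≤ l) :
    p ⊔ q = l := by
  have hinf : p ⊓ q = ⊥ := ((isAtom_iff_finrank_eq_one.mpr hp).disjoint_of_ne
    (isAtom_iff_finrank_eq_one.mpr hq) hpq).eq_bot
  have := finrank_sup_add_finrank_inf_eq p q
  rw [hinf, finrank_bot, hp, hq] at this
  exact eq_of_le_of_finrank_eq (sup_le hpl hql) (by omega)

end ProjectiveGeometry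

theorem Finset.exists_eq_insert_pair_of_card_eq_three {α : Type*} [DecidableEq α] {s : Finset α}
    {a : α} (hs : #s = 3) (ha : a ∈ s) : ∃ b c, s = {a, b, c} := by
  obtain ⟨b, c, -, hbc⟩ := card_eq_two.mp (by rw [card_erase_of_mem ha, hs] : #(s.erase a) = 2)
  exact ⟨b, c, by rw [← insert_erase ha, hbc]⟩

theorem List.Nodup.mem_of_card_le {α : Type*} [DecidableEq α] {l : List α} {s : Finset α}
    (hl : l.Nodup) (hsub : ∀ x ∈ l, x ∈ s) (hcard : #s ≤ l.length) {x : α} (hx : x ∈ s) :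
    x ∈ l := by
  have := eq_of_subset_of_card_le (fun y hy => hsub y (List.mem_toFinset.mp hy))
    (by rwa [List.toFinset_card_of_nodup hl])
  exact List.mem_toFinset.mp (this ▸ hx)

theorem sum_card_filter_sub_one_le {α β : Type*} (R : α → β → Prop) {A : Finset α}
    {B : Finset β} {a : α} (ha : a ∈ A)
    (h : ∀ a' ∈ A, a' ≠ a → ∀ b ∈ B, ∀ b' ∈ B, R a b → R a' b → R a b' → R a' b' → b = b') :
    ∑ b ∈ B.filter (R a), (#(A.filter (R · b)) - 1) ≤ #A - 1 := by
  calc ∑ b ∈ B.filter (R a), (#(A.filter (R · b)) - 1)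
      = ∑ b ∈ B.filter (R a), #((A.filter (R · b)).erase a) := by
        refine sum_congr rfl fun b hb => ?_
        rw [card_erase_of_mem (mem_filter.mpr ⟨ha, (mem_filter.mp hb).2⟩)]
    _ = #((B.filter (R a)).biUnion fun b => (A.filter (R · b)).erase a) := by
        refine (card_biUnion fun b hb b' hb' hbb' => ?_).symm
        rw [mem_coe, mem_filter] at hb hb'
        simp only [Finset.disjoint_left, mem_erase, mem_filter]
        rintro a' ⟨ha'a, ha', hab⟩ ⟨-, -, hab'⟩
        exact hbb' (h a' ha' ha'a b hb.1 b' hb'.1 hb.2 hab hb'.2 hab')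
    _ ≤ #(A.erase a) :=
        card_le_card fun a' => by simp only [mem_biUnion, mem_erase, mem_filter]; tauto
    _ = #A - 1 := card_erase_of_mem ha

structure IsPartialSteinerTripleSystem {α : Type*} (T : α → α → α → Prop) : Prop where
  swap₁₂ : ∀ {x y z}, T x y z → T y x z
  swap₂₃ : ∀ {x y z}, T x y z → T x z y
  ne : ∀ {x y z}, T x y z → x ≠ y
  unique : ∀ {x y z w}, T x y z → T x y w → z = w

namespace IsPartialSteinerTripleSystem

variable {α : Type*} {T : α → α → α → Prop}

theorem exists_fano (hT : IsPartialSteinerTripleSystem T) {p a₁ b₁ a₂ b₂ a₃ b₃ : α}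
    (hd : [p, a₁, b₁, a₂, b₂, a₃, b₃].Nodup)
    (hpts : ∀ {x y w}, T x y w → w ∈ [p, a₁, b₁, a₂, b₂, a₃, b₃])
    (h₁ : T p a₁ b₁) (h₂ : T p a₂ b₂) (h₃ : T p a₃ b₃)
    (hjoin : ∀ x ∈ [p, a₁, b₁, a₂, b₂, a₃, b₃], ∀ y ∈ [p, a₁, b₁, a₂, b₂, a₃, b₃], x ≠ y →
      ∃ w, T x y w) :
    ∃ c e, T p c e ∧ T a₁ a₂ c ∧ T b₁ b₂ c ∧ T a₁ b₂ e ∧ T b₁ a₂ e := by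
  simp only [List.nodup_cons, List.mem_cons, List.not_mem_nil, or_false, not_or] at hd hpts hjoin
  obtain ⟨c, hc⟩ := hjoin a₁ (by simp) a₂ (by simp) (by grind)
  obtain ⟨c', hc'⟩ := hjoin b₁ (by simp) b₂ (by simp) (by grind)
  obtain ⟨e, he⟩ := hjoin a₁ (by simp) b₂ (by simp) (by grind)
  obtain ⟨e', he'⟩ := hjoin b₁ (by simp) a₂ (by simp) (by grind)
  clear hjoin
  have := @hT.swap₁₂; have := @hT.swap₂₃; have := @hT.ne; have := @hT.unique
  -- each remaining incidence is forced, since two points lie in at most one triple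
  refine ⟨c, e, ?_, hc, ?_, he, ?_⟩ <;> grind (splits := 40)

theorem exists_moebiusKantor (hT : IsPartialSteinerTripleSystem T)
    {z p a₁ b₁ a₂ b₂ a₃ b₃ : α} (hnd : [z, p, a₁, b₁, a₂, b₂, a₃, b₃].Nodup)
    (hpts : ∀ {x y w}, T x y w → w ∈ [z, p, a₁, b₁, a₂, b₂, a₃, b₃])
    (h₁ : T p a₁ b₁) (h₂ : T p a₂ b₂) (h₃ : T p a₃ b₃)
    (hz : ∀ q ∈ [a₁, b₁, a₂, b₂, a₃, b₃], ∃ w, T z q w)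
    (hthird : ∀ {x a b c d}, T x a b → T x c d → ∃ s t, T x s t ∧ s ≠ a ∧ s ≠ b ∧ s ≠ c ∧ s ≠ d) :
    ∃ c c' d d', T p c c' ∧ T p d d' ∧ T z a₁ c ∧ T z b₁ d ∧
      T z c' d' ∧ T a₁ c' d ∧ T b₁ c d' := by
  have hp : ∀ q ∈ [a₁, b₁, a₂, b₂, a₃, b₃], ∃ w, T p q w := by
    simp only [List.mem_cons, List.not_mem_nil, or_false]
    rintro q (rfl | rfl | rfl | rfl | rfl | rfl)
    exacts [⟨_, h₁⟩, ⟨_, hT.swap₂₃ h₁⟩, ⟨_, h₂⟩, ⟨_, hT.swap₂₃ h₂⟩, ⟨_, h₃⟩, ⟨_, hT.swap₂₃ h₃⟩]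
  simp only [List.nodup_cons, List.mem_cons, List.not_mem_nil, or_false, not_or] at hnd hpts hz hp
  have := @hT.swap₁₂; have := @hT.swap₂₃; have := @hT.ne; have := @hT.unique
  obtain ⟨c, hc⟩ := hz a₁ (by simp)
  obtain ⟨d, hd⟩ := hz b₁ (by simp)
  obtain ⟨w₃, k₃⟩ := hz a₂ (by simp)
  obtain ⟨w₄, k₄⟩ := hz b₂ (by simp)
  obtain ⟨w₅, k₅⟩ := hz a₃ (by simp)
  obtain ⟨w₆, k₆⟩ := hz b₃ (by simp)
  obtain ⟨c', hc'⟩ := hp c (by clear hz hp hthird; grind)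
  obtain ⟨d', hd'⟩ := hp d (by clear hz hp hthird; grind)
  obtain ⟨s, t, hs⟩ := hthird (hT.swap₁₂ h₁) (hT.swap₁₂ hc)
  obtain ⟨s', t', hs'⟩ := hthird (hT.swap₁₂ (hT.swap₂₃ h₁)) (hT.swap₁₂ hd)
  clear hz hp hthird
  -- each remaining incidence is forced, since two points lie in at most one triple
  refine ⟨c, c', d, d', hc', hd', hc, hd, ?_, ?_, ?_⟩ <;> grind (splits := 40)

end IsPartialSteinerTripleSystem

/-- A geometric `(n₃)` configuration. -/
structure IsConfig3 (P L : Finset (Submodule ℝ (Fin 3 → ℝ))) : Prop where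
  isProjPoint : ∀ p ∈ P, IsProjPoint p
  isProjLine : ∀ l ∈ L, IsProjLine l
  pointDeg_eq : ∀ p ∈ P, pointDeg L p = 3
  lineDeg_eq : ∀ l ∈ L, lineDeg P l = 3

def IsTriple (P L : Finset (Submodule ℝ (Fin 3 → ℝ))) (x y z : Submodule ℝ (Fin 3 → ℝ)) :
    Prop :=
  ∃ l ∈ L, P.filter (· ≤ l) = {x, y, z}

theorem eq_of_isProjPoint_of_isProjLine {p q l m : Submodule ℝ (Fin 3 → ℝ)} (hp : IsProjPoint p)
    (hq : IsProjPoint q) (hpq : p ≠ q) (hl : IsProjLine l) (hm : IsProjLine m) (hpl : p ≤ l)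
    (hql : q ≤ l) (hpm : p ≤ m) (hqm : q ≤ m) : l = m :=
  (sup_eq_of_finrank_eq hp hq hpq hl hpl hql).symm.trans (sup_eq_of_finrank_eq hp hq hpq hm hpm hqm)

section Configurations

variable {P L : Finset (Submodule ℝ (Fin 3 → ℝ))} {p q x y z w : Submodule ℝ (Fin 3 → ℝ)}

theorem mem_and_le_of_filter_eq {l : Submodule ℝ (Fin 3 → ℝ)} (h : P.filter (· ≤ l) = {x, y, z})
    {t : Submodule ℝ (Fin 3 → ℝ)} (ht : t ∈ ({x, y, z} : Finset _)) : t ∈ P ∧ t ≤ l :=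
  mem_filter.mp (h ▸ ht)

theorem IsTriple.mem (h : IsTriple P L x y z) : x ∈ P ∧ y ∈ P ∧ z ∈ P := by
  obtain ⟨l, -, h⟩ := h
  exact ⟨(mem_and_le_of_filter_eq h (by simp)).1, (mem_and_le_of_filter_eq h (by simp)).1,
    (mem_and_le_of_filter_eq h (by simp)).1⟩

namespace IsConfig3

theorem eq_of_le (C : IsConfig3 P L) {l m : Submodule ℝ (Fin 3 → ℝ)} (hp : p ∈ P) (hq : q ∈ P)
    (hpq : p ≠ q) (hl : l ∈ L) (hm : m ∈ L) (hpl : p ≤ l) (hql : q ≤ l) (hpm : p ≤ m)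
    (hqm : q ≤ m) : l = m :=
  eq_of_isProjPoint_of_isProjLine (C.isProjPoint p hp) (C.isProjPoint q hq) hpq
    (C.isProjLine l hl) (C.isProjLine m hm) hpl hql hpm hqm

theorem ne_of_isTriple (C : IsConfig3 P L) (h : IsTriple P L x y z) : x ≠ y ∧ x ≠ z ∧ y ≠ z := by
  obtain ⟨l, hl, hxyz⟩ := h
  have h3 := C.lineDeg_eq l hl
  rw [lineDeg, hxyz] at h3
  refine ⟨?_, ?_, ?_⟩ <;> rintro rfl <;> simp at h3 <;>
    exact absurd h3 (card_le_two.trans_lt (by norm_num)).ne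

theorem isPartialSteinerTripleSystem (C : IsConfig3 P L) :
    IsPartialSteinerTripleSystem (IsTriple P L) where
  swap₁₂ := fun ⟨l, hl, h⟩ => ⟨l, hl, by rw [h, insert_comm]⟩
  swap₂₃ := fun ⟨l, hl, h⟩ => ⟨l, hl, by rw [h, pair_comm]⟩
  ne h := (C.ne_of_isTriple h).1
  unique := by
    rintro x y z w ⟨l, hl, hxyz⟩ ⟨m, hm, hxyw⟩
    obtain ⟨hxy, hxz, hyz⟩ := C.ne_of_isTriple ⟨l, hl, hxyz⟩
    have hx := mem_and_le_of_filter_eq hxyz (t := x) (by simp)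
    have hy := mem_and_le_of_filter_eq hxyz (t := y) (by simp)
    obtain rfl := C.eq_of_le hx.1 hy.1 hxy hl hm hx.2 hy.2
      (mem_and_le_of_filter_eq hxyw (t := x) (by simp)).2
      (mem_and_le_of_filter_eq hxyw (t := y) (by simp)).2
    have hz : z ∈ ({x, y, w} : Finset _) := hxyw ▸ hxyz ▸ by simp
    simp only [mem_insert, mem_singleton] at hz
    exact hz.resolve_left hxz.symm |>.resolve_left hyz.symm

theorem sup_eq (C : IsConfig3 P L) {l : Submodule ℝ (Fin 3 → ℝ)} (hl : l ∈ L)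
    (h : P.filter (· ≤ l) = {x, y, z}) : x ⊔ y = l := by
  have hx := mem_and_le_of_filter_eq h (t := x) (by simp)
  have hy := mem_and_le_of_filter_eq h (t := y) (by simp)
  exact sup_eq_of_finrank_eq (C.isProjPoint x hx.1) (C.isProjPoint y hy.1)
    (C.ne_of_isTriple ⟨l, hl, h⟩).1 (C.isProjLine l hl) hx.2 hy.2

theorem le_sup (C : IsConfig3 P L) (h : IsTriple P L x y z) : z ≤ x ⊔ y := by
  obtain ⟨l, hl, h⟩ := h
  rw [C.sup_eq hl h]
  exact (mem_and_le_of_filter_eq h (by simp)).2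

theorem not_le_sup (C : IsConfig3 P L) (h : IsTriple P L x y z) (hw : w ∈ P) (hwx : w ≠ x)
    (hwy : w ≠ y) (hwz : w ≠ z) : ¬ w ≤ x ⊔ y := by
  obtain ⟨l, hl, h⟩ := h
  rw [C.sup_eq hl h]
  intro hwl
  have := h ▸ mem_filter.mpr ⟨hw, hwl⟩
  simp only [mem_insert, mem_singleton] at this
  tauto

theorem exists_frame (C : IsConfig3 P L) {a₁ b₁ a₂ b₂ : Submodule ℝ (Fin 3 → ℝ)}
    (h₁ : IsTriple P L p a₁ b₁) (h₂ : IsTriple P L p a₂ b₂) (ha₂ : ¬ a₂ ≤ p ⊔ a₁) :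
    ∃ u v w, LinearIndependent ℝ ![u, v, w] ∧ p = ℝ ∙ u ∧ a₁ = ℝ ∙ v ∧ b₁ = ℝ ∙ (u + v) ∧
      a₂ = ℝ ∙ w ∧ b₂ = ℝ ∙ (u + w) := by
  have hT := C.isPartialSteinerTripleSystem
  obtain ⟨hpa₁, hpb₁, hab₁⟩ := C.ne_of_isTriple h₁
  obtain ⟨hpa₂, hpb₂, hab₂⟩ := C.ne_of_isTriple h₂
  have hpt : ∀ {x y z}, IsTriple P L x y z → IsProjPoint z := fun h => C.isProjPoint _ h.mem.2.2
  obtain ⟨u, hu, rfl⟩ := exists_eq_span_singleton_of_finrank_eq_one (hpt (hT.swap₂₃ (hT.swap₁₂ h₁)))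
  obtain ⟨v, rfl, rfl⟩ := exists_span_singleton_add (hpt (hT.swap₂₃ h₁)) (hpt h₁) hpa₁ hpb₁ hab₁
    (C.le_sup h₁)
  obtain ⟨w, rfl, rfl⟩ := exists_span_singleton_add (hpt (hT.swap₂₃ h₂)) (hpt h₂) hpa₂ hpb₂ hab₂
    (C.le_sup h₂)
  refine ⟨u, v, w, linearIndependent_three hu (fun hv => hpa₁ ?_)
    (fun hw => ha₂ ((span_singleton_le_iff_mem _ _).mpr hw)), rfl, rfl, rfl, rfl, rfl⟩
  have hv0 : v ≠ 0 := by
    rintro rfl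
    have := hpt (hT.swap₂₃ h₁)
    rw [IsProjPoint, span_zero_singleton, finrank_bot] at this
    exact zero_ne_one this
  exact eq_span_singleton_of_mem_of_finrank_eq_one (hpt (hT.swap₂₃ (hT.swap₁₂ h₁))) hv hv0

theorem not_fano (C : IsConfig3 P L) {a₁ b₁ a₂ b₂ c e : Submodule ℝ (Fin 3 → ℝ)}
    (h₁ : IsTriple P L p a₁ b₁) (h₂ : IsTriple P L p a₂ b₂) (h₃ : IsTriple P L p c e)
    (hc₁ : IsTriple P L a₁ a₂ c) (hc₂ : IsTriple P L b₁ b₂ c) (he₁ : IsTriple P L a₁ b₂ e)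
    (he₂ : IsTriple P L b₁ a₂ e) : False := by
  have hT := C.isPartialSteinerTripleSystem
  have ha₂ : ¬ a₂ ≤ p ⊔ a₁ := C.not_le_sup h₁ (hT.swap₂₃ h₂).mem.2.2 (hT.ne h₂).symm
    (hT.ne hc₁).symm (hT.ne he₂).symm
  obtain ⟨u, v, w, hind, rfl, rfl, rfl, rfl, rfl⟩ := C.exists_frame h₁ h₂ ha₂
  obtain ⟨x, -, rfl⟩ := exists_eq_span_singleton_of_finrank_eq_one
    (C.isProjPoint _ hc₁.mem.2.2)
  obtain ⟨y, hy, rfl⟩ := exists_eq_span_singleton_of_finrank_eq_one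
    (C.isProjPoint _ he₁.mem.2.2)
  exact hind.not_fano two_ne_zero hy (C.le_sup hc₁) (C.le_sup hc₂) (C.le_sup he₁)
    (C.le_sup he₂) (C.le_sup h₃)

theorem not_moebiusKantor (C : IsConfig3 P L) {a₁ b₁ a₂ b₂ a₃ b₃ : Submodule ℝ (Fin 3 → ℝ)}
    (h₁ : IsTriple P L p a₁ b₁) (h₂ : IsTriple P L p a₂ b₂) (h₃ : IsTriple P L p a₃ b₃)
    (hz₁ : IsTriple P L z a₁ a₂) (hz₂ : IsTriple P L z b₁ a₃) (hz₃ : IsTriple P L z b₂ b₃)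
    (h₄ : IsTriple P L a₁ b₂ a₃) (h₅ : IsTriple P L b₁ a₂ b₃) : False := by
  have hT := C.isPartialSteinerTripleSystem
  have hz₁' := hT.swap₂₃ (hT.swap₁₂ hz₁)
  have ha₂ : ¬ a₂ ≤ p ⊔ a₁ := C.not_le_sup h₁ (hT.swap₂₃ h₂).mem.2.2 (hT.ne h₂).symm
    (hT.ne hz₁').symm (hT.ne h₅).symm
  obtain ⟨u, v, w, hind, rfl, rfl, rfl, rfl, rfl⟩ := C.exists_frame h₁ h₂ ha₂
  obtain ⟨c, hc, rfl⟩ := exists_eq_span_singleton_of_finrank_eq_one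
    (C.isProjPoint _ hz₁'.mem.2.2)
  obtain ⟨x, -, rfl⟩ := exists_eq_span_singleton_of_finrank_eq_one
    (C.isProjPoint _ hz₂.mem.2.2)
  obtain ⟨y, hy, rfl⟩ := exists_eq_span_singleton_of_finrank_eq_one
    (C.isProjPoint _ hz₃.mem.2.2)
  exact hind.not_moebiusKantor hc hy (C.le_sup hz₁') (C.le_sup hz₂)
    (C.le_sup h₄) (C.le_sup hz₃) (C.le_sup h₅) (C.le_sup h₃)

theorem mem_of_isTriple_of_filter_eq (C : IsConfig3 P L)
    {l₁ l₂ l₃ a₁ b₁ a₂ b₂ a₃ b₃ : Submodule ℝ (Fin 3 → ℝ)} (hls : L.filter (p ≤ ·) = {l₁, l₂, l₃})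
    (e₁ : P.filter (· ≤ l₁) = {p, a₁, b₁}) (e₂ : P.filter (· ≤ l₂) = {p, a₂, b₂})
    (e₃ : P.filter (· ≤ l₃) = {p, a₃, b₃}) (h : IsTriple P L p y w) :
    y ∈ [a₁, b₁, a₂, b₂, a₃, b₃] := by
  obtain ⟨l, hl, e⟩ := h
  have hl' : l ∈ ({l₁, l₂, l₃} : Finset _) :=
    hls ▸ mem_filter.mpr ⟨hl, (mem_and_le_of_filter_eq e (t := p) (by simp)).2⟩
  have hy : y ∈ P.filter (· ≤ l) := e ▸ by simp
  have hyp : y ≠ p := (C.ne_of_isTriple ⟨l, hl, e⟩).1.symm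
  simp only [mem_insert, mem_singleton] at hl'
  rcases hl' with rfl | rfl | rfl
  all_goals
    first | rw [e₁] at hy | rw [e₂] at hy | rw [e₃] at hy
    simp only [mem_insert, mem_singleton] at hy
    simp only [List.mem_cons, List.not_mem_nil, or_false]
    tauto

theorem exists_star (C : IsConfig3 P L) (hp : p ∈ P) :
    ∃ a₁ b₁ a₂ b₂ a₃ b₃, IsTriple P L p a₁ b₁ ∧ IsTriple P L p a₂ b₂ ∧ IsTriple P L p a₃ b₃ ∧
      [p, a₁, b₁, a₂, b₂, a₃, b₃].Nodup ∧ (∀ t ∈ [p, a₁, b₁, a₂, b₂, a₃, b₃], t ∈ P) ∧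
      ∀ y w, IsTriple P L p y w → y ∈ [a₁, b₁, a₂, b₂, a₃, b₃] := by
  obtain ⟨l₁, l₂, l₃, h₁₂, h₁₃, h₂₃, hls⟩ := card_eq_three.mp (C.pointDeg_eq p hp)
  have hls' : ∀ l ∈ ({l₁, l₂, l₃} : Finset _), l ∈ L ∧ p ≤ l := fun l hl => mem_filter.mp (hls ▸ hl)
  have htriple : ∀ {l}, l ∈ L → p ≤ l → ∃ a b, P.filter (· ≤ l) = {p, a, b} := fun hl hpl =>
    exists_eq_insert_pair_of_card_eq_three (C.lineDeg_eq _ hl) (mem_filter.mpr ⟨hp, hpl⟩)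
  obtain ⟨hl₁, hpl₁⟩ := hls' l₁ (by simp)
  obtain ⟨hl₂, hpl₂⟩ := hls' l₂ (by simp)
  obtain ⟨hl₃, hpl₃⟩ := hls' l₃ (by simp)
  obtain ⟨a₁, b₁, e₁⟩ := htriple hl₁ hpl₁
  obtain ⟨a₂, b₂, e₂⟩ := htriple hl₂ hpl₂
  obtain ⟨a₃, b₃, e₃⟩ := htriple hl₃ hpl₃
  have ha₁ := mem_and_le_of_filter_eq e₁ (t := a₁) (by simp)
  have hb₁ := mem_and_le_of_filter_eq e₁ (t := b₁) (by simp)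
  have ha₂ := mem_and_le_of_filter_eq e₂ (t := a₂) (by simp)
  have hb₂ := mem_and_le_of_filter_eq e₂ (t := b₂) (by simp)
  have ha₃ := mem_and_le_of_filter_eq e₃ (t := a₃) (by simp)
  have hb₃ := mem_and_le_of_filter_eq e₃ (t := b₃) (by simp)
  have n₁ := C.ne_of_isTriple ⟨l₁, hl₁, e₁⟩
  have n₂ := C.ne_of_isTriple ⟨l₂, hl₂, e₂⟩
  have n₃ := C.ne_of_isTriple ⟨l₃, hl₃, e₃⟩
  have hF : ∀ {l l'}, l ∈ L → l' ∈ L → p ≤ l → p ≤ l' → l ≠ l' →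
      ∀ t ∈ P, t ≠ p → t ≤ l → t ≤ l' → False :=
    fun hl hl' hpl hpl' hll' t ht htp htl htl' =>
      hll' (C.eq_of_le ht hp htp hl hl' htl hpl htl' hpl')
  have d₁₂ := hF hl₁ hl₂ hpl₁ hpl₂ h₁₂
  have d₁₃ := hF hl₁ hl₃ hpl₁ hpl₃ h₁₃
  have d₂₃ := hF hl₂ hl₃ hpl₂ hpl₃ h₂₃
  refine ⟨a₁, b₁, a₂, b₂, a₃, b₃, ⟨l₁, hl₁, e₁⟩, ⟨l₂, hl₂, e₂⟩, ⟨l₃, hl₃, e₃⟩, ?_, ?_, ?_⟩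
  · simp only [List.nodup_cons, List.mem_cons, List.not_mem_nil, or_false, not_or,
      List.nodup_nil, and_true]
    clear htriple hls hls' e₁ e₂ e₃ hF
    grind (splits := 25)
  · simp only [List.mem_cons, List.not_mem_nil, or_false]
    rintro t (rfl | rfl | rfl | rfl | rfl | rfl | rfl)
    exacts [hp, ha₁.1, hb₁.1, ha₂.1, hb₂.1, ha₃.1, hb₃.1]
  · exact fun y w => C.mem_of_isTriple_of_filter_eq hls e₁ e₂ e₃

theorem exists_third_line (C : IsConfig3 P L) {a b c d : Submodule ℝ (Fin 3 → ℝ)}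
    (h : IsTriple P L x a b) (h' : IsTriple P L x c d) :
    ∃ s t, IsTriple P L x s t ∧ s ≠ a ∧ s ≠ b ∧ s ≠ c ∧ s ≠ d := by
  have hT := C.isPartialSteinerTripleSystem
  obtain ⟨a₁, b₁, a₂, b₂, a₃, b₃, h₁, h₂, h₃, hd, -, hnbr⟩ :=
    C.exists_star h.mem.1
  by_cases k₁ : a₁ ≠ a ∧ a₁ ≠ b ∧ a₁ ≠ c ∧ a₁ ≠ d
  · exact ⟨a₁, b₁, h₁, k₁⟩
  by_cases k₂ : a₂ ≠ a ∧ a₂ ≠ b ∧ a₂ ≠ c ∧ a₂ ≠ d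
  · exact ⟨a₂, b₂, h₂, k₂⟩
  refine ⟨a₃, b₃, h₃, ?_⟩
  have ha := hnbr a b h
  have hb := hnbr b a (hT.swap₂₃ h)
  have hc := hnbr c d h'
  have hd' := hnbr d c (hT.swap₂₃ h')
  have := @hT.swap₁₂; have := @hT.swap₂₃; have := @hT.ne; have := @hT.unique
  simp only [List.nodup_cons, List.mem_cons, List.not_mem_nil, or_false, not_or] at hd ha hb hc hd'
  clear hnbr
  grind

theorem exists_isTriple_of_card_eq_seven (C : IsConfig3 P L) (h7 : #P = 7) (hx : x ∈ P)
    (hy : y ∈ P) (hxy : x ≠ y) : ∃ z, IsTriple P L x y z := by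
  have hT := C.isPartialSteinerTripleSystem
  obtain ⟨a₁, b₁, a₂, b₂, a₃, b₃, h₁, h₂, h₃, hd, hsub, -⟩ := C.exists_star hx
  have hy' := hd.mem_of_card_le hsub (by simp [h7]) hy
  simp only [List.mem_cons, List.not_mem_nil, or_false] at hy'
  rcases hy' with rfl | rfl | rfl | rfl | rfl | rfl | rfl
  exacts [absurd rfl hxy, ⟨_, h₁⟩, ⟨_, hT.swap₂₃ h₁⟩, ⟨_, h₂⟩, ⟨_, hT.swap₂₃ h₂⟩,
    ⟨_, h₃⟩, ⟨_, hT.swap₂₃ h₃⟩]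

theorem exists_isTriple_of_card_eq_eight (C : IsConfig3 P L) (h8 : #P = 8) (hx : x ∈ P)
    (hw : w ∈ P) (hxw : x ≠ w) (hnw : ∀ v, ¬ IsTriple P L x w v) (hy : y ∈ P) (hyx : y ≠ x)
    (hyw : y ≠ w) : ∃ z, IsTriple P L x y z := by
  have hT := C.isPartialSteinerTripleSystem
  obtain ⟨a₁, b₁, a₂, b₂, a₃, b₃, h₁, h₂, h₃, hd, hsub, -⟩ := C.exists_star hx
  have hwl : w ∉ [x, a₁, b₁, a₂, b₂, a₃, b₃] := by
    simp only [List.mem_cons, List.not_mem_nil, or_false]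
    rintro (rfl | rfl | rfl | rfl | rfl | rfl | rfl)
    exacts [hxw rfl, hnw _ h₁, hnw _ (hT.swap₂₃ h₁), hnw _ h₂, hnw _ (hT.swap₂₃ h₂),
      hnw _ h₃, hnw _ (hT.swap₂₃ h₃)]
  have hy' := (List.nodup_cons.mpr ⟨hwl, hd⟩).mem_of_card_le (List.forall_mem_cons.mpr ⟨hw, hsub⟩)
    (by simp [h8]) hy
  simp only [List.mem_cons, List.not_mem_nil, or_false] at hy'
  rcases hy' with rfl | rfl | rfl | rfl | rfl | rfl | rfl | rfl
  exacts [absurd rfl hyw, absurd rfl hyx, ⟨_, h₁⟩, ⟨_, hT.swap₂₃ h₁⟩, ⟨_, h₂⟩,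
    ⟨_, hT.swap₂₃ h₂⟩, ⟨_, h₃⟩, ⟨_, hT.swap₂₃ h₃⟩]

theorem seven_le_card (C : IsConfig3 P L) (hP : P.Nonempty) : 7 ≤ #P := by
  obtain ⟨p, hp⟩ := hP
  obtain ⟨a₁, b₁, a₂, b₂, a₃, b₃, -, -, -, hd, hsub, -⟩ := C.exists_star hp
  calc 7 = #([p, a₁, b₁, a₂, b₂, a₃, b₃].toFinset) := (List.toFinset_card_of_nodup hd).symm
    _ ≤ #P := card_le_card fun t ht => hsub t (List.mem_toFinset.mp ht)

theorem card_ne_seven (C : IsConfig3 P L) : #P ≠ 7 := by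
  intro h7
  have hT := C.isPartialSteinerTripleSystem
  obtain ⟨p, hp⟩ := card_pos.mp (by omega : 0 < #P)
  obtain ⟨a₁, b₁, a₂, b₂, a₃, b₃, h₁, h₂, h₃, hd, hsub, -⟩ := C.exists_star hp
  have hP := fun {t} (ht : t ∈ P) => hd.mem_of_card_le hsub (by simp [h7]) ht
  obtain ⟨c, e, h₄, h₅, h₆, h₇, h₈⟩ := hT.exists_fano hd (fun h => hP h.mem.2.2)
    h₁ h₂ h₃ fun x hx y hy => C.exists_isTriple_of_card_eq_seven h7 (hsub x hx) (hsub y hy)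
  exact C.not_fano h₁ h₂ h₄ h₅ h₆ h₇ h₈

theorem card_ne_eight (C : IsConfig3 P L) : #P ≠ 8 := by
  intro h8
  have hT := C.isPartialSteinerTripleSystem
  obtain ⟨p, hp⟩ := card_pos.mp (by omega : 0 < #P)
  obtain ⟨a₁, b₁, a₂, b₂, a₃, b₃, h₁, h₂, h₃, hd, hsub, hnbr⟩ := C.exists_star hp
  obtain ⟨z, hz, hzs⟩ := exists_mem_notMem_of_card_lt_card
    (s := [p, a₁, b₁, a₂, b₂, a₃, b₃].toFinset) (t := P)
    (by rw [List.toFinset_card_of_nodup hd]; simp [h8])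
  -- `z` is the point not joined to `p`: only the six points of the star are
  rw [List.mem_toFinset] at hzs
  have hnd := List.nodup_cons.mpr ⟨hzs, hd⟩
  have hsub' := List.forall_mem_cons.mpr ⟨hz, hsub⟩
  have hP := fun {t} (ht : t ∈ P) => hnd.mem_of_card_le hsub' (by simp [h8]) ht
  have hzp : ∀ v, ¬ IsTriple P L z p v := fun v h =>
    hzs (List.mem_cons_of_mem _ (hnbr z v (hT.swap₁₂ h)))
  obtain ⟨c, c', d, d', hcc', hdd', hzc, hzd, h₄, h₅, h₆⟩ := hT.exists_moebiusKantor hnd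
    (fun h => hP h.mem.2.2) h₁ h₂ h₃
    (fun q hq => C.exists_isTriple_of_card_eq_eight h8 hz hp (List.ne_of_not_mem_cons hzs) hzp
      (hsub' q (List.mem_cons_of_mem _ (List.mem_cons_of_mem _ hq)))
      (fun h => hzs (h ▸ List.mem_cons_of_mem _ hq)) (fun h => (List.nodup_cons.mp hd).1 (h ▸ hq)))
    C.exists_third_line
  exact C.not_moebiusKantor h₁ hcc' hdd' hzc hzd h₄ h₅ h₆

end IsConfig3

theorem isConfig3_of_card_le_eight (hP : ∀ p ∈ P, IsProjPoint p) (hL : ∀ l ∈ L, IsProjLine l)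
    (hPL : #L = #P) (h8 : #P ≤ 8) (hdegP : ∀ p ∈ P, pointDeg L p = 3 ∨ pointDeg L p = 4)
    (hdegL : ∀ l ∈ L, lineDeg P l = 3 ∨ lineDeg P l = 4) : IsConfig3 P L := by
  have hF : ∀ p ∈ P, ∀ q ∈ P, p ≠ q → ∀ l ∈ L, ∀ m ∈ L, p ≤ l → q ≤ l → p ≤ m → q ≤ m → l = m :=
    fun p hp q hq hpq l hl m hm => eq_of_isProjPoint_of_isProjLine (hP p hp) (hP q hq) hpq
      (hL l hl) (hL m hm)
  have hP3 : ∀ p ∈ P, pointDeg L p = 3 := by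
    intro p hp
    have hsum := sum_card_filter_sub_one_le (· ≤ ·) (B := L) hp
      fun q hq hqp l hl m hm => hF p hp q hq hqp.symm l hl m hm
    have h2 := card_nsmul_le_sum (L.filter (p ≤ ·)) (fun l => #(P.filter (· ≤ l)) - 1) 2
      fun l hl => by have := hdegL l (mem_filter.mp hl).1; unfold lineDeg at this; omega
    rw [smul_eq_mul] at h2
    have := hdegP p hp
    unfold pointDeg at this ⊢
    omega
  refine ⟨hP, hL, hP3, fun l hl => ?_⟩
  have hsum := sum_card_filter_sub_one_le (fun l q => q ≤ l) (A := L) (B := P) hl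
    fun m hm hml q hq q' hq' hql hqm hq'l hq'm => by
      by_contra hqq'
      exact hml (hF q hq q' hq' hqq' l hl m hm hql hq'l hqm hq'm).symm
  have h2 := card_nsmul_le_sum (P.filter (· ≤ l)) (fun q => #(L.filter (q ≤ ·)) - 1) 2
    fun q hq => by have := hP3 q (mem_filter.mp hq).1; unfold pointDeg at this; omega
  rw [smul_eq_mul] at h2
  have := hdegL l hl
  unfold lineDeg at this ⊢
  omega

end Configurations

theorem stmt3 (n : ℕ) (hn1 : 1 ≤ n) (hn8 : n ≤ 8) :
    ¬ ∃ P L : Finset (Submodule ℝ (Fin 3 → ℝ)),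
      (∀ p ∈ P, IsProjPoint p) ∧ (∀ l ∈ L, IsProjLine l) ∧
      P.card = n ∧ L.card = n ∧
      (∀ p ∈ P, pointDeg L p = 3 ∨ pointDeg L p = 4) ∧
      (∀ l ∈ L, lineDeg P l = 3 ∨ lineDeg P l = 4) := by
  rintro ⟨P, L, hP, hL, rfl, hLn, hdegP, hdegL⟩
  have C := isConfig3_of_card_le_eight hP hL hLn hn8 hdegP hdegL
  have h7 := C.seven_le_card (card_pos.mp hn1)
  rcases (by omega : #P = 7 ∨ #P = 8) with h | h
  exacts [C.card_ne_seven h, C.card_ne_eight h]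
end

section
/- There exists a geometric (37_4) configuration, i.e., a set P of 37 points and a set L of 37 lines in the real projective plane such that every point of P is incident to exactly 4 lines of L and every line of L is incident to exactly 4 points of P. -/
/- Model of the real projective plane: a point is a 1-dimensional linear subspace
of ℝ³ and a line is a 2-dimensional linear subspace of ℝ³; a point p is incident
to a line ℓ when p ≤ ℓ. -/

open scoped Classical

namespace Cfg37

/-- Homogeneous integer coordinates of the 37 points of the configuration. -/
def Vz : Fin 37 → Fin 3 → ℤ :=
  ![![0,2,1], ![0,5,1], ![0,6,1], ![0,7,1], ![1,0,1], ![1,2,1], ![1,3,1], ![1,4,1],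
    ![2,0,1], ![2,1,1], ![2,2,1], ![2,7,1], ![3,1,1], ![3,3,1], ![3,4,1], ![3,6,1],
    ![4,1,1], ![4,3,1], ![4,4,1], ![4,6,1], ![5,0,1], ![5,5,1], ![5,6,1], ![5,7,1],
    ![6,3,1], ![6,4,1], ![6,5,1], ![6,7,1], ![7,0,1], ![7,1,1], ![7,2,1], ![7,5,1],
    ![1,-3,0], ![2,-1,0], ![2,1,0], ![3,-1,0], ![3,1,0]]

/-- Integer normal vectors of the 37 lines of the configuration. -/
def Nz : Fin 37 → Fin 3 → ℤ :=
  ![![1,0,0], ![0,1,0], ![1,-1,0], ![0,1,-1], ![1,-1,1], ![1,-2,2], ![1,-1,2], ![1,-2,4],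
    ![1,-3,6], ![1,1,-5], ![1,3,-15], ![1,-3,15], ![3,1,-6], ![0,1,-6], ![1,2,-12],
    ![3,1,-7], ![0,1,-7], ![1,3,-21], ![1,-1,-1], ![2,-1,-2], ![1,-3,-1], ![1,2,-5],
    ![1,-2,3], ![1,3,-7], ![1,-2,5], ![1,-3,8], ![1,2,-9], ![1,3,-13], ![1,0,-2],
    ![1,-1,-2], ![1,1,-9], ![1,2,-16], ![2,-1,-5], ![1,0,-5], ![3,1,-21], ![3,1,-22],
    ![1,0,-7]]

def dotZ (a b : Fin 3 → ℤ) : ℤ := a 0 * b 0 + a 1 * b 1 + a 2 * b 2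
def crossZ (a b : Fin 3 → ℤ) : Fin 3 → ℤ :=
  ![a 1 * b 2 - a 2 * b 1, a 2 * b 0 - a 0 * b 2, a 0 * b 1 - a 1 * b 0]

theorem deg_pt : ∀ i : Fin 37,
    (Finset.univ.filter fun j : Fin 37 => dotZ (Nz j) (Vz i) = 0).card = 4 := by decide
theorem deg_ln : ∀ j : Fin 37,
    (Finset.univ.filter fun i : Fin 37 => dotZ (Nz j) (Vz i) = 0).card = 4 := by decide
theorem pts_distinct : ∀ i j : Fin 37, i ≠ j → crossZ (Vz i) (Vz j) ≠ 0 := by decide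
theorem lns_distinct : ∀ i j : Fin 37, i ≠ j →
    dotZ (Nz i) (crossZ (Nz i) (crossZ (Nz i) (Nz j))) = 0 ∧
    dotZ (Nz j) (crossZ (Nz i) (crossZ (Nz i) (Nz j))) ≠ 0 := by decide
theorem v_ne : ∀ i : Fin 37, Vz i ≠ 0 := by decide
theorem n_ne : ∀ j : Fin 37, ∃ k, Nz j k ≠ 0 := by decide

/-- Linear functional on ℝ³ with coefficient vector `a`. -/
noncomputable def dlin (a : Fin 3 → ℝ) : (Fin 3 → ℝ) →ₗ[ℝ] ℝ :=
  ∑ k, a k • (LinearMap.proj k : (Fin 3 → ℝ) →ₗ[ℝ] ℝ)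

theorem dlin_apply (a x : Fin 3 → ℝ) : dlin a x = a 0 * x 0 + a 1 * x 1 + a 2 * x 2 := by
  simp [dlin, Fin.sum_univ_three, mul_comm]

theorem ker_dlin_finrank (a : Fin 3 → ℝ) (k : Fin 3) (hk : a k ≠ 0) :
    Module.finrank ℝ (LinearMap.ker (dlin a)) = 2 := by
  have hx : dlin a ((Pi.single k 1 : Fin 3 → ℝ)) = a k := by
    simp [dlin, LinearMap.proj_apply, Pi.single_apply]
  have hsurj : Function.Surjective (dlin a) := by
    intro c
    exact ⟨(c / a k) • (Pi.single k 1 : Fin 3 → ℝ), by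
      simp [map_smul, hx, div_mul_cancel₀ _ hk]⟩
  have h1 : LinearMap.range (dlin a) = ⊤ := LinearMap.range_eq_top.mpr hsurj
  have h2 := LinearMap.finrank_range_add_finrank_ker (dlin a)
  rw [h1, finrank_top] at h2
  simp [Module.finrank_self] at h2
  have h3 : Module.finrank ℝ (Fin 3 → ℝ) = 3 := by simp [Module.finrank_pi]
  omega

noncomputable def vR (i : Fin 37) : Fin 3 → ℝ := fun k => ((Vz i k : ℤ) : ℝ)
noncomputable def nR (j : Fin 37) : Fin 3 → ℝ := fun k => ((Nz j k : ℤ) : ℝ)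

noncomputable def pt (i : Fin 37) : Submodule ℝ (Fin 3 → ℝ) := Submodule.span ℝ {vR i}
noncomputable def ln (j : Fin 37) : Submodule ℝ (Fin 3 → ℝ) := LinearMap.ker (dlin (nR j))

theorem dlin_cast (a y : Fin 3 → ℤ) :
    dlin (fun k => ((a k : ℤ) : ℝ)) (fun k => ((y k : ℤ) : ℝ)) = ((dotZ a y : ℤ) : ℝ) := by
  rw [dlin_apply]; push_cast [dotZ]; ring

theorem vR_ne (i : Fin 37) : vR i ≠ 0 := by
  obtain ⟨k, hk⟩ := Function.ne_iff.mp (v_ne i)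
  have hk' : Vz i k ≠ 0 := by simpa using hk
  intro h
  have h2 : ((Vz i k : ℤ) : ℝ) = 0 := by simpa [vR] using congrFun h k
  exact hk' (by exact_mod_cast h2)

theorem inc_iff (i j : Fin 37) : pt i ≤ ln j ↔ dotZ (Nz j) (Vz i) = 0 := by
  rw [pt, ln, Submodule.span_le, Set.singleton_subset_iff, SetLike.mem_coe,
    LinearMap.mem_ker]
  have : dlin (nR j) (vR i) = ((dotZ (Nz j) (Vz i) : ℤ) : ℝ) := dlin_cast _ _
  rw [this]
  exact_mod_cast Iff.rfl

theorem pt_inj : Function.Injective pt := by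
  intro i j h
  by_contra hne
  have hw : vR j ∈ Submodule.span ℝ {vR i} := by
    rw [show Submodule.span ℝ {vR i} = pt i from rfl, h]
    exact Submodule.mem_span_singleton_self _
  obtain ⟨a, ha⟩ := Submodule.mem_span_singleton.mp hw
  have ha' : ∀ k, vR j k = a * vR i k := by
    intro k; rw [← ha]; rfl
  apply pts_distinct i j hne
  have e : ∀ k, ((Vz j k : ℤ) : ℝ) = a * ((Vz i k : ℤ) : ℝ) := ha'
  have c0 : Vz i 1 * Vz j 2 - Vz i 2 * Vz j 1 = 0 := by
    have h2 : ((Vz i 1 * Vz j 2 - Vz i 2 * Vz j 1 : ℤ) : ℝ) = 0 := by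
      push_cast; rw [e 1, e 2]; ring
    exact_mod_cast h2
  have c1 : Vz i 2 * Vz j 0 - Vz i 0 * Vz j 2 = 0 := by
    have h2 : ((Vz i 2 * Vz j 0 - Vz i 0 * Vz j 2 : ℤ) : ℝ) = 0 := by
      push_cast; rw [e 0, e 2]; ring
    exact_mod_cast h2
  have c2 : Vz i 0 * Vz j 1 - Vz i 1 * Vz j 0 = 0 := by
    have h2 : ((Vz i 0 * Vz j 1 - Vz i 1 * Vz j 0 : ℤ) : ℝ) = 0 := by
      push_cast; rw [e 0, e 1]; ring
    exact_mod_cast h2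
  funext k
  fin_cases k
  · exact c0
  · exact c1
  · exact c2

theorem ln_inj : Function.Injective ln := by
  intro i j h
  by_contra hne
  obtain ⟨h0, h1⟩ := lns_distinct i j hne
  set X := crossZ (Nz i) (crossZ (Nz i) (Nz j)) with hX
  have hmem : (fun k => ((X k : ℤ) : ℝ)) ∈ LinearMap.ker (dlin (nR i)) := by
    rw [LinearMap.mem_ker, show nR i = fun k => ((Nz i k : ℤ) : ℝ) from rfl, dlin_cast, h0]
    norm_num
  rw [show LinearMap.ker (dlin (nR i)) = ln i from rfl, h] at hmem
  rw [ln, LinearMap.mem_ker, show nR j = fun k => ((Nz j k : ℤ) : ℝ) from rfl,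
    dlin_cast] at hmem
  exact h1 (by exact_mod_cast hmem)

end Cfg37

open Cfg37 in
theorem stmt4 :
    ∃ P L : Finset (Submodule ℝ (Fin 3 → ℝ)),
      (∀ p ∈ P, IsProjPoint p) ∧ (∀ l ∈ L, IsProjLine l) ∧
      P.card = 37 ∧ L.card = 37 ∧
      (∀ p ∈ P, pointDeg L p = 4) ∧ (∀ l ∈ L, lineDeg P l = 4) := by
  refine ⟨Finset.univ.image pt, Finset.univ.image ln, ?_, ?_, ?_, ?_, ?_, ?_⟩
  · rintro p hp
    obtain ⟨i, -, rfl⟩ := Finset.mem_image.mp hp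
    exact finrank_span_singleton (vR_ne i)
  · rintro l hl
    obtain ⟨j, -, rfl⟩ := Finset.mem_image.mp hl
    obtain ⟨k, hk⟩ := n_ne j
    exact ker_dlin_finrank (nR j) k (show ((Nz j k : ℤ) : ℝ) ≠ 0 by exact_mod_cast hk)
  · rw [Finset.card_image_of_injective _ pt_inj, Finset.card_univ, Fintype.card_fin]
  · rw [Finset.card_image_of_injective _ ln_inj, Finset.card_univ, Fintype.card_fin]
  · rintro p hp
    obtain ⟨i, -, rfl⟩ := Finset.mem_image.mp hp
    rw [pointDeg, Finset.filter_image, Finset.card_image_of_injective _ ln_inj,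
      Finset.filter_congr (fun j _ => inc_iff i j)]
    exact deg_pt i
  · rintro l hl
    obtain ⟨j, -, rfl⟩ := Finset.mem_image.mp hl
    rw [lineDeg, Finset.filter_image, Finset.card_image_of_injective _ pt_inj,
      Finset.filter_congr (fun i _ => inc_iff i j)]
    exact deg_ln j
end

section
/- There exists a geometric (15_{3|4}) configuration with exactly 56 incidences, i.e., a set P of 15 points and a set L of 15 lines in the real projective plane such that every point of P has degree 3 or 4, every line of L has degree 3 or 4, and the number of incidences of (P, L) is 56. -/
/- Model of the real projective plane: a point is a 1-dimensional linear subspace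
of ℝ³ and a line is a 2-dimensional linear subspace of ℝ³; a point p is incident
to a line ℓ when p ≤ ℓ. -/

open scoped Classical

def W : Fin 15 → Fin 3 → ℤ := ![![0,0,1], ![0,1,1], ![0,2,1], ![1,0,1], ![1,1,1], ![1,2,1], ![2,0,1], ![2,1,1], ![2,2,1], ![3,0,1], ![3,1,1], ![3,2,1], ![0,1,0], ![1,1,0], ![1,-1,0]]
def A : Fin 15 → Fin 3 → ℤ := ![![1,0,0], ![1,0,-1], ![1,0,-2], ![1,0,-3], ![0,1,0], ![0,1,-1], ![0,1,-2], ![1,-1,0], ![1,-1,-1], ![1,-1,1], ![1,-1,-2], ![1,1,-2], ![1,1,-3], ![1,1,-1], ![1,1,-4]]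

def dotZ (u v : Fin 3 → ℤ) : ℤ := u 0 * v 0 + u 1 * v 1 + u 2 * v 2

noncomputable def vecR (w : Fin 3 → ℤ) : Fin 3 → ℝ := fun k => (w k : ℝ)

noncomputable def fL (a : Fin 3 → ℤ) : (Fin 3 → ℝ) →ₗ[ℝ] ℝ where
  toFun x := (a 0 : ℝ) * x 0 + (a 1 : ℝ) * x 1 + (a 2 : ℝ) * x 2
  map_add' x y := by simp; ring
  map_smul' c x := by simp; ring

lemma fL_vecR (a w : Fin 3 → ℤ) : fL a (vecR w) = ((dotZ a w : ℤ) : ℝ) := by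
  simp [fL, vecR, dotZ]

lemma dotZ_comm (u v : Fin 3 → ℤ) : dotZ u v = dotZ v u := by
  simp [dotZ]; ring

noncomputable def P' (i : Fin 15) : Submodule ℝ (Fin 3 → ℝ) :=
  Submodule.span ℝ {vecR (W i)}

noncomputable def L' (j : Fin 15) : Submodule ℝ (Fin 3 → ℝ) :=
  LinearMap.ker (fL (A j))

lemma vecR_ne_zero {w : Fin 3 → ℤ} (h : dotZ w w ≠ 0) : vecR w ≠ 0 := by
  intro h0
  apply h
  have := fL_vecR w w
  rw [h0, map_zero] at this
  exact_mod_cast this.symm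

lemma isProjPoint_P' (i : Fin 15) : IsProjPoint (P' i) := by
  have h : dotZ (W i) (W i) ≠ 0 := by revert i; decide
  exact finrank_span_singleton (vecR_ne_zero h)

lemma isProjLine_L' (j : Fin 15) : IsProjLine (L' j) := by
  have h : dotZ (A j) (A j) ≠ 0 := by revert j; decide
  have hne : ((dotZ (A j) (A j) : ℤ) : ℝ) ≠ 0 := Int.cast_ne_zero.mpr h
  have hsurj : Function.Surjective (fL (A j)) := by
    intro r
    refine ⟨(r / ((dotZ (A j) (A j) : ℤ) : ℝ)) • vecR (A j), ?_⟩
    rw [map_smul, fL_vecR, smul_eq_mul, div_mul_cancel₀ _ hne]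
  have hrange : LinearMap.range (fL (A j)) = ⊤ := LinearMap.range_eq_top.mpr hsurj
  have h1 := LinearMap.finrank_range_add_finrank_ker (fL (A j))
  rw [hrange] at h1
  simp only [finrank_top, Module.finrank_self] at h1
  have h3 : Module.finrank ℝ (Fin 3 → ℝ) = 3 := by simp
  rw [h3] at h1
  unfold IsProjLine L'
  omega

lemma indep_ne {u v : Fin 3 → ℤ} (h : dotZ u v ^ 2 ≠ dotZ u u * dotZ v v) :
    Submodule.span ℝ {vecR u} ≠ Submodule.span ℝ {vecR v} := by
  intro heq
  apply h
  have hv : vecR v ∈ Submodule.span ℝ {vecR u} :=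
    heq ▸ Submodule.mem_span_singleton_self (vecR v)
  obtain ⟨c, hc⟩ := Submodule.mem_span_singleton.mp hv
  have e0 := congrFun hc 0
  have e1 := congrFun hc 1
  have e2 := congrFun hc 2
  simp only [Pi.smul_apply, smul_eq_mul, vecR] at e0 e1 e2
  have : ((dotZ u v ^ 2 : ℤ) : ℝ) = ((dotZ u u * dotZ v v : ℤ) : ℝ) := by
    push_cast [dotZ]
    rw [← e0, ← e1, ← e2]
    ring
  exact_mod_cast this

lemma ker_ne {u v : Fin 3 → ℤ} (h : dotZ u v ^ 2 ≠ dotZ u u * dotZ v v) :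
    LinearMap.ker (fL u) ≠ LinearMap.ker (fL v) := by
  intro heq
  set x : Fin 3 → ℝ := ((dotZ u v : ℤ) : ℝ) • vecR u - ((dotZ u u : ℤ) : ℝ) • vecR v with hx
  have hxu : fL u x = 0 := by
    rw [hx, map_sub, map_smul, map_smul, fL_vecR, fL_vecR, smul_eq_mul, smul_eq_mul,
      dotZ_comm u v]
    ring
  have hxv : fL v x ≠ 0 := by
    rw [hx, map_sub, map_smul, map_smul, fL_vecR, fL_vecR, smul_eq_mul, smul_eq_mul]
    rw [dotZ_comm v u, dotZ_comm v v]
    intro h0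
    apply h
    have : ((dotZ u v ^ 2 : ℤ) : ℝ) = ((dotZ u u * dotZ v v : ℤ) : ℝ) := by
      push_cast
      linarith [h0]
    exact_mod_cast this
  apply hxv
  have : x ∈ LinearMap.ker (fL u) := LinearMap.mem_ker.mpr hxu
  rw [heq] at this
  exact LinearMap.mem_ker.mp this

lemma W_cs : ∀ i j : Fin 15, i ≠ j →
    dotZ (W i) (W j) ^ 2 ≠ dotZ (W i) (W i) * dotZ (W j) (W j) := by decide

lemma A_cs : ∀ i j : Fin 15, i ≠ j →
    dotZ (A i) (A j) ^ 2 ≠ dotZ (A i) (A i) * dotZ (A j) (A j) := by decide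

lemma P'_inj : Function.Injective P' := by
  intro i j hij
  by_contra hne
  exact indep_ne (W_cs i j hne) hij

lemma L'_inj : Function.Injective L' := by
  intro i j hij
  by_contra hne
  exact ker_ne (A_cs i j hne) hij

lemma le_iff (i j : Fin 15) : P' i ≤ L' j ↔ dotZ (A j) (W i) = 0 := by
  rw [P', L', Submodule.span_singleton_le_iff_mem, LinearMap.mem_ker, fL_vecR,
    Int.cast_eq_zero]
lemma deg34 : ∀ i : Fin 15,
    (Finset.univ.filter fun j : Fin 15 => dotZ (A j) (W i) = 0).card = 3 ∨
    (Finset.univ.filter fun j : Fin 15 => dotZ (A j) (W i) = 0).card = 4 := by decide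

lemma ldeg34 : ∀ j : Fin 15,
    (Finset.univ.filter fun i : Fin 15 => dotZ (A j) (W i) = 0).card = 3 ∨
    (Finset.univ.filter fun i : Fin 15 => dotZ (A j) (W i) = 0).card = 4 := by decide

lemma sum56 : (∑ i : Fin 15,
    (Finset.univ.filter fun j : Fin 15 => dotZ (A j) (W i) = 0).card) = 56 := by decide

lemma pointDeg_eq (i : Fin 15) :
    pointDeg (Finset.univ.image L') (P' i) =
      (Finset.univ.filter fun j : Fin 15 => dotZ (A j) (W i) = 0).card := by
  unfold pointDeg
  rw [Finset.filter_image, Finset.card_image_of_injective _ L'_inj]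
  congr 1
  exact Finset.filter_congr fun j _ => by
    simp only [le_iff]

lemma lineDeg_eq (j : Fin 15) :
    lineDeg (Finset.univ.image P') (L' j) =
      (Finset.univ.filter fun i : Fin 15 => dotZ (A j) (W i) = 0).card := by
  unfold lineDeg
  rw [Finset.filter_image, Finset.card_image_of_injective _ P'_inj]
  congr 1
  exact Finset.filter_congr fun i _ => by
    simp only [le_iff]

theorem stmt14 :
    ∃ P L : Finset (Submodule ℝ (Fin 3 → ℝ)),
      (∀ p ∈ P, IsProjPoint p) ∧ (∀ l ∈ L, IsProjLine l) ∧
      P.card = 15 ∧ L.card = 15 ∧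
      (∀ p ∈ P, pointDeg L p = 3 ∨ pointDeg L p = 4) ∧
      (∀ l ∈ L, lineDeg P l = 3 ∨ lineDeg P l = 4) ∧
      incCount P L = 56 := by
  refine ⟨Finset.univ.image P', Finset.univ.image L', ?_, ?_, ?_, ?_, ?_, ?_, ?_⟩
  · intro p hp
    obtain ⟨i, _, rfl⟩ := Finset.mem_image.mp hp
    exact isProjPoint_P' i
  · intro l hl
    obtain ⟨j, _, rfl⟩ := Finset.mem_image.mp hl
    exact isProjLine_L' j
  · rw [Finset.card_image_of_injective _ P'_inj]; simp
  · rw [Finset.card_image_of_injective _ L'_inj]; simp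
  · intro p hp
    obtain ⟨i, _, rfl⟩ := Finset.mem_image.mp hp
    rw [pointDeg_eq]
    exact deg34 i
  · intro l hl
    obtain ⟨j, _, rfl⟩ := Finset.mem_image.mp hl
    rw [lineDeg_eq]
    exact ldeg34 j
  · unfold incCount
    rw [Finset.card_filter, Finset.sum_product]
    have : ∀ p ∈ Finset.univ.image P',
        (∑ l ∈ Finset.univ.image L', if p ≤ l then 1 else 0) = pointDeg (Finset.univ.image L') p := by
      intro p _
      rw [pointDeg, Finset.card_filter]
    rw [Finset.sum_congr rfl this,
      Finset.sum_image (fun i _ j _ h => P'_inj h)]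
    have : ∀ i ∈ (Finset.univ : Finset (Fin 15)),
        pointDeg (Finset.univ.image L') (P' i) =
          (Finset.univ.filter fun j : Fin 15 => dotZ (A j) (W i) = 0).card :=
      fun i _ => pointDeg_eq i
    rw [Finset.sum_congr rfl this]
    exact sum56
end

section
/- There exists a pair (P, L) of a set P of 10 points and a set L of 10 lines in the real projective plane such that exactly 8 points of P have degree 3, exactly 2 points of P have degree 4, exactly 8 lines of L have degree 3, exactly 2 lines of L have degree 4, and every point of P and every line of L has degree 3 or 4; that is, there exists a geometric quasi-configuration with signature (8x³ + 2x⁴, 8y³ + 2y⁴). -/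
/- Model of the real projective plane: a point is a 1-dimensional linear subspace
of ℝ³ and a line is a 2-dimensional linear subspace of ℝ³; a point p is incident
to a line ℓ when p ≤ ℓ. -/

open scoped Classical

/-!
The configuration lives in the affine chart `z = 1` together with the line at infinity: the
points `(0,0), (0,1), (0,3), (1,0), (1,1), (3,0), (3,3)` and the points at infinity in the
directions `(1,0), (0,1), (1,-1)`; the lines are `x = 0` and `y = 0` (degree 4) and
`x = 1, x = 3, y = 1, y = 3, x + y = 1, x + y = 3, x = y` and the line at infinity (degree 3).

With integer homogeneous coordinates, incidence of a point and a line is the vanishing of an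
integer dot product, so every degree count is a finite computation over `ℤ`. The ten points are
distinct because their sets of incident lines are pairwise different, and dually for the lines.
-/

open Finset Function

lemma Finset.card_filter_image_of_injective {α β : Type*} [DecidableEq β] {f : α → β}
    (hf : Injective f) (s : Finset α) (p : β → Prop) [DecidablePred p] :
    #{b ∈ s.image f | p b} = #{a ∈ s | p (f a)} := by
  rw [filter_image, card_image_of_injective _ hf]

lemma intCast_comp_ne_zero {R n : Type*} [AddGroupWithOne R] [CharZero R] {v : n → ℤ}
    (hv : v ≠ 0) : (Int.cast ∘ v : n → R) ≠ 0 :=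
  fun h => hv <| funext fun k => by simpa using congrFun h k

section Hyperplane

variable {K n : Type*} [Fintype n] [DecidableEq n]

lemma span_singleton_le_ker_dotProductEquiv_iff [CommSemiring K] (a v : n → K) :
    K ∙ v ≤ LinearMap.ker (dotProductEquiv K n a) ↔ a ⬝ᵥ v = 0 := by
  simp [Submodule.span_singleton_le_iff_mem]

lemma finrank_ker_dotProductEquiv_add_one [Field K] {a : n → K} (ha : a ≠ 0) :
    Module.finrank K (LinearMap.ker (dotProductEquiv K n a)) + 1 = Fintype.card n := by
  rw [Module.Dual.finrank_ker_add_one_of_ne_zero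
    ((LinearEquiv.map_ne_zero_iff (dotProductEquiv K n)).2 ha), Module.finrank_fintype_fun_eq_card]

end Hyperplane

namespace QuasiConfiguration

def point : Fin 10 → Fin 3 → ℤ :=
  ![![0, 0, 1], ![0, 1, 1], ![0, 3, 1], ![1, 0, 1], ![1, 1, 1], ![3, 0, 1], ![3, 3, 1],
    ![1, 0, 0], ![0, 1, 0], ![1, -1, 0]]

def line : Fin 10 → Fin 3 → ℤ :=
  ![![0, 0, 1], ![1, 0, -3], ![1, 0, -1], ![0, 1, -3], ![1, 1, -3], ![0, 1, -1], ![1, 1, -1],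
    ![1, -1, 0], ![0, 1, 0], ![1, 0, 0]]

def Incident (i j : Fin 10) : Prop := line j ⬝ᵥ point i = 0

instance : DecidableRel Incident := fun _ _ => Int.decEq _ _

def pointDegree (i : Fin 10) : ℕ := #{j | Incident i j}

def lineDegree (j : Fin 10) : ℕ := #{i | Incident i j}

lemma point_ne_zero : ∀ i, point i ≠ 0 := by decide

lemma line_ne_zero : ∀ j, line j ≠ 0 := by decide

lemma eq_of_forall_incident_iff_left : ∀ i i', (∀ j, Incident i j ↔ Incident i' j) → i = i' := by
  decide

lemma eq_of_forall_incident_iff_right : ∀ j j', (∀ i, Incident i j ↔ Incident i j') → j = j' := by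
  decide

lemma pointDegree_eq_three_or_four : ∀ i, pointDegree i = 3 ∨ pointDegree i = 4 := by decide

lemma lineDegree_eq_three_or_four : ∀ j, lineDegree j = 3 ∨ lineDegree j = 4 := by decide

lemma card_pointDegree_eq_three : #{i | pointDegree i = 3} = 8 := by decide

lemma card_pointDegree_eq_four : #{i | pointDegree i = 4} = 2 := by decide

lemma card_lineDegree_eq_three : #{j | lineDegree j = 3} = 8 := by decide

lemma card_lineDegree_eq_four : #{j | lineDegree j = 4} = 2 := by decide

noncomputable def realPoint (i : Fin 10) : Submodule ℝ (Fin 3 → ℝ) :=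
  ℝ ∙ (Int.cast ∘ point i)

noncomputable def realLine (j : Fin 10) : Submodule ℝ (Fin 3 → ℝ) :=
  LinearMap.ker (dotProductEquiv ℝ (Fin 3) (Int.cast ∘ line j))

lemma realPoint_le_realLine_iff (i j : Fin 10) : realPoint i ≤ realLine j ↔ Incident i j := by
  rw [realPoint, realLine, span_singleton_le_ker_dotProductEquiv_iff, Incident,
    ← Int.cast_eq_zero (α := ℝ), ← eq_intCast (Int.castRingHom ℝ), RingHom.map_dotProduct]
  rfl

lemma isProjPoint_realPoint (i : Fin 10) : IsProjPoint (realPoint i) :=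
  finrank_span_singleton (intCast_comp_ne_zero (point_ne_zero i))

lemma isProjLine_realLine (j : Fin 10) : IsProjLine (realLine j) := by
  have := finrank_ker_dotProductEquiv_add_one (intCast_comp_ne_zero (R := ℝ) (line_ne_zero j))
  rw [Fintype.card_fin] at this
  exact Nat.add_right_cancel this

lemma realPoint_injective : Injective realPoint := fun i i' h =>
  eq_of_forall_incident_iff_left i i' fun j => by
    rw [← realPoint_le_realLine_iff, h, realPoint_le_realLine_iff]

lemma realLine_injective : Injective realLine := fun j j' h =>
  eq_of_forall_incident_iff_right j j' fun i => by
    rw [← realPoint_le_realLine_iff, h, realPoint_le_realLine_iff]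

lemma pointDeg_realPoint (i : Fin 10) :
    pointDeg (univ.image realLine) (realPoint i) = pointDegree i := by
  rw [pointDeg, card_filter_image_of_injective realLine_injective, pointDegree]
  simp only [realPoint_le_realLine_iff]

lemma lineDeg_realLine (j : Fin 10) :
    lineDeg (univ.image realPoint) (realLine j) = lineDegree j := by
  rw [lineDeg, card_filter_image_of_injective realPoint_injective, lineDegree]
  simp only [realPoint_le_realLine_iff]

end QuasiConfiguration

open QuasiConfiguration in
theorem stmt16 :
    ∃ P L : Finset (Submodule ℝ (Fin 3 → ℝ)),
      (∀ p ∈ P, IsProjPoint p) ∧ (∀ l ∈ L, IsProjLine l) ∧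
      P.card = 10 ∧ L.card = 10 ∧
      (P.filter fun p => pointDeg L p = 3).card = 8 ∧
      (P.filter fun p => pointDeg L p = 4).card = 2 ∧
      (∀ p ∈ P, pointDeg L p = 3 ∨ pointDeg L p = 4) ∧
      (L.filter fun l => lineDeg P l = 3).card = 8 ∧
      (L.filter fun l => lineDeg P l = 4).card = 2 ∧
      (∀ l ∈ L, lineDeg P l = 3 ∨ lineDeg P l = 4) := by
  refine ⟨univ.image realPoint, univ.image realLine, ?_, ?_, ?_, ?_, ?_, ?_, ?_, ?_, ?_, ?_⟩
  all_goals simp only [forall_mem_image, mem_univ, true_implies,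
    card_image_of_injective _ realPoint_injective, card_image_of_injective _ realLine_injective,
    card_filter_image_of_injective realPoint_injective,
    card_filter_image_of_injective realLine_injective, pointDeg_realPoint, lineDeg_realLine]
  exacts [isProjPoint_realPoint, isProjLine_realLine, card_fin 10, card_fin 10,
    card_pointDegree_eq_three, card_pointDegree_eq_four, pointDegree_eq_three_or_four,
    card_lineDegree_eq_three, card_lineDegree_eq_four, lineDegree_eq_three_or_four]
end

section
/- There is no pair (P, L) of a finite set P of 9 points and a finite set L of 9 lines in the real projective plane such that exactly 7 points of P have degree 3, exactly 2 points of P have degree 4, every point of P has degree 3 or 4, exactly 7 lines of L have degree 3, exactly 2 lines of L have degree 4, and every line of L has degree 3 or 4; that is, there is no geometric incidence structure with signature (7x³ + 2x⁴, 7y³ + 2y⁴). -/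
/- Model of the real projective plane: a point is a 1-dimensional linear subspace
of ℝ³ and a line is a 2-dimensional linear subspace of ℝ³; a point p is incident
to a line ℓ when p ≤ ℓ. -/

open scoped Classical

open Module Submodule

abbrev V3 := Fin 3 → ℝ

lemma pt_eq_of_le {x z : Submodule ℝ V3} (hx : finrank ℝ x = 1) (hz : finrank ℝ z = 1)
    (h : x ≤ z) : x = z :=
  Submodule.eq_of_le_of_finrank_le h (by rw [hx, hz])

lemma join_rank {x y : Submodule ℝ V3} (hx : finrank ℝ x = 1)
    (hne : x ≠ y) (hy : finrank ℝ y = 1) : 2 ≤ finrank ℝ ↥(x ⊔ y) := by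
  have hlt : x < x ⊔ y := by
    rcases lt_or_eq_of_le (le_sup_left : x ≤ x ⊔ y) with h | h
    · exact h
    · exact absurd (pt_eq_of_le hy hx (le_sup_right.trans h.ge)).symm hne
  have := Submodule.finrank_lt_finrank_of_lt hlt
  omega

lemma join_unique {x y l l' : Submodule ℝ V3} (hx : finrank ℝ x = 1) (hy : finrank ℝ y = 1)
    (hl : finrank ℝ l = 2) (hl' : finrank ℝ l' = 2) (hne : x ≠ y)
    (h1 : x ≤ l) (h2 : y ≤ l) (h3 : x ≤ l') (h4 : y ≤ l') : l = l' := by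
  have hsl : x ⊔ y ≤ l := sup_le h1 h2
  have hsl' : x ⊔ y ≤ l' := sup_le h3 h4
  have h2r := join_rank hx hne hy
  have e1 := Submodule.eq_of_le_of_finrank_le hsl (by rw [hl]; exact h2r)
  have e2 := Submodule.eq_of_le_of_finrank_le hsl' (by rw [hl']; exact h2r)
  rw [← e1, ← e2]

lemma line_eq_join {x y l : Submodule ℝ V3} (hx : finrank ℝ x = 1) (hy : finrank ℝ y = 1)
    (hl : finrank ℝ l = 2) (hne : x ≠ y) (h1 : x ≤ l) (h2 : y ≤ l) : l = x ⊔ y :=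
  (Submodule.eq_of_le_of_finrank_le (sup_le h1 h2) (by rw [hl]; exact join_rank hx hne hy)).symm

lemma point_span {z : Submodule ℝ V3} (hz : finrank ℝ z = 1) :
    ∃ Z : V3, Z ≠ 0 ∧ Z ∈ z ∧ z = Submodule.span ℝ {Z} := by
  have hzb : z ≠ ⊥ := by
    intro h; rw [h] at hz; simp [finrank_bot] at hz
  obtain ⟨Z, hZz, hZ0⟩ := Submodule.exists_mem_ne_zero_of_ne_bot hzb
  refine ⟨Z, hZ0, hZz, ?_⟩
  have h1 : Submodule.span ℝ {Z} ≤ z := Submodule.span_le.2 (by simpa using hZz)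
  exact (Submodule.eq_of_le_of_finrank_le h1 (by rw [hz, finrank_span_singleton hZ0])).symm

lemma third_point {α : Type*} [DecidableEq α] {F : Finset α} {p x : α} (h3 : F.card = 3)
    (hp : p ∈ F) (hx : x ∈ F) (hne : p ≠ x) :
    ∃ y, y ∈ F ∧ y ≠ p ∧ y ≠ x ∧ F = {p, x, y} := by
  have hx' : x ∈ F.erase p := Finset.mem_erase.2 ⟨Ne.symm hne, hx⟩
  have h2 : (F.erase p).card = 2 := by rw [Finset.card_erase_of_mem hp, h3]
  have h1 : ((F.erase p).erase x).card = 1 := by rw [Finset.card_erase_of_mem hx', h2]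
  obtain ⟨y, hy⟩ := Finset.card_eq_one.1 h1
  have hyy : y ∈ (F.erase p).erase x := by rw [hy]; exact Finset.mem_singleton_self y
  obtain ⟨hyx, hyep⟩ := Finset.mem_erase.1 hyy
  obtain ⟨hyp, hyF⟩ := Finset.mem_erase.1 hyep
  refine ⟨y, hyF, hyp, hyx, ?_⟩
  have hsub : ({p, x, y} : Finset α) ⊆ F := by
    intro z hz
    rcases Finset.mem_insert.1 hz with h | hz'
    · exact h ▸ hp
    rcases Finset.mem_insert.1 hz' with h | h
    · exact h ▸ hx
    · exact (Finset.mem_singleton.1 h) ▸ hyF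
  have hcard : ({p, x, y} : Finset α).card = 3 := by
    rw [Finset.card_insert_of_notMem (by simp [hne, Ne.symm hyp]),
      Finset.card_insert_of_notMem (by simp [Ne.symm hyx]), Finset.card_singleton]
  exact (Finset.eq_of_subset_of_card_le hsub (by rw [h3, hcard])).symm

lemma deg4_lemma {α β : Type*} [DecidableEq α] [DecidableEq β] (A : Finset α) (B : Finset β)
    (R : α → β → Prop) (hA : A.card = 9)
    (hBdeg : ∀ b ∈ B, (A.filter fun a => R a b).card = 3 ∨ (A.filter fun a => R a b).card = 4)
    (huniq : ∀ a a' b b', a ∈ A → a' ∈ A → b ∈ B → b' ∈ B → a ≠ a' → b ≠ b' →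
      R a b → R a' b → R a b' → R a' b' → False)
    {t : α} (ht : t ∈ A) (h4 : (B.filter fun b => R t b).card = 4) :
    (∀ b ∈ B, R t b → (A.filter fun a => R a b).card = 3) ∧
    (∀ a ∈ A, a ≠ t → ∃ b ∈ B, R t b ∧ R a b) := by
  set Bt := B.filter fun b => R t b with hBt
  set f : β → Finset α := fun b => (A.filter fun a => R a b).erase t with hf
  have hmemBt : ∀ b ∈ Bt, b ∈ B ∧ R t b := by
    intro b hb; exact ⟨(Finset.mem_filter.1 hb).1, (Finset.mem_filter.1 hb).2⟩
  have hdisj : ∀ b ∈ Bt, ∀ b' ∈ Bt, b ≠ b' → Disjoint (f b) (f b') := by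
    intro b hb b' hb' hne
    rw [Finset.disjoint_left]
    intro a ha ha'
    obtain ⟨hat, haf⟩ := Finset.mem_erase.1 ha
    obtain ⟨hat', haf'⟩ := Finset.mem_erase.1 ha'
    obtain ⟨haA, hab⟩ := Finset.mem_filter.1 haf
    obtain ⟨_, hab'⟩ := Finset.mem_filter.1 haf'
    exact huniq t a b b' ht haA (hmemBt b hb).1 (hmemBt b' hb').1 (Ne.symm hat) hne
      (hmemBt b hb).2 hab (hmemBt b' hb').2 hab'
  have hcard_bi : (Bt.biUnion f).card = ∑ b ∈ Bt, (f b).card := Finset.card_biUnion hdisj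
  have hsub : Bt.biUnion f ⊆ A.erase t := by
    intro a ha
    obtain ⟨b, hb, hab⟩ := Finset.mem_biUnion.1 ha
    obtain ⟨hat, haf⟩ := Finset.mem_erase.1 hab
    exact Finset.mem_erase.2 ⟨hat, (Finset.mem_filter.1 haf).1⟩
  have hA8 : (A.erase t).card = 8 := by rw [Finset.card_erase_of_mem ht, hA]
  have hle : ∑ b ∈ Bt, (f b).card ≤ 8 := by
    rw [← hcard_bi, ← hA8]; exact Finset.card_le_card hsub
  have hfcard : ∀ b ∈ Bt, (f b).card = (A.filter fun a => R a b).card - 1 := by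
    intro b hb
    exact Finset.card_erase_of_mem (Finset.mem_filter.2 ⟨ht, (hmemBt b hb).2⟩)
  have hfb2 : ∀ b ∈ Bt, 2 ≤ (f b).card := by
    intro b hb
    rw [hfcard b hb]
    rcases hBdeg b (hmemBt b hb).1 with h | h <;> omega
  have hall2 : ∀ b ∈ Bt, (f b).card = 2 := by
    by_contra hc
    push_neg at hc
    obtain ⟨b0, hb0, hb0ne⟩ := hc
    have h3 : 2 < (f b0).card := lt_of_le_of_ne (hfb2 b0 hb0) (Ne.symm hb0ne)
    have : ∑ b ∈ Bt, 2 < ∑ b ∈ Bt, (f b).card :=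
      Finset.sum_lt_sum (fun b hb => hfb2 b hb) ⟨b0, hb0, h3⟩
    rw [Finset.sum_const, h4, smul_eq_mul] at this
    omega
  have hdeg3 : ∀ b ∈ B, R t b → (A.filter fun a => R a b).card = 3 := by
    intro b hb hRb
    have hbBt : b ∈ Bt := Finset.mem_filter.2 ⟨hb, hRb⟩
    have := hall2 b hbBt
    rw [hfcard b hbBt] at this
    rcases hBdeg b hb with h | h <;> omega
  refine ⟨hdeg3, ?_⟩
  have hsum8 : ∑ b ∈ Bt, (f b).card = 8 := by
    rw [Finset.sum_congr rfl hall2, Finset.sum_const, h4, smul_eq_mul]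
  have heq : Bt.biUnion f = A.erase t := by
    apply Finset.eq_of_subset_of_card_le hsub
    rw [hA8, hcard_bi, hsum8]
  intro a haA hane
  have : a ∈ Bt.biUnion f := by
    rw [heq]; exact Finset.mem_erase.2 ⟨hane, haA⟩
  obtain ⟨b, hb, hab⟩ := Finset.mem_biUnion.1 this
  exact ⟨b, (hmemBt b hb).1, (hmemBt b hb).2, (Finset.mem_filter.1 (Finset.mem_erase.1 hab).2).2⟩

theorem stmt17 :
    ¬ ∃ P L : Finset (Submodule ℝ (Fin 3 → ℝ)),
      (∀ p ∈ P, IsProjPoint p) ∧ (∀ l ∈ L, IsProjLine l) ∧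
      P.card = 9 ∧ L.card = 9 ∧
      (P.filter fun p => pointDeg L p = 3).card = 7 ∧
      (P.filter fun p => pointDeg L p = 4).card = 2 ∧
      (∀ p ∈ P, pointDeg L p = 3 ∨ pointDeg L p = 4) ∧
      (L.filter fun l => lineDeg P l = 3).card = 7 ∧
      (L.filter fun l => lineDeg P l = 4).card = 2 ∧
      (∀ l ∈ L, lineDeg P l = 3 ∨ lineDeg P l = 4) := by
  rintro ⟨P, L, hPpt, hLln, hP9, hL9, hP3, hP4, hPdeg, hL3, hL4, hLdeg⟩
  have hrkP : ∀ x ∈ P, finrank ℝ x = 1 := hPpt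
  have hrkL : ∀ l ∈ L, finrank ℝ l = 2 := hLln
  -- uniqueness of joins
  have hU : ∀ a a' b b', a ∈ P → a' ∈ P → b ∈ L → b' ∈ L → a ≠ a' → b ≠ b' →
      a ≤ b → a' ≤ b → a ≤ b' → a' ≤ b' → False := by
    intro a a' b b' ha ha' hb hb' hne hbne h1 h2 h3 h4
    exact hbne (join_unique (hrkP a ha) (hrkP a' ha') (hrkL b hb) (hrkL b' hb') hne h1 h2 h3 h4)
  -- the two degree-4 points
  obtain ⟨p, q, hpq, hPQ⟩ := Finset.card_eq_two.1 hP4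
  have hpF : p ∈ P.filter fun z => pointDeg L z = 4 := by rw [hPQ]; simp
  have hqF : q ∈ P.filter fun z => pointDeg L z = 4 := by rw [hPQ]; simp
  obtain ⟨hpP, hpdeg⟩ := Finset.mem_filter.1 hpF
  obtain ⟨hqP, hqdeg⟩ := Finset.mem_filter.1 hqF
  -- the two degree-4 lines
  obtain ⟨m1, m2, hm12, hM⟩ := Finset.card_eq_two.1 hL4
  have hm1F : m1 ∈ L.filter fun l => lineDeg P l = 4 := by rw [hM]; simp
  have hm2F : m2 ∈ L.filter fun l => lineDeg P l = 4 := by rw [hM]; simp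
  obtain ⟨hm1L, hm1deg⟩ := Finset.mem_filter.1 hm1F
  obtain ⟨hm2L, hm2deg⟩ := Finset.mem_filter.1 hm2F
  -- degree-4 point lemma, for p and q
  have hpmain := deg4_lemma P L (fun a b => a ≤ b) hP9 hLdeg hU hpP hpdeg
  have hqmain := deg4_lemma P L (fun a b => a ≤ b) hP9 hLdeg hU hqP hqdeg
  obtain ⟨hpl3, hpjoin⟩ := hpmain
  obtain ⟨hql3, hqjoin⟩ := hqmain
  -- degree-4 line lemma, for m1 and m2
  have hU' : ∀ b b' a a', b ∈ L → b' ∈ L → a ∈ P → a' ∈ P → b ≠ b' → a ≠ a' →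
      a ≤ b → a ≤ b' → a' ≤ b → a' ≤ b' → False := by
    intro b b' a a' hb hb' ha ha' hbne hne h1 h2 h3 h4
    exact hU a a' b b' ha ha' hb hb' hne hbne h1 h3 h2 h4
  have hm1main := deg4_lemma L P (fun l z => z ≤ l) hL9 hPdeg
    (fun b b' a a' hb hb' ha ha' => hU' b b' a a' hb hb' ha ha') hm1L hm1deg
  have hm2main := deg4_lemma L P (fun l z => z ≤ l) hL9 hPdeg
    (fun b b' a a' hb hb' ha ha' => hU' b b' a a' hb hb' ha ha') hm2L hm2deg
  obtain ⟨hm1pt3, hm1meet⟩ := hm1main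
  obtain ⟨hm2pt3, hm2meet⟩ := hm2main
  -- non-incidences
  have hpm1 : ¬ p ≤ m1 := fun h => by have : pointDeg L p = 3 := hm1pt3 p hpP h; omega
  have hpm2 : ¬ p ≤ m2 := fun h => by have : pointDeg L p = 3 := hm2pt3 p hpP h; omega
  have hqm1 : ¬ q ≤ m1 := fun h => by have : pointDeg L q = 3 := hm1pt3 q hqP h; omega
  have hqm2 : ¬ q ≤ m2 := fun h => by have : pointDeg L q = 3 := hm2pt3 q hqP h; omega
  -- the line l0 through p and q, and its third point s
  obtain ⟨l0, hl0L, hpl0, hql0⟩ := hpjoin q hqP (Ne.symm hpq)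
  have hl0deg : lineDeg P l0 = 3 := hpl3 l0 hl0L hpl0
  have hpF0 : p ∈ P.filter fun z => z ≤ l0 := Finset.mem_filter.2 ⟨hpP, hpl0⟩
  have hqF0 : q ∈ P.filter fun z => z ≤ l0 := Finset.mem_filter.2 ⟨hqP, hql0⟩
  obtain ⟨s, hsF0, hsp, hsq, hF0⟩ := third_point hl0deg hpF0 hqF0 hpq
  obtain ⟨hsP, hsl0⟩ := Finset.mem_filter.1 hsF0
  -- s is on m1 and m2
  have hl0m1 : l0 ≠ m1 := fun h => hpm1 (h ▸ hpl0)
  have hl0m2 : l0 ≠ m2 := fun h => hpm2 (h ▸ hpl0)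
  have hsm1 : s ≤ m1 := by
    obtain ⟨z, hzP, hzm1, hzl0⟩ := hm1meet l0 hl0L hl0m1
    have : z ∈ P.filter fun w => w ≤ l0 := Finset.mem_filter.2 ⟨hzP, hzl0⟩
    rw [hF0] at this
    rcases Finset.mem_insert.1 this with h | h'
    · exact absurd (h ▸ hzm1) hpm1
    rcases Finset.mem_insert.1 h' with h | h
    · exact absurd (h ▸ hzm1) hqm1
    · exact (Finset.mem_singleton.1 h) ▸ hzm1
  have hsm2 : s ≤ m2 := by
    obtain ⟨z, hzP, hzm2, hzl0⟩ := hm2meet l0 hl0L hl0m2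
    have : z ∈ P.filter fun w => w ≤ l0 := Finset.mem_filter.2 ⟨hzP, hzl0⟩
    rw [hF0] at this
    rcases Finset.mem_insert.1 this with h | h'
    · exact absurd (h ▸ hzm2) hpm2
    rcases Finset.mem_insert.1 h' with h | h
    · exact absurd (h ▸ hzm2) hqm2
    · exact (Finset.mem_singleton.1 h) ▸ hzm2
  have hrks : finrank ℝ s = 1 := hrkP s hsP
  have hrkm1 : finrank ℝ m1 = 2 := hrkL m1 hm1L
  have hrkm2 : finrank ℝ m2 = 2 := hrkL m2 hm2L
  -- m1 ⊓ m2 = s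
  have hinf : m1 ⊓ m2 = s := by
    have h1 : s ≤ m1 ⊓ m2 := le_inf hsm1 hsm2
    have hlt : m1 ⊓ m2 < m1 := by
      rcases lt_or_eq_of_le (inf_le_left : m1 ⊓ m2 ≤ m1) with h | h
      · exact h
      · exfalso
        have hle : m1 ≤ m2 := h ▸ inf_le_right
        exact hm12 (Submodule.eq_of_le_of_finrank_le hle (by rw [hrkm1, hrkm2]))
    have h2 : finrank ℝ ↥(m1 ⊓ m2) < 2 := hrkm1 ▸ Submodule.finrank_lt_finrank_of_lt hlt
    exact (Submodule.eq_of_le_of_finrank_le h1 (by omega)).symm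
  -- the point sets Af (on m1, other than s) and Bf (on m2, other than s)
  set Af := (P.filter fun z => z ≤ m1).erase s with hAfdef
  set Bf := (P.filter fun z => z ≤ m2).erase s with hBfdef
  have hsF1 : s ∈ P.filter fun z => z ≤ m1 := Finset.mem_filter.2 ⟨hsP, hsm1⟩
  have hsF2 : s ∈ P.filter fun z => z ≤ m2 := Finset.mem_filter.2 ⟨hsP, hsm2⟩
  have hm1deg' : (P.filter fun z => z ≤ m1).card = 4 := hm1deg
  have hm2deg' : (P.filter fun z => z ≤ m2).card = 4 := hm2deg
  have hAcard : Af.card = 3 := by rw [hAfdef, Finset.card_erase_of_mem hsF1, hm1deg']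
  have hBcard : Bf.card = 3 := by rw [hBfdef, Finset.card_erase_of_mem hsF2, hm2deg']
  have hAmem : ∀ x ∈ Af, x ∈ P ∧ x ≤ m1 ∧ x ≠ s := by
    intro x hx
    obtain ⟨hxs, hxf⟩ := Finset.mem_erase.1 hx
    obtain ⟨hxP, hxm1⟩ := Finset.mem_filter.1 hxf
    exact ⟨hxP, hxm1, hxs⟩
  have hAnm2 : ∀ x ∈ Af, ¬ x ≤ m2 := by
    intro x hx h
    obtain ⟨hxP, hxm1, hxs⟩ := hAmem x hx
    exact hxs (pt_eq_of_le (hrkP x hxP) hrks (hinf ▸ le_inf hxm1 h))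
  -- lines joining p (resp. q) to points of Af, and their third points
  have hclaimP : ∀ x, ∃ y l, x ∈ Af → y ∈ P ∧ y ≤ m2 ∧ y ≠ s ∧ l ∈ L ∧ p ≤ l ∧ x ≤ l ∧
      y ≤ l ∧ y ≠ p ∧ y ≠ x ∧ ¬ q ≤ l := by
    intro x
    by_cases hx : x ∈ Af
    swap
    · exact ⟨⊥, ⊥, fun h => absurd h hx⟩
    obtain ⟨hxP, hxm1, hxs⟩ := hAmem x hx
    have hxp : x ≠ p := fun h => hpm1 (h ▸ hxm1)
    have hxq : x ≠ q := fun h => hqm1 (h ▸ hxm1)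
    obtain ⟨l, hlL, hpl, hxl⟩ := hpjoin x hxP hxp
    have hldeg : (P.filter fun z => z ≤ l).card = 3 := hpl3 l hlL hpl
    have hlm1 : l ≠ m1 := fun h => hpm1 (h ▸ hpl)
    have hlm2 : l ≠ m2 := fun h => hpm2 (h ▸ hpl)
    have hql : ¬ q ≤ l := by
      intro hql
      by_cases hll0 : l = l0
      · have hxF0 : x ∈ P.filter fun w => w ≤ l0 := Finset.mem_filter.2 ⟨hxP, hll0 ▸ hxl⟩
        rw [hF0] at hxF0
        rcases Finset.mem_insert.1 hxF0 with h | h'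
        · exact hxp h
        rcases Finset.mem_insert.1 h' with h | h
        · exact hxq h
        · exact hxs (Finset.mem_singleton.1 h)
      · exact hU p q l l0 hpP hqP hlL hl0L hpq hll0 hpl hql hpl0 hql0
    have hpFl : p ∈ P.filter fun z => z ≤ l := Finset.mem_filter.2 ⟨hpP, hpl⟩
    have hxFl : x ∈ P.filter fun z => z ≤ l := Finset.mem_filter.2 ⟨hxP, hxl⟩
    obtain ⟨y, hyFl, hyp', hyx, hFl⟩ := third_point hldeg hpFl hxFl (Ne.symm hxp)
    obtain ⟨hyP, hyl⟩ := Finset.mem_filter.1 hyFl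
    have hym2 : y ≤ m2 := by
      obtain ⟨z, hzP, hzm2, hzl⟩ := hm2meet l hlL hlm2
      have hzF : z ∈ P.filter fun w => w ≤ l := Finset.mem_filter.2 ⟨hzP, hzl⟩
      rw [hFl] at hzF
      rcases Finset.mem_insert.1 hzF with h | h'
      · exact absurd (h ▸ hzm2) hpm2
      rcases Finset.mem_insert.1 h' with h | h
      · exact absurd (h ▸ hzm2) (hAnm2 x hx)
      · exact (Finset.mem_singleton.1 h) ▸ hzm2
    have hys : y ≠ s := by
      intro h
      exact hU x y l m1 hxP hyP hlL hm1L (Ne.symm hyx) hlm1 hxl hyl hxm1 (h ▸ hsm1)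
    exact ⟨y, l, fun _ => ⟨hyP, hym2, hys, hlL, hpl, hxl, hyl, hyp', hyx, hql⟩⟩
  have hclaimQ : ∀ x, ∃ y l, x ∈ Af → y ∈ P ∧ y ≤ m2 ∧ y ≠ s ∧ l ∈ L ∧ q ≤ l ∧ x ≤ l ∧
      y ≤ l ∧ y ≠ q ∧ y ≠ x ∧ ¬ p ≤ l := by
    intro x
    by_cases hx : x ∈ Af
    swap
    · exact ⟨⊥, ⊥, fun h => absurd h hx⟩
    obtain ⟨hxP, hxm1, hxs⟩ := hAmem x hx
    have hxp : x ≠ p := fun h => hpm1 (h ▸ hxm1)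
    have hxq : x ≠ q := fun h => hqm1 (h ▸ hxm1)
    obtain ⟨l, hlL, hql', hxl⟩ := hqjoin x hxP hxq
    have hldeg : (P.filter fun z => z ≤ l).card = 3 := hql3 l hlL hql'
    have hlm1 : l ≠ m1 := fun h => hqm1 (h ▸ hql')
    have hlm2 : l ≠ m2 := fun h => hqm2 (h ▸ hql')
    have hpl : ¬ p ≤ l := by
      intro hpl
      by_cases hll0 : l = l0
      · have hxF0 : x ∈ P.filter fun w => w ≤ l0 := Finset.mem_filter.2 ⟨hxP, hll0 ▸ hxl⟩
        rw [hF0] at hxF0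
        rcases Finset.mem_insert.1 hxF0 with h | h'
        · exact hxp h
        rcases Finset.mem_insert.1 h' with h | h
        · exact hxq h
        · exact hxs (Finset.mem_singleton.1 h)
      · exact hU p q l l0 hpP hqP hlL hl0L hpq hll0 hpl hql' hpl0 hql0
    have hqFl : q ∈ P.filter fun z => z ≤ l := Finset.mem_filter.2 ⟨hqP, hql'⟩
    have hxFl : x ∈ P.filter fun z => z ≤ l := Finset.mem_filter.2 ⟨hxP, hxl⟩
    obtain ⟨y, hyFl, hyq', hyx, hFl⟩ := third_point hldeg hqFl hxFl (Ne.symm hxq)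
    obtain ⟨hyP, hyl⟩ := Finset.mem_filter.1 hyFl
    have hym2 : y ≤ m2 := by
      obtain ⟨z, hzP, hzm2, hzl⟩ := hm2meet l hlL hlm2
      have hzF : z ∈ P.filter fun w => w ≤ l := Finset.mem_filter.2 ⟨hzP, hzl⟩
      rw [hFl] at hzF
      rcases Finset.mem_insert.1 hzF with h | h'
      · exact absurd (h ▸ hzm2) hqm2
      rcases Finset.mem_insert.1 h' with h | h
      · exact absurd (h ▸ hzm2) (hAnm2 x hx)
      · exact (Finset.mem_singleton.1 h) ▸ hzm2
    have hys : y ≠ s := by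
      intro h
      exact hU x y l m1 hxP hyP hlL hm1L (Ne.symm hyx) hlm1 hxl hyl hxm1 (h ▸ hsm1)
    exact ⟨y, l, fun _ => ⟨hyP, hym2, hys, hlL, hql', hxl, hyl, hyq', hyx, hpl⟩⟩
  choose yp lp hyp using hclaimP
  choose yq lq hyq using hclaimQ
  have hypB : ∀ x ∈ Af, yp x ∈ Bf := by
    intro x hx
    obtain ⟨hyP, hym2, hys, _⟩ := hyp x hx
    exact Finset.mem_erase.2 ⟨hys, Finset.mem_filter.2 ⟨hyP, hym2⟩⟩
  have hyqB : ∀ x ∈ Af, yq x ∈ Bf := by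
    intro x hx
    obtain ⟨hyP, hym2, hys, _⟩ := hyq x hx
    exact Finset.mem_erase.2 ⟨hys, Finset.mem_filter.2 ⟨hyP, hym2⟩⟩
  have hypinj : ∀ x1 ∈ Af, ∀ x2 ∈ Af, yp x1 = yp x2 → x1 = x2 := by
    intro x1 hx1 x2 hx2 heq
    by_contra hne
    obtain ⟨hy1P, hy1m2, hy1s, hl1L, hpl1, hx1l1, hy1l1, hy1p, hy1x1, hql1⟩ := hyp x1 hx1
    obtain ⟨hy2P, hy2m2, hy2s, hl2L, hpl2, hx2l2, hy2l2, hy2p, hy2x2, hql2⟩ := hyp x2 hx2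
    by_cases hl : lp x1 = lp x2
    · exact hU x1 x2 (lp x1) m1 (hAmem x1 hx1).1 (hAmem x2 hx2).1 hl1L hm1L hne
        (fun h => hpm1 (h ▸ hpl1)) hx1l1 (by rw [hl]; exact hx2l2)
        (hAmem x1 hx1).2.1 (hAmem x2 hx2).2.1
    · exact hU p (yp x1) (lp x1) (lp x2) hpP hy1P hl1L hl2L (Ne.symm hy1p) hl hpl1 hy1l1
        hpl2 (by rw [heq]; exact hy2l2)
  have hyqinj : ∀ x1 ∈ Af, ∀ x2 ∈ Af, yq x1 = yq x2 → x1 = x2 := by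
    intro x1 hx1 x2 hx2 heq
    by_contra hne
    obtain ⟨hy1P, hy1m2, hy1s, hl1L, hql1, hx1l1, hy1l1, hy1q, hy1x1, hpl1⟩ := hyq x1 hx1
    obtain ⟨hy2P, hy2m2, hy2s, hl2L, hql2, hx2l2, hy2l2, hy2q, hy2x2, hpl2⟩ := hyq x2 hx2
    by_cases hl : lq x1 = lq x2
    · exact hU x1 x2 (lq x1) m1 (hAmem x1 hx1).1 (hAmem x2 hx2).1 hl1L hm1L hne
        (fun h => hqm1 (h ▸ hql1)) hx1l1 (by rw [hl]; exact hx2l2)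
        (hAmem x1 hx1).2.1 (hAmem x2 hx2).2.1
    · exact hU q (yq x1) (lq x1) (lq x2) hqP hy1P hl1L hl2L (Ne.symm hy1q) hl hql1 hy1l1
        hql2 (by rw [heq]; exact hy2l2)
  have hynep : ∀ x ∈ Af, yp x ≠ yq x := by
    intro x hx h
    obtain ⟨hy1P, hy1m2, hy1s, hl1L, hpl1, hx1l1, hy1l1, hy1p, hy1x1, hql1⟩ := hyp x hx
    obtain ⟨hy2P, hy2m2, hy2s, hl2L, hql2, hx2l2, hy2l2, hy2q, hy2x2, hpl2⟩ := hyq x hx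
    have hlpq : lp x ≠ lq x := fun hh => hpl2 (hh ▸ hpl1)
    exact hU x (yp x) (lp x) (lq x) (hAmem x hx).1 hy1P hl1L hl2L (Ne.symm hy1x1) hlpq
      hx1l1 hy1l1 hx2l2 (by rw [h]; exact hy2l2)
  have himgp : Af.image yp = Bf := by
    apply Finset.eq_of_subset_of_card_le
    · intro y hy
      obtain ⟨x, hx, rfl⟩ := Finset.mem_image.1 hy
      exact hypB x hx
    · rw [Finset.card_image_of_injOn
        (fun x hx y hy h => hypinj x (Finset.mem_coe.1 hx) y (Finset.mem_coe.1 hy) h),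
        hAcard, hBcard]
  have himgq : Af.image yq = Bf := by
    apply Finset.eq_of_subset_of_card_le
    · intro y hy
      obtain ⟨x, hx, rfl⟩ := Finset.mem_image.1 hy
      exact hyqB x hx
    · rw [Finset.card_image_of_injOn
        (fun x hx y hy h => hyqinj x (Finset.mem_coe.1 hx) y (Finset.mem_coe.1 hy) h),
        hAcard, hBcard]
  -- introduce coordinates
  obtain ⟨u, hu0, hus, hsspan⟩ := point_span hrks
  have hslt1 : s < m1 := lt_of_le_of_ne hsm1 (fun h => by rw [h, hrkm1] at hrks; omega)
  have hslt2 : s < m2 := lt_of_le_of_ne hsm2 (fun h => by rw [h, hrkm2] at hrks; omega)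
  obtain ⟨v0, hv0m1, hv0s⟩ := SetLike.exists_of_lt hslt1
  obtain ⟨w0, hw0m2, hw0s⟩ := SetLike.exists_of_lt hslt2
  have hw0m1 : w0 ∉ m1 := fun h => hw0s (hinf ▸ Submodule.mem_inf.2 ⟨h, hw0m2⟩)
  have hum1 : u ∈ m1 := hsm1 hus
  have hum2 : u ∈ m2 := hsm2 hus
  have hm1span : m1 = Submodule.span ℝ {u} ⊔ Submodule.span ℝ {v0} := by
    have hle : Submodule.span ℝ {u} ⊔ Submodule.span ℝ {v0} ≤ m1 :=
      sup_le (Submodule.span_le.2 (by simpa using hum1))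
        (Submodule.span_le.2 (by simpa using hv0m1))
    have hlt : Submodule.span ℝ {u} < Submodule.span ℝ {u} ⊔ Submodule.span ℝ {v0} := by
      refine lt_of_le_of_ne le_sup_left (fun h => hv0s ?_)
      rw [hsspan, h]
      exact Submodule.mem_sup_right (Submodule.mem_span_singleton_self v0)
    have h2 : 2 ≤ finrank ℝ ↥(Submodule.span ℝ {u} ⊔ Submodule.span ℝ {v0}) := by
      have := Submodule.finrank_lt_finrank_of_lt hlt
      rw [finrank_span_singleton hu0] at this
      omega
    exact (Submodule.eq_of_le_of_finrank_le hle (by rw [hrkm1]; exact h2)).symm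
  have hm2span : m2 = Submodule.span ℝ {u} ⊔ Submodule.span ℝ {w0} := by
    have hle : Submodule.span ℝ {u} ⊔ Submodule.span ℝ {w0} ≤ m2 :=
      sup_le (Submodule.span_le.2 (by simpa using hum2))
        (Submodule.span_le.2 (by simpa using hw0m2))
    have hlt : Submodule.span ℝ {u} < Submodule.span ℝ {u} ⊔ Submodule.span ℝ {w0} := by
      refine lt_of_le_of_ne le_sup_left (fun h => hw0s ?_)
      rw [hsspan, h]
      exact Submodule.mem_sup_right (Submodule.mem_span_singleton_self w0)
    have h2 : 2 ≤ finrank ℝ ↥(Submodule.span ℝ {u} ⊔ Submodule.span ℝ {w0}) := by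
      have := Submodule.finrank_lt_finrank_of_lt hlt
      rw [finrank_span_singleton hu0] at this
      omega
    exact (Submodule.eq_of_le_of_finrank_le hle (by rw [hrkm2]; exact h2)).symm
  have hVdim : finrank ℝ V3 = 3 := by simp
  have htop : Submodule.span ℝ {u} ⊔ Submodule.span ℝ {v0} ⊔ Submodule.span ℝ {w0} = ⊤ := by
    have hlt : m1 < m1 ⊔ Submodule.span ℝ {w0} := by
      refine lt_of_le_of_ne le_sup_left (fun h => hw0m1 ?_)
      rw [h]
      exact Submodule.mem_sup_right (Submodule.mem_span_singleton_self w0)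
    have h3 : 3 ≤ finrank ℝ ↥(m1 ⊔ Submodule.span ℝ {w0}) := by
      have := Submodule.finrank_lt_finrank_of_lt hlt
      omega
    have hfr : finrank ℝ ↥(m1 ⊔ Submodule.span ℝ {w0}) = 3 :=
      le_antisymm (le_trans (Submodule.finrank_le _) (le_of_eq hVdim)) h3
    have := Submodule.eq_top_of_finrank_eq (K := ℝ) (by rw [hfr, hVdim])
    rw [hm1span] at this
    exact this
  have hcoord : ∀ z : V3, ∃ α β γ : ℝ, z = α • u + β • v0 + γ • w0 := by
    intro z
    have hz : z ∈ Submodule.span ℝ {u} ⊔ Submodule.span ℝ {v0} ⊔ Submodule.span ℝ {w0} := by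
      rw [htop]; trivial
    obtain ⟨m, hm, cc, hcc, hmc⟩ := Submodule.mem_sup.1 hz
    obtain ⟨mu, hmu, mv, hmv, hmm⟩ := Submodule.mem_sup.1 hm
    obtain ⟨α, rfl⟩ := Submodule.mem_span_singleton.1 hmu
    obtain ⟨β, rfl⟩ := Submodule.mem_span_singleton.1 hmv
    obtain ⟨γ, rfl⟩ := Submodule.mem_span_singleton.1 hcc
    exact ⟨α, β, γ, by rw [← hmc, ← hmm]⟩
  have hind : ∀ α β γ : ℝ, α • u + β • v0 + γ • w0 = 0 → α = 0 ∧ β = 0 ∧ γ = 0 := by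
    intro α β γ heq
    have hγ : γ = 0 := by
      by_contra hγ
      apply hw0m1
      have h1 : γ • w0 = (α • u + β • v0 + γ • w0) - (α • u + β • v0) := by module
      rw [heq] at h1
      have h2 : γ • w0 ∈ m1 := by
        rw [h1]
        exact sub_mem (zero_mem _)
          (add_mem (Submodule.smul_mem _ _ hum1) (Submodule.smul_mem _ _ hv0m1))
      have h3 := Submodule.smul_mem m1 γ⁻¹ h2
      rwa [smul_smul, inv_mul_cancel₀ hγ, one_smul] at h3
    subst hγ
    rw [zero_smul, add_zero] at heq
    have hβ : β = 0 := by
      by_contra hβ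
      apply hv0s
      have h1 : β • v0 = (α • u + β • v0) - α • u := by module
      rw [heq] at h1
      have h2 : β • v0 ∈ s := by
        rw [h1]
        exact sub_mem (zero_mem _) (Submodule.smul_mem _ _ hus)
      have h3 := Submodule.smul_mem s β⁻¹ h2
      rwa [smul_smul, inv_mul_cancel₀ hβ, one_smul] at h3
    subst hβ
    rw [zero_smul, add_zero] at heq
    rcases smul_eq_zero.1 heq with h | h
    · exact ⟨h, rfl, rfl⟩
    · exact absurd h hu0
  -- scalar coordinates of the points of Af and Bf
  have hAt : ∀ x, ∃ tx : ℝ, x ∈ Af → x = Submodule.span ℝ {tx • u + v0} := by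
    intro x
    by_cases hx : x ∈ Af
    swap
    · exact ⟨0, fun h => absurd h hx⟩
    obtain ⟨hxP, hxm1, hxs⟩ := hAmem x hx
    obtain ⟨Z, hZ0, hZx, hZspan⟩ := point_span (hrkP x hxP)
    have hZm1 : Z ∈ Submodule.span ℝ {u} ⊔ Submodule.span ℝ {v0} := hm1span ▸ hxm1 hZx
    obtain ⟨za, hza, zb, hzb, hZeq⟩ := Submodule.mem_sup.1 hZm1
    obtain ⟨α, rfl⟩ := Submodule.mem_span_singleton.1 hza
    obtain ⟨β, rfl⟩ := Submodule.mem_span_singleton.1 hzb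
    have hβ : β ≠ 0 := by
      intro h
      subst h
      rw [zero_smul, add_zero] at hZeq
      apply hxs
      apply pt_eq_of_le (hrkP x hxP) hrks
      rw [hZspan, hsspan]
      rw [Submodule.span_le, Set.singleton_subset_iff]
      exact hZeq ▸ Submodule.smul_mem _ α (Submodule.mem_span_singleton_self u)
    refine ⟨β⁻¹ * α, fun _ => ?_⟩
    rw [hZspan]
    have hsm : β⁻¹ • Z = (β⁻¹ * α) • u + v0 := by
      rw [← hZeq, smul_add, smul_smul, smul_smul, inv_mul_cancel₀ hβ, one_smul]
    rw [← hsm]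
    exact (Submodule.span_singleton_smul_eq
      (isUnit_iff_ne_zero.2 (inv_ne_zero hβ)) Z).symm
  have hBr : ∀ y, ∃ ry : ℝ, y ∈ Bf → y = Submodule.span ℝ {ry • u + w0} := by
    intro y
    by_cases hy : y ∈ Bf
    swap
    · exact ⟨0, fun h => absurd h hy⟩
    obtain ⟨hys, hyf⟩ := Finset.mem_erase.1 hy
    obtain ⟨hyP, hym2⟩ := Finset.mem_filter.1 hyf
    obtain ⟨Z, hZ0, hZy, hZspan⟩ := point_span (hrkP y hyP)
    have hZm2 : Z ∈ Submodule.span ℝ {u} ⊔ Submodule.span ℝ {w0} := hm2span ▸ hym2 hZy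
    obtain ⟨za, hza, zb, hzb, hZeq⟩ := Submodule.mem_sup.1 hZm2
    obtain ⟨α, rfl⟩ := Submodule.mem_span_singleton.1 hza
    obtain ⟨β, rfl⟩ := Submodule.mem_span_singleton.1 hzb
    have hβ : β ≠ 0 := by
      intro h
      subst h
      rw [zero_smul, add_zero] at hZeq
      apply hys
      apply pt_eq_of_le (hrkP y hyP) hrks
      rw [hZspan, hsspan]
      rw [Submodule.span_le, Set.singleton_subset_iff]
      exact hZeq ▸ Submodule.smul_mem _ α (Submodule.mem_span_singleton_self u)
    refine ⟨β⁻¹ * α, fun _ => ?_⟩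
    rw [hZspan]
    have hsm : β⁻¹ • Z = (β⁻¹ * α) • u + w0 := by
      rw [← hZeq, smul_add, smul_smul, smul_smul, inv_mul_cancel₀ hβ, one_smul]
    rw [← hsm]
    exact (Submodule.span_singleton_smul_eq
      (isUnit_iff_ne_zero.2 (inv_ne_zero hβ)) Z).symm
  choose tA htA using hAt
  choose rB hrB using hBr
  have hrinj : ∀ y1 ∈ Bf, ∀ y2 ∈ Bf, rB y1 = rB y2 → y1 = y2 := by
    intro y1 h1 y2 h2 h
    rw [hrB y1 h1, hrB y2 h2, h]
  -- vectors and coordinates for p and q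
  obtain ⟨Xp, hXp0, hXpp, hXpspan⟩ := point_span (hrkP p hpP)
  obtain ⟨Xq, hXq0, hXqq, hXqspan⟩ := point_span (hrkP q hqP)
  obtain ⟨a, b, c, hXpco⟩ := hcoord Xp
  obtain ⟨a', b', c', hXqco⟩ := hcoord Xq
  have hbne' : b' ≠ 0 := by
    intro h
    apply hqm2
    rw [hXqspan, Submodule.span_le, Set.singleton_subset_iff]
    have : Xq ∈ m2 := by
      rw [hXqco, h, zero_smul, add_zero]
      exact add_mem (Submodule.smul_mem _ _ hum2) (Submodule.smul_mem _ _ hw0m2)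
    exact this
  have hcne : c ≠ 0 := by
    intro h
    apply hpm1
    rw [hXpspan, Submodule.span_le, Set.singleton_subset_iff]
    have : Xp ∈ m1 := by
      rw [hXpco, h, zero_smul, add_zero]
      exact add_mem (Submodule.smul_mem _ _ hum1) (Submodule.smul_mem _ _ hv0m1)
    exact this
  -- l0 = s ⊔ p and resulting relation between coordinates of p and q
  have hl0span : l0 = s ⊔ p := line_eq_join hrks (hrkP p hpP) (hrkL l0 hl0L) hsp hsl0 hpl0
  have hXqin : Xq ∈ Submodule.span ℝ {u} ⊔ Submodule.span ℝ {Xp} := by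
    have h1 : Xq ∈ l0 := hql0 hXqq
    rw [hl0span, hsspan, hXpspan] at h1
    exact h1
  obtain ⟨z1, hz1, z2, hz2, hzeq⟩ := Submodule.mem_sup.1 hXqin
  obtain ⟨d, rfl⟩ := Submodule.mem_span_singleton.1 hz1
  obtain ⟨e, rfl⟩ := Submodule.mem_span_singleton.1 hz2
  have hq1 : a' - (d + e * a) = 0 ∧ b' - e * b = 0 ∧ c' - e * c = 0 := by
    apply hind
    have h0 : (a' - (d + e * a)) • u + (b' - e * b) • v0 + (c' - e * c) • w0 =
        (a' • u + b' • v0 + c' • w0) - (d • u + e • (a • u + b • v0 + c • w0)) := by module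
    rw [← hXpco, ← hXqco, hzeq, sub_self] at h0
    exact h0
  obtain ⟨hqa, hqb, hqc⟩ := hq1
  have hene : e ≠ 0 := by
    intro h
    exact hbne' (by linear_combination hqb + b * h)
  -- the incidence equations
  have heqP : ∀ x ∈ Af, a = b * tA x + c * rB (yp x) := by
    intro x hx
    obtain ⟨hyP, hym2, hys, hlL, hpl, hxl, hyl, hyp', hyx, hql⟩ := hyp x hx
    have hyB : yp x ∈ Bf := hypB x hx
    have hxspan := htA x hx
    have hyspan := hrB (yp x) hyB
    have hlspan : lp x = x ⊔ yp x := line_eq_join (hrkP x (hAmem x hx).1) (hrkP _ hyP)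
      (hrkL _ hlL) (Ne.symm hyx) hxl hyl
    have hXpin : Xp ∈ Submodule.span ℝ {tA x • u + v0} ⊔
        Submodule.span ℝ {rB (yp x) • u + w0} := by
      have h2 : Xp ∈ x ⊔ yp x := by rw [← hlspan]; exact hpl hXpp
      rw [← hyspan, ← hxspan]
      exact h2
    obtain ⟨w1, hw1, w2, hw2, hzeq2⟩ := Submodule.mem_sup.1 hXpin
    obtain ⟨lam, rfl⟩ := Submodule.mem_span_singleton.1 hw1
    obtain ⟨mu, rfl⟩ := Submodule.mem_span_singleton.1 hw2
    have h0 : (a - (lam * tA x + mu * rB (yp x))) • u + (b - lam) • v0 + (c - mu) • w0 =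
        (a • u + b • v0 + c • w0) - (lam • (tA x • u + v0) + mu • (rB (yp x) • u + w0)) := by
      module
    rw [← hXpco, hzeq2, sub_self] at h0
    obtain ⟨h1, h2, h3⟩ := hind _ _ _ h0
    linear_combination h1 - tA x * h2 - rB (yp x) * h3
  have heqQ : ∀ x ∈ Af, a' = b' * tA x + c' * rB (yq x) := by
    intro x hx
    obtain ⟨hyP, hym2, hys, hlL, hql', hxl, hyl, hyq', hyx, hpl⟩ := hyq x hx
    have hyB : yq x ∈ Bf := hyqB x hx
    have hxspan := htA x hx
    have hyspan := hrB (yq x) hyB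
    have hlspan : lq x = x ⊔ yq x := line_eq_join (hrkP x (hAmem x hx).1) (hrkP _ hyP)
      (hrkL _ hlL) (Ne.symm hyx) hxl hyl
    have hXqin' : Xq ∈ Submodule.span ℝ {tA x • u + v0} ⊔
        Submodule.span ℝ {rB (yq x) • u + w0} := by
      have h2 : Xq ∈ x ⊔ yq x := by rw [← hlspan]; exact hql' hXqq
      rw [← hyspan, ← hxspan]
      exact h2
    obtain ⟨w1, hw1, w2, hw2, hzeq2⟩ := Submodule.mem_sup.1 hXqin'
    obtain ⟨lam, rfl⟩ := Submodule.mem_span_singleton.1 hw1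
    obtain ⟨mu, rfl⟩ := Submodule.mem_span_singleton.1 hw2
    have h0 : (a' - (lam * tA x + mu * rB (yq x))) • u + (b' - lam) • v0 + (c' - mu) • w0 =
        (a' • u + b' • v0 + c' • w0) - (lam • (tA x • u + v0) + mu • (rB (yq x) • u + w0)) := by
      module
    rw [← hXqco, hzeq2, sub_self] at h0
    obtain ⟨h1, h2, h3⟩ := hind _ _ _ h0
    linear_combination h1 - tA x * h2 - rB (yq x) * h3
  -- per-point relation and summation
  have hrel : ∀ x ∈ Af, e * c * (rB (yq x) - rB (yp x)) = d := by
    intro x hx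
    have h1 := heqP x hx
    have h2 := heqQ x hx
    linear_combination (-1) * h2 + e * h1 + hqa - tA x * hqb - rB (yq x) * hqc
  have hsums : ∑ x ∈ Af, rB (yp x) = ∑ x ∈ Af, rB (yq x) := by
    have h1 : ∑ x ∈ Af, rB (yp x) = ∑ y ∈ Bf, rB y := by
      rw [← himgp, Finset.sum_image
        (fun x hx y hy h => hypinj x hx y hy h)]
    have h2 : ∑ x ∈ Af, rB (yq x) = ∑ y ∈ Bf, rB y := by
      rw [← himgq, Finset.sum_image
        (fun x hx y hy h => hyqinj x hx y hy h)]
    rw [h1, h2]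
  have hd0 : d = 0 := by
    have hsum : ∑ x ∈ Af, (e * c * (rB (yq x) - rB (yp x))) = ∑ _x ∈ Af, d :=
      Finset.sum_congr rfl hrel
    rw [Finset.sum_const, hAcard, ← Finset.mul_sum, Finset.sum_sub_distrib,
      ← hsums, sub_self, mul_zero] at hsum
    have h3 : (3 : ℕ) • d = 3 * d := by
      rw [nsmul_eq_mul]
      norm_num
    rw [h3] at hsum
    linear_combination (-1/3 : ℝ) * hsum
  have hAne : Af.Nonempty := by
    rw [← Finset.card_pos, hAcard]
    norm_num
  obtain ⟨x0, hx0⟩ := hAne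
  have hr0 := hrel x0 hx0
  rw [hd0] at hr0
  have hre : rB (yq x0) = rB (yp x0) := by
    rcases mul_eq_zero.1 hr0 with h | h
    · exact absurd h (mul_ne_zero hene hcne)
    · linear_combination h
  exact hynep x0 hx0 (hrinj (yq x0) (hyqB x0 hx0) (yp x0) (hypB x0 hx0) hre).symm
end
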